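/- arXiv:2402.08480 — 11 statements merged into one kernel-verified Lean document; each statement's English description precedes it below -/
import Mathlib

section
/- (Kantorovich–Rubinstein duality for asymmetric distances) Let V be a finite set equipped with a possibly asymmetric distance function d : V × V → ℝ≥0 that is definite (d(x,x)=0, d(x,y)>0 for x≠y) and satisfies the triangle inequality. For any two probability measures μ and ν on V, inf over couplings π ∈ Π(μ,ν) of Σ_{x,y ∈ V} d(x,y) π(x,y) equals sup over functions f : V → ℝ that are 1-Lipschitz w.r.t. d of Σ_{x ∈ V} f(x)(ν(x) − μ(x)). -/
/-!
Weak duality is the identity `∑ x, f x * (ν x - μ x) = ∑ x, ∑ y, (f y - f x) * π x y` for a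
coupling `π` of `μ` and `ν`. For the converse, suppose first that `ν` has full support. The
optimal cost `W(μ, ·)` is convex and bounded on probability measures, and `ν` is an interior
point of the simplex inside its affine hull, so Hahn–Banach separation from the epigraph yields a
subgradient `f` of `W(μ, ·)` at `ν`. Gluing couplings gives the triangle inequality for `W`, hence
`∑ x, f x * (ν' x - ν x) ≤ W(ν, ν')` for every `ν'`: moving the mass of `ν` at `x` to `y` shows
that `f` is 1-Lipschitz, and `ν' = μ` gives `W(μ, ν) ≤ ∑ x, f x * (ν x - μ x)`. A general `ν` is
the limit of `(1 - ε) ν + ε ρ` with `ρ` of full support, which moves `W` by `O(ε)` by convexity.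
-/

open Finset

/-- A probability measure on a finite set `V`. -/
def IsProbMeasure {V : Type*} [Fintype V] (μ : V → ℝ) : Prop :=
  (∀ x, 0 ≤ μ x ∧ μ x ≤ 1) ∧ ∑ x, μ x = 1

/-- A coupling of two probability measures `μ` and `ν` on a finite set `V`. -/
def IsCoupling {V : Type*} [Fintype V] (μ ν : V → ℝ) (π : V → V → ℝ) : Prop :=
  (∀ x y, 0 ≤ π x y ∧ π x y ≤ 1) ∧
    (∀ x, ∑ y, π x y = μ x) ∧ (∀ y, ∑ x, π x y = ν y)

open Set Filter Topology

theorem ConvexOn.exists_subgradient_of_le {E : Type*} [NormedAddCommGroup E] [NormedSpace ℝ E]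
    {U s : Set E} {H : E → ℝ} {x₀ : E} {M : ℝ} (hH : ConvexOn ℝ U H) (hs : IsOpen s)
    (hsU : s ⊆ U) (hx₀ : x₀ ∈ s) (hM : ∀ x ∈ s, H x ≤ M) :
    ∃ g : StrongDual ℝ E, ∀ x ∈ U, H x₀ + g (x - x₀) ≤ H x := by
  set A : Set (E × ℝ) := {p | p.1 ∈ U ∧ H p.1 ≤ p.2}
  have hA_int : (interior A).Nonempty := by
    refine ⟨(x₀, M + 1), interior_mono (s := s ×ˢ Ioi M) ?_ ?_⟩
    · exact fun p ⟨hp, ht⟩ => ⟨hsU hp, (hM _ hp).trans (le_of_lt ht)⟩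
    · rw [(hs.prod isOpen_Ioi).interior_eq]
      exact ⟨hx₀, lt_add_one M⟩
  have hA_bdry : (x₀, H x₀) ∉ interior A := by
    intro h
    have hnhds : {t | (x₀, t) ∈ A} ∈ 𝓝 (H x₀) :=
      (continuous_const.prodMk continuous_id).continuousAt.preimage_mem_nhds
        (mem_interior_iff_mem_nhds.1 h)
    obtain ⟨l, hl, hIoc⟩ := exists_Ioc_subset_of_mem_nhds hnhds ⟨H x₀ - 1, by linarith⟩
    have := (hIoc ⟨by linarith, by linarith⟩ : (l + H x₀) / 2 ∈ _).2
    linarith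
  obtain ⟨φ, hφ_ne, hφ⟩ :=
    geometric_hahn_banach_of_nonempty_interior_point hH.convex_epigraph hA_bdry hA_int
  set ψ : StrongDual ℝ E := φ.comp (ContinuousLinearMap.inl ℝ E ℝ)
  set c := φ (0, 1)
  have hφ_apply : ∀ x t, φ (x, t) = ψ x + t * c := by
    intro x t
    rw [show ((x, t) : E × ℝ) = (x, 0) + t • (0, 1) by simp, map_add, map_smul, smul_eq_mul]
    rfl
  have hc : c < 0 := by
    have h := hφ (x₀, H x₀ + 1) ⟨hsU hx₀, by linarith⟩
    rw [hφ_apply, hφ_apply] at h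
    refine lt_of_le_of_ne (by linarith) fun hc0 => hφ_ne ?_
    -- a vertical supporting hyperplane would make `x₀` a local maximum of `ψ`
    have hψ : ψ = 0 := by
      refine IsLocalMax.hasFDerivAt_eq_zero (a := x₀) ?_ ψ.hasFDerivAt
      filter_upwards [hs.mem_nhds hx₀] with x hx
      have := hφ (x, H x) ⟨hsU hx, le_rfl⟩
      simpa [hφ_apply, hc0] using this
    refine ContinuousLinearMap.ext fun ⟨x, t⟩ => ?_
    simp [hφ_apply, hψ, hc0]
  refine ⟨(-c)⁻¹ • ψ, fun x hx => ?_⟩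
  have h := hφ (x, H x) ⟨hx, le_rfl⟩
  rw [hφ_apply, hφ_apply] at h
  have : (-c)⁻¹ * ψ (x - x₀) ≤ H x - H x₀ := by
    rw [inv_mul_le_iff₀ (by linarith), map_sub]
    linarith
  simpa using this

section

variable {V : Type*} [Fintype V]

namespace IsProbMeasure

variable {μ : V → ℝ}

theorem of_nonneg (h₀ : ∀ x, 0 ≤ μ x) (h₁ : ∑ x, μ x = 1) : IsProbMeasure μ :=
  ⟨fun x => ⟨h₀ x, h₁ ▸ single_le_sum (fun y _ => h₀ y) (mem_univ x)⟩, h₁⟩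

theorem nonneg (hμ : IsProbMeasure μ) (x : V) : 0 ≤ μ x := (hμ.1 x).1

theorem exists_pos (hμ : IsProbMeasure μ) : ∃ ρ : V → ℝ, IsProbMeasure ρ ∧ ∀ x, 0 < ρ x := by
  have hV : (0 : ℝ) < Fintype.card V := by
    have : Nonempty V := by
      by_contra h
      simpa [not_nonempty_iff.1 h] using hμ.2
    exact_mod_cast Fintype.card_pos
  refine ⟨fun _ => (Fintype.card V : ℝ)⁻¹, of_nonneg (fun _ => by positivity) ?_,
    fun _ => by positivity⟩
  simp [hV.ne']

end IsProbMeasure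

theorem convex_setOf_isProbMeasure : Convex ℝ {μ : V → ℝ | IsProbMeasure μ} := by
  intro μ hμ ν hν a b ha hb hab
  refine .of_nonneg (fun x => ?_) ?_
  · simpa using add_nonneg (mul_nonneg ha (hμ.nonneg x)) (mul_nonneg hb (hν.nonneg x))
  · simp [sum_add_distrib, ← mul_sum, hμ.2, hν.2, hab]

namespace IsCoupling

variable {μ ν ρ : V → ℝ} {π π₁ π₂ : V → V → ℝ}

theorem nonneg (hπ : IsCoupling μ ν π) (x y : V) : 0 ≤ π x y := (hπ.1 x y).1

theorem of_nonneg (hμ : IsProbMeasure μ) (h₀ : ∀ x y, 0 ≤ π x y)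
    (hrow : ∀ x, ∑ y, π x y = μ x) (hcol : ∀ y, ∑ x, π x y = ν y) : IsCoupling μ ν π :=
  ⟨fun x y => ⟨h₀ x y, ((single_le_sum (fun z _ => h₀ x z) (mem_univ y)).trans
    (hrow x).le).trans (hμ.1 x).2⟩, hrow, hcol⟩

theorem isProbMeasure_right (hπ : IsCoupling μ ν π) (hμ : IsProbMeasure μ) :
    IsProbMeasure ν := by
  refine .of_nonneg (fun y => hπ.2.2 y ▸ sum_nonneg fun x _ => hπ.nonneg x y) ?_
  simp_rw [← hμ.2, ← hπ.2.2, ← hπ.2.1]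
  exact sum_comm

theorem prod (hμ : IsProbMeasure μ) (hν : IsProbMeasure ν) :
    IsCoupling μ ν (fun x y => μ x * ν y) :=
  .of_nonneg hμ (fun x y => mul_nonneg (hμ.nonneg x) (hν.nonneg y))
    (fun x => by rw [← mul_sum, hν.2, mul_one]) (fun y => by rw [← sum_mul, hμ.2, one_mul])

theorem eq_zero_of_left_eq_zero (hπ : IsCoupling μ ν π) {x : V} (hx : μ x = 0) (y : V) :
    π x y = 0 :=
  (sum_eq_zero_iff_of_nonneg fun z _ => hπ.nonneg x z).1 ((hπ.2.1 x).trans hx) y (mem_univ y)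

theorem eq_zero_of_right_eq_zero (hπ : IsCoupling μ ν π) {y : V} (hy : ν y = 0) (x : V) :
    π x y = 0 :=
  (sum_eq_zero_iff_of_nonneg fun z _ => hπ.nonneg z y).1 ((hπ.2.2 y).trans hy) x (mem_univ x)

theorem mul_div_right (hπ : IsCoupling μ ν π) (x y : V) : π x y * ν y / ν y = π x y := by
  by_cases hy : ν y = 0
  · simp [hπ.eq_zero_of_right_eq_zero hy x]
  · exact mul_div_cancel_right₀ _ hy

theorem mul_div_left (hπ : IsCoupling μ ν π) (x y : V) : μ x * π x y / μ x = π x y := by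
  by_cases hx : μ x = 0
  · simp [hπ.eq_zero_of_left_eq_zero hx y]
  · rw [mul_comm, mul_div_cancel_right₀ _ hx]

theorem glue (h₁ : IsCoupling μ ν π₁) (h₂ : IsCoupling ν ρ π₂) (hμ : IsProbMeasure μ) :
    IsCoupling μ ρ (fun x z => ∑ y, π₁ x y * π₂ y z / ν y) := by
  refine .of_nonneg hμ (fun x z => sum_nonneg fun y _ => ?_) (fun x => ?_) (fun z => ?_)
  · exact div_nonneg (mul_nonneg (h₁.nonneg x y) (h₂.nonneg y z))
      ((h₁.isProbMeasure_right hμ).nonneg y)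
  · rw [sum_comm, ← h₁.2.1 x]
    refine sum_congr rfl fun y _ => ?_
    rw [← sum_div, ← mul_sum, h₂.2.1 y, h₁.mul_div_right]
  · rw [sum_comm, ← h₂.2.2 z]
    refine sum_congr rfl fun y _ => ?_
    rw [← sum_div, ← sum_mul, h₁.2.2 y, h₂.mul_div_left]

end IsCoupling

namespace OptimalTransport

variable (d : V → V → ℝ) {μ ν ρ α β : V → ℝ} {π π₁ π₂ : V → V → ℝ}

def couplingCost (π : V → V → ℝ) : ℝ := ∑ x, ∑ y, d x y * π x y

noncomputable def transportCost (μ ν : V → ℝ) : ℝ :=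
  sInf (couplingCost d '' {π | IsCoupling μ ν π})

theorem continuous_couplingCost : Continuous (couplingCost d) := by
  unfold couplingCost
  fun_prop

theorem isCompact_setOf_isCoupling (μ ν : V → ℝ) :
    IsCompact {π : V → V → ℝ | IsCoupling μ ν π} := by
  refine (isCompact_univ_pi fun _ => isCompact_univ_pi fun _ => isCompact_Icc).of_isClosed_subset
    ?_ fun π hπ => mem_univ_pi.2 fun x => mem_univ_pi.2 fun y => hπ.1 x y
  simp only [IsCoupling, ofPred_and, ofPred_forall]
  refine .inter (isClosed_iInter fun x => isClosed_iInter fun y => .inter ?_ ?_)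
    (.inter (isClosed_iInter fun x => ?_) (isClosed_iInter fun y => ?_))
  all_goals first
    | exact isClosed_le continuous_const (by fun_prop)
    | exact isClosed_le (by fun_prop) continuous_const
    | exact isClosed_eq (by fun_prop) continuous_const

variable {d}

theorem transportCost_le (hπ : IsCoupling μ ν π) : transportCost d μ ν ≤ couplingCost d π :=
  csInf_le ((isCompact_setOf_isCoupling μ ν).image (continuous_couplingCost d)).bddBelow
    (mem_image_of_mem _ hπ)

theorem exists_couplingCost_eq_transportCost (hμ : IsProbMeasure μ) (hν : IsProbMeasure ν) :
    ∃ π, IsCoupling μ ν π ∧ couplingCost d π = transportCost d μ ν := by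
  obtain ⟨π, hπ, hmin⟩ := (isCompact_setOf_isCoupling μ ν).exists_isMinOn ⟨_, .prod hμ hν⟩
    (continuous_couplingCost d).continuousOn
  exact ⟨π, hπ, (IsLeast.csInf_eq
    ⟨mem_image_of_mem _ hπ, forall_mem_image.2 (isMinOn_iff.1 hmin)⟩).symm⟩

theorem transportCost_le_sum (hd : ∀ x y, 0 ≤ d x y) (hμ : IsProbMeasure μ)
    (hν : IsProbMeasure ν) : transportCost d μ ν ≤ ∑ x, ∑ y, d x y := by
  refine (transportCost_le (.prod hμ hν)).trans
    (sum_le_sum fun x _ => sum_le_sum fun y _ => ?_)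
  exact mul_le_of_le_one_right (hd x y) (mul_le_one₀ (hμ.1 x).2 (hν.nonneg y) (hν.1 y).2)

variable (d) in
theorem convexOn_transportCost :
    ConvexOn ℝ ({μ | IsProbMeasure μ} ×ˢ {ν | IsProbMeasure ν})
      (Function.uncurry (transportCost d)) := by
  refine ⟨convex_setOf_isProbMeasure.prod convex_setOf_isProbMeasure, ?_⟩
  rintro ⟨μ₁, ν₁⟩ ⟨hμ₁, hν₁⟩ ⟨μ₂, ν₂⟩ ⟨hμ₂, hν₂⟩ a b ha hb hab
  obtain ⟨π₁, h₁, hc₁⟩ := exists_couplingCost_eq_transportCost (d := d) hμ₁ hν₁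
  obtain ⟨π₂, h₂, hc₂⟩ := exists_couplingCost_eq_transportCost (d := d) hμ₂ hν₂
  have h : IsCoupling (a • μ₁ + b • μ₂) (a • ν₁ + b • ν₂) (a • π₁ + b • π₂) := by
    refine .of_nonneg (convex_setOf_isProbMeasure hμ₁ hμ₂ ha hb hab) (fun x y => ?_)
      (fun x => ?_) (fun y => ?_)
    · simpa using add_nonneg (mul_nonneg ha (h₁.nonneg x y)) (mul_nonneg hb (h₂.nonneg x y))
    · simp [sum_add_distrib, ← mul_sum, h₁.2.1, h₂.2.1]
    · simp [sum_add_distrib, ← mul_sum, h₁.2.2, h₂.2.2]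
  refine (transportCost_le h).trans_eq ?_
  simp [← hc₁, ← hc₂, couplingCost, mul_add, sum_add_distrib, mul_sum, mul_left_comm]

theorem couplingCost_glue_le (hd_tri : ∀ x y z, d x y ≤ d x z + d z y)
    (h₁ : IsCoupling μ ν π₁) (h₂ : IsCoupling ν ρ π₂) :
    couplingCost d (fun x z => ∑ y, π₁ x y * π₂ y z / ν y) ≤
      couplingCost d π₁ + couplingCost d π₂ := by
  have hν : ∀ y, 0 ≤ ν y := fun y => h₂.2.1 y ▸ sum_nonneg fun z _ => h₂.nonneg y z
  calc couplingCost d (fun x z => ∑ y, π₁ x y * π₂ y z / ν y)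
      ≤ ∑ x, ∑ z, ∑ y, (d x y + d y z) * (π₁ x y * π₂ y z / ν y) := by
        refine sum_le_sum fun x _ => sum_le_sum fun z _ => ?_
        rw [mul_sum]
        exact sum_le_sum fun y _ => mul_le_mul_of_nonneg_right (hd_tri x z y)
          (div_nonneg (mul_nonneg (h₁.nonneg x y) (h₂.nonneg y z)) (hν y))
    _ = ∑ x, ∑ y, d x y * (π₁ x y * ν y / ν y) +
          ∑ y, ∑ z, d y z * (ν y * π₂ y z / ν y) := by
        simp only [add_mul, sum_add_distrib]
        congr 1
        · refine sum_congr rfl fun x _ => ?_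
          rw [sum_comm]
          refine sum_congr rfl fun y _ => ?_
          rw [← mul_sum, ← sum_div, ← mul_sum, h₂.2.1 y]
        · rw [sum_comm_cycle]
          refine sum_congr rfl fun y _ => ?_
          rw [sum_comm]
          refine sum_congr rfl fun z _ => ?_
          rw [← mul_sum, ← sum_div, ← sum_mul, h₁.2.2 y]
    _ = couplingCost d π₁ + couplingCost d π₂ := by
        simp only [h₁.mul_div_right, h₂.mul_div_left, couplingCost]

theorem transportCost_triangle (hd_tri : ∀ x y z, d x y ≤ d x z + d z y)
    (hμ : IsProbMeasure μ) (hν : IsProbMeasure ν) (hρ : IsProbMeasure ρ) :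
    transportCost d μ ρ ≤ transportCost d μ ν + transportCost d ν ρ := by
  obtain ⟨π₁, h₁, hc₁⟩ := exists_couplingCost_eq_transportCost (d := d) hμ hν
  obtain ⟨π₂, h₂, hc₂⟩ := exists_couplingCost_eq_transportCost (d := d) hν hρ
  rw [← hc₁, ← hc₂]
  exact (transportCost_le (h₁.glue h₂ hμ)).trans (couplingCost_glue_le hd_tri h₁ h₂)

section Pushforward

variable [DecidableEq V]

def pushforward (σ : V → V) (ν : V → ℝ) : V → ℝ :=
  fun y => ∑ x, if σ x = y then ν x else 0

theorem pushforward_id : pushforward id ν = ν := by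
  ext y
  simp [pushforward]

theorem isCoupling_pushforward (hν : IsProbMeasure ν) (σ : V → V) :
    IsCoupling ν (pushforward σ ν) (fun x y => if σ x = y then ν x else 0) :=
  .of_nonneg hν (fun x y => by split_ifs <;> simp [hν.nonneg x]) (fun x => by simp)
    (fun _ => rfl)

theorem transportCost_pushforward_le (hν : IsProbMeasure ν) (σ : V → V) :
    transportCost d ν (pushforward σ ν) ≤ ∑ x, d x (σ x) * ν x := by
  refine (transportCost_le (isCoupling_pushforward hν σ)).trans_eq ?_
  simp [couplingCost, mul_ite]

theorem sum_mul_pushforward_sub (σ : V → V) (f : V → ℝ) :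
    ∑ y, f y * (pushforward σ ν y - ν y) = ∑ x, (f (σ x) - f x) * ν x := by
  simp only [pushforward, mul_sub, sub_mul, sum_sub_distrib, mul_sum, mul_ite, mul_zero]
  rw [sum_comm]
  simp

end Pushforward

theorem transportCost_self_nonpos (hd_refl : ∀ x, d x x = 0) (hμ : IsProbMeasure μ) :
    transportCost d μ μ ≤ 0 := by
  classical
  simpa [pushforward_id, hd_refl] using transportCost_pushforward_le (d := d) hμ id

theorem transportCost_combo_le (hd_refl : ∀ x, d x x = 0) (hν : IsProbMeasure ν)
    (hα : IsProbMeasure α) (hβ : IsProbMeasure β) {ε : ℝ} (hε₀ : 0 ≤ ε) (hε₁ : ε ≤ 1) :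
    transportCost d ((1 - ε) • ν + ε • α) ((1 - ε) • ν + ε • β) ≤ ε * transportCost d α β := by
  have h := (convexOn_transportCost d).2 (x := (ν, ν)) (y := (α, β)) ⟨hν, hν⟩ ⟨hα, hβ⟩
    (sub_nonneg.2 hε₁) hε₀ (by ring)
  simp only [Prod.smul_mk, Prod.mk_add_mk, Function.uncurry_apply_pair, smul_eq_mul] at h
  nlinarith [transportCost_self_nonpos hd_refl hν]

theorem sum_mul_sub_le_couplingCost {f : V → ℝ} (hf : ∀ x y, f y - f x ≤ d x y)
    (hπ : IsCoupling μ ν π) : ∑ x, f x * (ν x - μ x) ≤ couplingCost d π := by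
  calc ∑ x, f x * (ν x - μ x) = ∑ x, ∑ y, (f y - f x) * π x y := by
        simp only [mul_sub, sub_mul, sum_sub_distrib, ← hπ.2.1, ← hπ.2.2, mul_sum]
        rw [sum_comm]
    _ ≤ couplingCost d π :=
        sum_le_sum fun x _ => sum_le_sum fun y _ =>
          mul_le_mul_of_nonneg_right (hf x y) (hπ.nonneg x y)

theorem sum_mul_sub_le_transportCost {f : V → ℝ} (hf : ∀ x y, f y - f x ≤ d x y)
    (hμ : IsProbMeasure μ) (hν : IsProbMeasure ν) :
    ∑ x, f x * (ν x - μ x) ≤ transportCost d μ ν := by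
  obtain ⟨π, hπ, hc⟩ := exists_couplingCost_eq_transportCost (d := d) hμ hν
  exact hc ▸ sum_mul_sub_le_couplingCost hf hπ

theorem exists_subgradient_transportCost (hd : ∀ x y, 0 ≤ d x y) (hμ : IsProbMeasure μ)
    (hν : IsProbMeasure ν) (hν_pos : ∀ x, 0 < ν x) :
    ∃ f : V → ℝ, ∀ ν', IsProbMeasure ν' →
      transportCost d μ ν + ∑ x, f x * (ν' x - ν x) ≤ transportCost d μ ν' := by
  classical
  -- an affine retraction onto the hyperplane `∑ x, w x = 1`, inside which `ν` is interior
  set p : (V → ℝ) → V → ℝ := fun w => w + (1 - ∑ x, w x) • ν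
  have hp_fix : ∀ w, IsProbMeasure w → p w = w := fun w hw => by simp [p, hw.2]
  have hp_sum : ∀ w, ∑ x, p w x = 1 := fun w => by
    simp [p, sum_add_distrib, ← mul_sum, hν.2]
  have hp_combo : ∀ w₁ w₂ (a b : ℝ), a + b = 1 →
      p (a • w₁ + b • w₂) = a • p w₁ + b • p w₂ := by
    intro w₁ w₂ a b hab
    ext x
    simp only [p, Pi.add_apply, Pi.smul_apply, smul_eq_mul, sum_add_distrib, ← mul_sum]
    linear_combination (-ν x) * hab
  have hconv : ConvexOn ℝ {w | IsProbMeasure (p w)} (fun w => transportCost d μ (p w)) := by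
    refine ⟨fun w₁ h₁ w₂ h₂ a b ha hb hab => ?_, fun w₁ h₁ w₂ h₂ a b ha hb hab => ?_⟩
    · simpa [hp_combo _ _ _ _ hab] using convex_setOf_isProbMeasure h₁ h₂ ha hb hab
    · simpa [hp_combo _ _ _ _ hab, Convex.combo_self hab] using
        (convexOn_transportCost d).2 (x := (μ, p w₁)) (y := (μ, p w₂)) ⟨hμ, h₁⟩ ⟨hμ, h₂⟩
          ha hb hab
  have hprob : ∀ w, (∀ x, 0 < p w x) → IsProbMeasure (p w) :=
    fun w hw => .of_nonneg (fun x => (hw x).le) (hp_sum w)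
  have hs : IsOpen {w : V → ℝ | ∀ x, 0 < p w x} := by
    simp only [ofPred_forall]
    exact isOpen_iInter_of_finite fun x => isOpen_lt continuous_const (by fun_prop)
  obtain ⟨g, hg⟩ := hconv.exists_subgradient_of_le (x₀ := ν) hs hprob
    (by simpa [hp_fix ν hν] using hν_pos) fun w hw => transportCost_le_sum hd hμ (hprob w hw)
  refine ⟨fun x => g fun y => if x = y then 1 else 0, fun ν' hν' => ?_⟩
  have h := hg ν' (by simpa [hp_fix ν' hν'] using hν')
  rw [hp_fix ν hν, hp_fix ν' hν', ← ContinuousLinearMap.coe_coe,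
    LinearMap.pi_apply_eq_sum_univ] at h
  simpa [mul_comm] using h

theorem exists_lipschitz_transportCost_le_of_pos (hd_nonneg : ∀ x y, 0 ≤ d x y)
    (hd_refl : ∀ x, d x x = 0) (hd_tri : ∀ x y z, d x y ≤ d x z + d z y)
    (hμ : IsProbMeasure μ) (hν : IsProbMeasure ν) (hν_pos : ∀ x, 0 < ν x) :
    ∃ f : V → ℝ, (∀ x y, f y - f x ≤ d x y) ∧
      transportCost d μ ν ≤ ∑ x, f x * (ν x - μ x) := by
  classical
  obtain ⟨f, hf⟩ := exists_subgradient_transportCost hd_nonneg hμ hν hν_pos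
  have hf_move : ∀ ν', IsProbMeasure ν' → ∑ x, f x * (ν' x - ν x) ≤ transportCost d ν ν' :=
    fun ν' hν' => by linarith [hf ν' hν', transportCost_triangle hd_tri hμ hν hν']
  refine ⟨f, fun x y => ?_, ?_⟩
  · set σ : V → V := Function.update id x y
    have hσ : ∀ g : V → V → ℝ, (∀ z, g z z = 0) → ∑ z, g z (σ z) * ν z = g x y * ν x := by
      intro g hg
      rw [sum_eq_single x (fun z _ hz => by simp [σ, hz, hg]) (by simp)]
      simp [σ]
    have h := (hf_move _ ((isCoupling_pushforward hν σ).isProbMeasure_right hν)).trans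
      (transportCost_pushforward_le hν σ)
    rw [sum_mul_pushforward_sub, hσ (fun a b => f b - f a) (by simp), hσ d hd_refl] at h
    exact le_of_mul_le_mul_right h (hν_pos x)
  · have h := (hf μ hμ).trans (transportCost_self_nonpos hd_refl hμ)
    simp only [mul_sub, sum_sub_distrib] at h ⊢
    linarith

theorem exists_lipschitz_transportCost_le_add (hd_nonneg : ∀ x y, 0 ≤ d x y)
    (hd_refl : ∀ x, d x x = 0) (hd_tri : ∀ x y z, d x y ≤ d x z + d z y)
    (hμ : IsProbMeasure μ) (hν : IsProbMeasure ν) (hρ : IsProbMeasure ρ) (hρ_pos : ∀ x, 0 < ρ x)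
    {ε : ℝ} (hε₀ : 0 < ε) (hε₁ : ε ≤ 1) :
    ∃ f : V → ℝ, (∀ x y, f y - f x ≤ d x y) ∧
      transportCost d μ ν ≤
        ∑ x, f x * (ν x - μ x) + ε * (transportCost d ν ρ + transportCost d ρ ν) := by
  set νε := (1 - ε) • ν + ε • ρ
  have hνε : IsProbMeasure νε :=
    convex_setOf_isProbMeasure hν hρ (by linarith) hε₀.le (by ring)
  have hνε_pos : ∀ x, 0 < νε x := fun x => by
    simpa [νε] using add_pos_of_nonneg_of_pos (mul_nonneg (by linarith) (hν.nonneg x))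
      (mul_pos hε₀ (hρ_pos x))
  obtain ⟨f, hf, hval⟩ :=
    exists_lipschitz_transportCost_le_of_pos hd_nonneg hd_refl hd_tri hμ hνε hνε_pos
  have hν_self : (1 - ε) • ν + ε • ν = ν := Convex.combo_self (by ring) ν
  have hνε_ν := transportCost_combo_le hd_refl hν hν hρ hε₀.le hε₁
  have hν_νε := transportCost_combo_le hd_refl hν hρ hν hε₀.le hε₁
  rw [hν_self] at hνε_ν hν_νε
  refine ⟨f, hf, ?_⟩
  have htri := transportCost_triangle hd_tri hμ hνε hν
  have hdual := sum_mul_sub_le_transportCost hf hν hνε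
  simp only [mul_sub, sum_sub_distrib] at hval hdual ⊢
  linarith

end OptimalTransport

end

open OptimalTransport

theorem kantorovich_rubinstein_duality_general {V : Type*} [Fintype V]
    (d : V → V → ℝ) (hd_nonneg : ∀ x y, 0 ≤ d x y)
    (hd_refl : ∀ x, d x x = 0)
    (hd_tri : ∀ x y z, d x y ≤ d x z + d z y)
    (μ ν : V → ℝ) (hμ : IsProbMeasure μ) (hν : IsProbMeasure ν) :
    sInf {s : ℝ | ∃ π : V → V → ℝ, IsCoupling μ ν π ∧
        s = ∑ x, ∑ y, d x y * π x y} =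
      sSup {s : ℝ | ∃ f : V → ℝ, (∀ x y, f y - f x ≤ d x y) ∧
        s = ∑ x, f x * (ν x - μ x)} := by
  set S := {s : ℝ | ∃ f : V → ℝ, (∀ x y, f y - f x ≤ d x y) ∧ s = ∑ x, f x * (ν x - μ x)}
  have hprimal : {s : ℝ | ∃ π : V → V → ℝ, IsCoupling μ ν π ∧ s = ∑ x, ∑ y, d x y * π x y} =
      couplingCost d '' {π | IsCoupling μ ν π} := by
    ext s
    simp [couplingCost, eq_comm]
  have hweak : ∀ s ∈ S, s ≤ transportCost d μ ν := by
    rintro _ ⟨f, hf, rfl⟩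
    exact sum_mul_sub_le_transportCost hf hμ hν
  rw [hprimal]
  refine le_antisymm ?_
    (csSup_le ⟨0, 0, fun x y => by simpa using hd_nonneg x y, by simp⟩ hweak)
  obtain ⟨ρ, hρ, hρ_pos⟩ := hμ.exists_pos
  set C := transportCost d ν ρ + transportCost d ρ ν
  refine ge_of_tendsto (x := 𝓝[>] 0) (f := fun ε => sSup S + ε * C) ?_ ?_
  · exact tendsto_nhdsWithin_of_tendsto_nhds (Continuous.tendsto' (by fun_prop) _ _ (by simp))
  · filter_upwards [Ioc_mem_nhdsGT one_pos] with ε ⟨hε₀, hε₁⟩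
    obtain ⟨f, hf, h⟩ :=
      exists_lipschitz_transportCost_le_add hd_nonneg hd_refl hd_tri hμ hν hρ hρ_pos hε₀ hε₁
    exact h.trans (add_le_add_left (le_csSup ⟨_, hweak⟩ ⟨f, hf, rfl⟩) _)

/-- Kantorovich–Rubinstein duality on a finite set with a possibly
asymmetric, definite distance function satisfying the triangle inequality. -/
theorem kantorovich_rubinstein_duality {V : Type*} [Fintype V]
    (d : V → V → ℝ) (hd_nonneg : ∀ x y, 0 ≤ d x y)
    (hd_refl : ∀ x, d x x = 0)
    (hd_pos : ∀ x y, x ≠ y → 0 < d x y)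
    (hd_tri : ∀ x y z, d x y ≤ d x z + d z y)
    (μ ν : V → ℝ) (hμ : IsProbMeasure μ) (hν : IsProbMeasure ν) :
    sInf {s : ℝ | ∃ π : V → V → ℝ, IsCoupling μ ν π ∧
        s = ∑ x, ∑ y, d x y * π x y} =
      sSup {s : ℝ | ∃ f : V → ℝ, (∀ x y, f y - f x ≤ d x y) ∧
        s = ∑ x, f x * (ν x - μ x)} :=
  kantorovich_rubinstein_duality_general d hd_nonneg hd_refl hd_tri μ ν hμ hν
end

section
/- Let A be a real n × m matrix, w ∈ ℝ^m a fixed vector, and c : ℝ → ℝ^n a continuous vector-valued function. Suppose that for every t ∈ ℝ the linear program M(t) := inf { wᵀ f : f ∈ ℝ^m, A f ≤ c(t) componentwise } is feasible and its optimal value is finite and attained. Then t ↦ M(t) is a continuous function of t. -/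
/-
The epigraph `{(b, v) | ∃ f, A f ≤ b ∧ w ⬝ᵥ f ≤ v}` of the optimal value is the projection of a
polyhedral cone, so by Fourier–Motzkin elimination it is itself a polyhedral cone
`{(b, v) | ∀ j, φⱼ b + v αⱼ ≤ 0}`. Over `b = c t` its slice is `[M t, ∞)`, which forces
`M t = max_{αⱼ < 0} φⱼ (c t) / (-αⱼ)`: a finite maximum of continuous functions of `t`.
-/

section FourierMotzkin

open Finset

variable {𝕜 : Type*} [Field 𝕜] [LinearOrder 𝕜] [IsStrictOrderedRing 𝕜]

lemma add_mul_nonpos_iff_le_div_of_pos {a g s : 𝕜} (ha : 0 < a) :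
    g + s * a ≤ 0 ↔ s ≤ -g / a := by
  rw [le_div_iff₀ ha]
  constructor <;> intro h <;> linarith

lemma add_mul_nonpos_iff_div_le_of_neg {a g s : 𝕜} (ha : a < 0) :
    g + s * a ≤ 0 ↔ -g / a ≤ s := by
  rw [div_le_iff_of_neg ha]
  constructor <;> intro h <;> linarith

/-- Fourier–Motzkin elimination of one variable. -/
lemma exists_forall_add_mul_nonpos_iff {ι : Type*} (t : Finset ι) (a g : ι → 𝕜) :
    (∃ s : 𝕜, ∀ i ∈ t, g i + s * a i ≤ 0) ↔
      (∀ i ∈ t, a i = 0 → g i ≤ 0) ∧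
        ∀ i ∈ t, ∀ j ∈ t, 0 < a i → a j < 0 → -a j * g i + a i * g j ≤ 0 := by
  constructor
  · rintro ⟨s, hs⟩
    refine ⟨fun i hi hai => by simpa [hai] using hs i hi, fun i hi j hj hai haj => ?_⟩
    have := mul_nonpos_of_nonneg_of_nonpos (neg_nonneg.2 haj.le) (hs i hi)
    have := mul_nonpos_of_nonneg_of_nonpos hai.le (hs j hj)
    linarith
  rintro ⟨hzero, hpair⟩
  have hbetween : ∀ i ∈ t, ∀ j ∈ t, 0 < a i → a j < 0 → -g j / a j ≤ -g i / a i := by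
    intro i hi j hj hai haj
    have hx : -g j / a j * a j = -g j := div_mul_cancel₀ _ haj.ne
    have : (g i + -g j / a j * a i) * -a j ≤ 0 := by
      linear_combination hpair i hi j hj hai haj - a i * hx
    rw [← add_mul_nonpos_iff_le_div_of_pos hai]
    exact nonpos_of_mul_nonpos_left this (neg_pos.2 haj)
  by_cases hP : (t.filter (0 < a ·)).Nonempty
  · refine ⟨(t.filter (0 < a ·)).inf' hP fun i => -g i / a i, fun j hj => ?_⟩
    rcases lt_trichotomy (a j) 0 with haj | haj | haj
    · rw [add_mul_nonpos_iff_div_le_of_neg haj]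
      exact le_inf' _ _ fun i hi => hbetween i (mem_filter.1 hi).1 j hj (mem_filter.1 hi).2 haj
    · simpa [haj] using hzero j hj haj
    · rw [add_mul_nonpos_iff_le_div_of_pos haj]
      exact inf'_le _ (mem_filter.2 ⟨hj, haj⟩)
  · obtain ⟨s, hs⟩ := (t.image fun j => -g j / a j).bddAbove
    refine ⟨s, fun j hj => ?_⟩
    rcases lt_trichotomy (a j) 0 with haj | haj | haj
    · rw [add_mul_nonpos_iff_div_le_of_neg haj]
      exact hs (mem_image_of_mem _ hj)
    · simpa [haj] using hzero j hj haj
    · exact absurd ⟨j, mem_filter.2 ⟨hj, haj⟩⟩ hP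

lemma eq_sup'_of_forall_add_mul_nonpos_iff {ι : Type*} {t : Finset ι} {a g : ι → 𝕜} {μ : 𝕜}
    (h : ∀ v, (∀ i ∈ t, g i + v * a i ≤ 0) ↔ μ ≤ v) :
    ∃ hne : (t.filter (a · < 0)).Nonempty,
      μ = (t.filter (a · < 0)).sup' hne fun i => -g i / a i := by
  have hμ := (h μ).2 le_rfl
  have ha : ∀ i ∈ t, a i ≤ 0 := by
    intro i hi
    by_contra! hai
    have hv := (h (max μ (-g i / a i + 1))).2 (le_max_left _ _) i hi
    rw [add_mul_nonpos_iff_le_div_of_pos hai] at hv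
    linarith [le_max_right μ (-g i / a i + 1)]
  have hne : (t.filter (a · < 0)).Nonempty := by
    by_contra hne
    have ha0 : ∀ i ∈ t, a i = 0 := fun i hi =>
      (ha i hi).eq_or_lt.resolve_right fun hai => hne ⟨i, mem_filter.2 ⟨hi, hai⟩⟩
    have := (h (μ - 1)).1 fun i hi => by simpa [ha0 i hi] using hμ i hi
    linarith
  refine ⟨hne, le_antisymm ((h _).1 fun i hi => ?_) (sup'_le _ _ fun i hi => ?_)⟩
  · rcases (ha i hi).eq_or_lt with hai | hai
    · simpa [hai] using hμ i hi
    · rw [add_mul_nonpos_iff_div_le_of_neg hai]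
      exact le_sup' (fun i => -g i / a i) (mem_filter.2 ⟨hi, hai⟩)
  · exact (add_mul_nonpos_iff_div_le_of_neg (mem_filter.1 hi).2).1 (hμ i (mem_filter.1 hi).1)

end FourierMotzkin

lemma Module.Dual.apply_prod_eq_add_mul {R M : Type*} [CommSemiring R] [AddCommMonoid M]
    [Module R M] (φ : Module.Dual R (M × R)) (x : M) (s : R) :
    φ (x, s) = φ.comp (LinearMap.inl R M R) x + s * φ.comp (LinearMap.inr R M R) 1 := by
  have hx : ((x, s) : M × R) = LinearMap.inl R M R x + s • LinearMap.inr R M R 1 := by simp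
  rw [hx, map_add, map_smul, smul_eq_mul, LinearMap.comp_apply, LinearMap.comp_apply]

section PolyhedralCone

open Finset

variable {𝕜 : Type*} [Field 𝕜] [LinearOrder 𝕜]
variable {E F : Type*} [AddCommGroup E] [Module 𝕜 E] [AddCommGroup F] [Module 𝕜 F]

variable (𝕜) in
def IsPolyhedralCone (S : Set E) : Prop :=
  ∃ s : Finset (Module.Dual 𝕜 E), S = {x | ∀ φ ∈ s, φ x ≤ 0}

lemma isPolyhedralCone_setOf_forall {ι : Type*} [Fintype ι] (φ : ι → Module.Dual 𝕜 E) :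
    IsPolyhedralCone 𝕜 {x | ∀ i, φ i x ≤ 0} := by
  classical
  exact ⟨univ.image φ, by ext; simp⟩

lemma isPolyhedralCone_setOf_nonpos (φ : Module.Dual 𝕜 E) : IsPolyhedralCone 𝕜 {x | φ x ≤ 0} :=
  ⟨{φ}, by ext; simp⟩

lemma IsPolyhedralCone.inter {S T : Set E} (hS : IsPolyhedralCone 𝕜 S)
    (hT : IsPolyhedralCone 𝕜 T) : IsPolyhedralCone 𝕜 (S ∩ T) := by
  classical
  obtain ⟨s, rfl⟩ := hS
  obtain ⟨t, rfl⟩ := hT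
  exact ⟨s ∪ t, by ext; simp [or_imp, forall_and]⟩

lemma IsPolyhedralCone.preimage {S : Set F} (hS : IsPolyhedralCone 𝕜 S) (f : E →ₗ[𝕜] F) :
    IsPolyhedralCone 𝕜 (f ⁻¹' S) := by
  classical
  obtain ⟨s, rfl⟩ := hS
  exact ⟨s.image (·.comp f), by ext; simp⟩

lemma IsPolyhedralCone.image_fst [IsStrictOrderedRing 𝕜] {S : Set (E × 𝕜)}
    (hS : IsPolyhedralCone 𝕜 S) : IsPolyhedralCone 𝕜 (Prod.fst '' S) := by
  classical
  obtain ⟨t, rfl⟩ := hS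
  let a (φ : Module.Dual 𝕜 (E × 𝕜)) : 𝕜 := φ.comp (LinearMap.inr 𝕜 E 𝕜) 1
  let g (φ : Module.Dual 𝕜 (E × 𝕜)) : Module.Dual 𝕜 E := φ.comp (LinearMap.inl 𝕜 E 𝕜)
  refine ⟨(t.filter (a · = 0)).image g ∪
    ((t ×ˢ t).filter fun p => 0 < a p.1 ∧ a p.2 < 0).image fun p => -a p.2 • g p.1 + a p.1 • g p.2,
    Set.ext fun x => ?_⟩
  simp only [Set.mem_image, Set.mem_ofPred_eq, Prod.exists, exists_and_right, exists_eq_right,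
    Module.Dual.apply_prod_eq_add_mul _ x, exists_forall_add_mul_nonpos_iff, forall_mem_union,
    forall_mem_image, mem_filter, Prod.forall, mem_product, and_imp, LinearMap.add_apply,
    LinearMap.smul_apply, smul_eq_mul]
  exact and_congr_right' ⟨fun h i j hi hj => h i hi j hj, fun h i hi j hj => h i j hi hj⟩

lemma IsPolyhedralCone.image_fst_pi [IsStrictOrderedRing 𝕜] {m : ℕ}
    {S : Set (E × (Fin m → 𝕜))} (hS : IsPolyhedralCone 𝕜 S) :
    IsPolyhedralCone 𝕜 (Prod.fst '' S) := by
  induction m with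
  | zero =>
    convert hS.preimage (LinearMap.inl 𝕜 E (Fin 0 → 𝕜))
    ext x
    exact ⟨fun ⟨⟨y, f⟩, h, hy⟩ => hy ▸ Subsingleton.elim f 0 ▸ h, fun h => ⟨_, h, rfl⟩⟩
  | succ m ih =>
    let L : (E × (Fin m → 𝕜)) × 𝕜 →ₗ[𝕜] E × (Fin (m + 1) → 𝕜) :=
      (LinearMap.fst 𝕜 E _ ∘ₗ LinearMap.fst 𝕜 _ 𝕜).prod
        ((LinearMap.snd 𝕜 _ 𝕜).vecCons (LinearMap.snd 𝕜 E _ ∘ₗ LinearMap.fst 𝕜 _ 𝕜))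
    have hL : Function.Surjective L := fun ⟨x, f⟩ =>
      ⟨((x, Fin.tail f), f 0), Prod.ext rfl (Fin.cons_self_tail f)⟩
    have hproj : Prod.fst '' (Prod.fst '' (L ⁻¹' S)) = Prod.fst '' S := by
      conv_rhs => rw [← Set.image_preimage_eq S hL, Set.image_image]
      rw [Set.image_image]
      rfl
    exact hproj ▸ ih (hS.preimage L).image_fst

lemma IsPolyhedralCone.continuous_of_mem_iff_le {X Q : Type*} [TopologicalSpace X]
    [NormedAddCommGroup Q] [NormedSpace ℝ Q] [FiniteDimensional ℝ Q] {S : Set (Q × ℝ)}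
    (hS : IsPolyhedralCone ℝ S) {c : X → Q} (hc : Continuous c) {M : X → ℝ}
    (hM : ∀ x v, (c x, v) ∈ S ↔ M x ≤ v) : Continuous M := by
  obtain ⟨s, rfl⟩ := hS
  let α (φ : Module.Dual ℝ (Q × ℝ)) : ℝ := φ.comp (LinearMap.inr ℝ Q ℝ) 1
  let β (φ : Module.Dual ℝ (Q × ℝ)) : Module.Dual ℝ Q := φ.comp (LinearMap.inl ℝ Q ℝ)
  have hformula x := eq_sup'_of_forall_add_mul_nonpos_iff (t := s) (a := α)
    (g := fun φ => β φ (c x)) fun v => by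
      simpa only [Set.mem_ofPred_eq, Module.Dual.apply_prod_eq_add_mul] using hM x v
  refine continuous_iff_continuousAt.2 fun x₀ => ?_
  obtain ⟨hne, -⟩ := hformula x₀
  have hM_eq : M = fun x => (s.filter (α · < 0)).sup' hne fun φ => -β φ (c x) / α φ :=
    funext fun x => (hformula x).choose_spec
  rw [hM_eq]
  refine (Continuous.finset_sup'_apply hne fun φ _ => ?_).continuousAt
  exact ((β φ).continuous_of_finiteDimensional.comp hc).neg.div_const _

end PolyhedralCone

section LinearProgram

variable {ι : Type*} {m : ℕ}

def lpEpigraph (A : Matrix ι (Fin m) ℝ) (w : Fin m → ℝ) : Set ((ι → ℝ) × ℝ) :=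
  {p | ∃ f, (∀ i, A.mulVec f i ≤ p.1 i) ∧ w ⬝ᵥ f ≤ p.2}

lemma isPolyhedralCone_lpEpigraph [Fintype ι] (A : Matrix ι (Fin m) ℝ) (w : Fin m → ℝ) :
    IsPolyhedralCone ℝ (lpEpigraph A w) := by
  let row (i : ι) : Module.Dual ℝ (((ι → ℝ) × ℝ) × (Fin m → ℝ)) :=
    LinearMap.proj i ∘ₗ
      (A.mulVecLin ∘ₗ LinearMap.snd ℝ _ _ - LinearMap.fst ℝ _ _ ∘ₗ LinearMap.fst ℝ _ _)
  let obj : Module.Dual ℝ (((ι → ℝ) × ℝ) × (Fin m → ℝ)) :=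
    dotProductBilin ℝ ℝ w ∘ₗ LinearMap.snd ℝ _ _ - LinearMap.snd ℝ _ _ ∘ₗ LinearMap.fst ℝ _ _
  have hproj : lpEpigraph A w = Prod.fst '' ({x | ∀ i, row i x ≤ 0} ∩ {x | obj x ≤ 0}) := by
    ext ⟨b, v⟩
    simp [lpEpigraph, row, obj]
  rw [hproj]
  exact ((isPolyhedralCone_setOf_forall row).inter
    (isPolyhedralCone_setOf_nonpos obj)).image_fst_pi

lemma mem_lpEpigraph_iff_of_isLeast {A : Matrix ι (Fin m) ℝ} {w : Fin m → ℝ} {b : ι → ℝ}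
    {μ v : ℝ} (hμ : IsLeast {v | ∃ f, (∀ i, A.mulVec f i ≤ b i) ∧ v = w ⬝ᵥ f} μ) :
    (b, v) ∈ lpEpigraph A w ↔ μ ≤ v := by
  constructor
  · rintro ⟨f, hf, hv⟩
    exact (hμ.2 ⟨f, hf, rfl⟩).trans hv
  · intro hv
    obtain ⟨f, hf, rfl⟩ := hμ.1
    exact ⟨f, hf, hv⟩

end LinearProgram

/-- If `c : ℝ → ℝⁿ` is continuous and for every `t` the linear
program `inf { wᵀ f : A f ≤ c t }` is feasible with finite, attained optimal
value, then the optimal value is a continuous function of `t`. -/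
theorem lp_value_continuous_in_constraints {n m : ℕ}
    (A : Matrix (Fin n) (Fin m) ℝ) (w : Fin m → ℝ)
    (c : ℝ → Fin n → ℝ) (hc : Continuous c)
    (hatt : ∀ t : ℝ, ∃ v : ℝ,
      IsLeast {v : ℝ | ∃ f : Fin m → ℝ,
        (∀ i, A.mulVec f i ≤ c t i) ∧ v = w ⬝ᵥ f} v) :
    Continuous (fun t : ℝ => sInf {v : ℝ | ∃ f : Fin m → ℝ,
      (∀ i, A.mulVec f i ≤ c t i) ∧ v = w ⬝ᵥ f}) := by
  choose M hM using hatt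
  have hcont : Continuous M := (isPolyhedralCone_lpEpigraph A w).continuous_of_mem_iff_le hc
    fun t _ => mem_lpEpigraph_iff_of_isLeast (hM t)
  convert hcont with t
  exact (hM t).csInf_eq
end

section
/- Let V be a finite set, d an asymmetric distance function on V satisfying the triangle inequality, and μ a probability kernel on V with μ(x,x) = 0 for all x. For α ∈ (0,1] and distinct x, y ∈ V, (1/α)·(1 − W₁(μ^α_x, μ^α_y)/d(x,y)) = inf over functions f : V → ℝ that are 1-Lipschitz w.r.t. d of [ (1/α)(1 − ∇_{xy} f) + ∇_{xy} (Lf) ], where ∇_{xy} g := (g(y) − g(x))/d(x,y). -/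
open Finset

/-- The `L¹`-Wasserstein cost between `μ` and `ν` on a finite set w.r.t. cost `d`,
as an infimum over couplings. -/
noncomputable def W1 {V : Type*} [Fintype V] (d : V → V → ℝ) (μ ν : V → ℝ) : ℝ :=
  sInf {s : ℝ | ∃ π : V → V → ℝ, (∀ x y, 0 ≤ π x y ∧ π x y ≤ 1) ∧
    (∀ x, ∑ y, π x y = μ x) ∧ (∀ y, ∑ x, π x y = ν y) ∧
    s = ∑ x, ∑ y, d x y * π x y}

/-- The `α`-idle kernel: `μ^α_x(y) = α μ(x,y)` for `y ≠ x` and `μ^α_x(x) = 1 - α`. -/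
noncomputable def idleKernel {V : Type*} [DecidableEq V]
    (μ : V → V → ℝ) (α : ℝ) (x : V) : V → ℝ :=
  fun y => if y = x then 1 - α else α * μ x y

open Filter Topology
set_option maxHeartbeats 1000000
set_option linter.unusedSectionVars false

noncomputable def myT {V : Type*} [Fintype V] (d : V → V → ℝ) :
    ((V → V → ℝ) × ℝ) →ₗ[ℝ] ((V → ℝ) × (V → ℝ) × ℝ) where
  toFun w := (fun a => ∑ b, w.1 a b, fun b => ∑ a, w.1 a b,
    (∑ a, ∑ b, d a b * w.1 a b) + w.2)
  map_add' w₁ w₂ := by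
    refine Prod.ext ?_ (Prod.ext ?_ ?_) <;> dsimp
    · funext a; simp [Finset.sum_add_distrib]
    · funext b; simp [Finset.sum_add_distrib]
    · simp [mul_add, Finset.sum_add_distrib]; ring
  map_smul' c w := by
    refine Prod.ext ?_ (Prod.ext ?_ ?_) <;> dsimp
    · funext a; simp [Finset.mul_sum]
    · funext b; simp [Finset.mul_sum]
    · simp [Finset.mul_sum, mul_add]; ring_nf; rw [Finset.sum_congr rfl]; intro a _
      rw [Finset.sum_congr rfl]; intro b _; ring
section SD
variable {V : Type*} [Fintype V] [DecidableEq V]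

lemma my_not_in_closure (d : V → V → ℝ) (hd0 : ∀ a b, 0 ≤ d a b)
    (p q : V → ℝ) (hp1 : ∀ a, p a ≤ 1) (hps : ∑ a, p a = 1)
    (t : ℝ) (ht : t < W1 d p q) :
    (p, q, t) ∉ closure (myT d '' {w : (V → V → ℝ) × ℝ | (∀ a b, 0 ≤ w.1 a b) ∧ 0 ≤ w.2}) := by
  intro hmem
  -- lower bounded cost set
  have hbdd : BddBelow {s : ℝ | ∃ π : V → V → ℝ, (∀ x y, 0 ≤ π x y ∧ π x y ≤ 1) ∧
      (∀ x, ∑ y, π x y = p x) ∧ (∀ y, ∑ x, π x y = q y) ∧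
      s = ∑ x, ∑ y, d x y * π x y} := by
    refine ⟨0, fun s hs => ?_⟩
    obtain ⟨π, hπ, _, _, rfl⟩ := hs
    exact Finset.sum_nonneg fun a _ => Finset.sum_nonneg fun b _ =>
      mul_nonneg (hd0 a b) (hπ a b).1
  rw [mem_closure_iff_seq_limit] at hmem
  obtain ⟨z, hzS, hz⟩ := hmem
  choose w hw hzeq using hzS
  set π : ℕ → V → V → ℝ := fun n => (w n).1 with hπdef
  set s : ℕ → ℝ := fun n => (w n).2 with hsdef
  have hπ0 : ∀ n a b, 0 ≤ π n a b := fun n => (hw n).1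
  have hs0 : ∀ n, 0 ≤ s n := fun n => (hw n).2
  have hz1 : ∀ n, (z n).1 = fun a => ∑ b, π n a b := fun n => by rw [← hzeq n]; rfl
  have hz21 : ∀ n, (z n).2.1 = fun b => ∑ a, π n a b := fun n => by rw [← hzeq n]; rfl
  have hz22 : ∀ n, (z n).2.2 = (∑ a, ∑ b, d a b * π n a b) + s n := fun n => by
    rw [← hzeq n]; rfl
  -- componentwise limits
  have h1 : ∀ a, Tendsto (fun n => ∑ b, π n a b) atTop (𝓝 (p a)) := by
    intro a
    have := ((continuous_apply a).tendsto p).comp ((continuous_fst.tendsto _).comp hz)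
    convert this using 1
    funext n; simp [Function.comp, hz1 n]
  have h2 : ∀ b, Tendsto (fun n => ∑ a, π n a b) atTop (𝓝 (q b)) := by
    intro b
    have := ((continuous_apply b).tendsto q).comp
      ((continuous_fst.tendsto _).comp ((continuous_snd.tendsto _).comp hz))
    convert this using 1
    funext n; simp [Function.comp, hz21 n]
  have h3 : Tendsto (fun n => (∑ a, ∑ b, d a b * π n a b) + s n) atTop (𝓝 t) := by
    have := (continuous_snd.tendsto _).comp ((continuous_snd.tendsto _).comp hz)
    convert this using 1
    funext n; simp [Function.comp, hz22 n]
  -- total mass tends to 1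
  have hm : Tendsto (fun n => ∑ a, ∑ b, π n a b) atTop (𝓝 1) := by
    rw [← hps]
    exact tendsto_finset_sum _ fun a _ => h1 a
  have hev : ∀ᶠ n in atTop, ∑ a, ∑ b, π n a b ≤ 2 := by
    filter_upwards [hm.eventually (eventually_le_nhds (by norm_num : (1:ℝ) < 2))] with n hn
    exact hn
  obtain ⟨N, hN⟩ := eventually_atTop.mp hev
  set σ : ℕ → V → V → ℝ := fun k => π (k + N) with hσdef
  have hσbox : ∀ k, σ k ∈ Set.Icc (0 : V → V → ℝ) 2 := by
    intro k
    constructor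
    · intro a; intro b; exact hπ0 _ a b
    · intro a; intro b
      have h1' : π (k + N) a b ≤ ∑ b', π (k + N) a b' :=
        Finset.single_le_sum (fun b' _ => hπ0 _ a b') (mem_univ b)
      have h2' : ∑ b', π (k + N) a b' ≤ ∑ a', ∑ b', π (k + N) a' b' :=
        Finset.single_le_sum (fun a' _ => Finset.sum_nonneg fun b' _ => hπ0 _ a' b')
          (mem_univ a)
      have := hN (k + N) (Nat.le_add_left N k)
      show σ k a b ≤ 2
      calc σ k a b ≤ ∑ a', ∑ b', π (k + N) a' b' := le_trans h1' h2'
        _ ≤ 2 := this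
  obtain ⟨πl, hπlbox, φ, hφ, hconv⟩ := isCompact_Icc.tendsto_subseq hσbox
  have hpt : ∀ a b, Tendsto (fun k => σ (φ k) a b) atTop (𝓝 (πl a b)) := by
    intro a b
    exact (((continuous_apply b).tendsto _).comp
      (((continuous_apply a).tendsto _).comp hconv))
  have hsub : ∀ {g : ℕ → ℝ} {c : ℝ}, Tendsto g atTop (𝓝 c) →
      Tendsto (fun k => g (φ k + N)) atTop (𝓝 c) := by
    intro g c hg
    exact hg.comp ((tendsto_add_atTop_nat N).comp hφ.tendsto_atTop)
  have hm1 : ∀ a, ∑ b, πl a b = p a := by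
    intro a
    refine tendsto_nhds_unique (tendsto_finset_sum _ fun b _ => hpt a b) (hsub (h1 a))
  have hm2 : ∀ b, ∑ a, πl a b = q b := by
    intro b
    refine tendsto_nhds_unique (tendsto_finset_sum _ fun a _ => hpt a b) (hsub (h2 b))
  have hπl0 : ∀ a b, 0 ≤ πl a b := fun a b => hπlbox.1 a b
  have hπl1 : ∀ a b, πl a b ≤ 1 := by
    intro a b
    calc πl a b ≤ ∑ b', πl a b' :=
          Finset.single_le_sum (fun b' _ => hπl0 a b') (mem_univ b)
      _ = p a := hm1 a
      _ ≤ 1 := hp1 a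
  have hcost : ∑ a, ∑ b, d a b * πl a b ≤ t := by
    have hc1 : Tendsto (fun k => ∑ a, ∑ b, d a b * σ (φ k) a b) atTop
        (𝓝 (∑ a, ∑ b, d a b * πl a b)) :=
      tendsto_finset_sum _ fun a _ => tendsto_finset_sum _ fun b _ =>
        (hpt a b).const_mul (d a b)
    have hc2 : Tendsto (fun k => (∑ a, ∑ b, d a b * π (φ k + N) a b) + s (φ k + N))
        atTop (𝓝 t) := hsub h3
    exact le_of_tendsto_of_tendsto' hc1 hc2 fun k => le_add_of_nonneg_right (hs0 _)
  have hWle : W1 d p q ≤ ∑ a, ∑ b, d a b * πl a b :=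
    csInf_le hbdd ⟨πl, fun a b => ⟨hπl0 a b, hπl1 a b⟩, hm1, hm2, rfl⟩
  exact absurd (hWle.trans hcost) (not_le.mpr ht)


-- evaluation of a continuous linear functional on the product space
lemma my_eval (y : ((V → ℝ) × (V → ℝ) × ℝ) →L[ℝ] ℝ) (u v : V → ℝ) (r : ℝ) :
    y (u, v, r) = (∑ a, u a * y (Pi.single a 1, 0, 0))
      + (∑ b, v b * y (0, Pi.single b 1, 0)) + r * y (0, 0, 1) := by
  have hdec : (u, v, r) = (∑ a, u a • ((Pi.single a 1 : V → ℝ), (0 : V → ℝ), (0:ℝ)))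
      + (∑ b, v b • ((0 : V → ℝ), (Pi.single b 1 : V → ℝ), (0:ℝ)))
      + r • ((0 : V → ℝ), (0 : V → ℝ), (1:ℝ)) := by
    refine Prod.ext ?_ (Prod.ext ?_ ?_)
    · funext i
      simp [Prod.fst_sum, Prod.snd_sum, Finset.sum_apply, Pi.single_apply, mul_ite, mul_one,
        mul_zero]
    · funext i
      simp [Prod.fst_sum, Prod.snd_sum, Finset.sum_apply, Pi.single_apply, mul_ite, mul_one,
        mul_zero]
    · simp [Prod.fst_sum, Prod.snd_sum]
  rw [hdec]
  simp only [map_add, map_sum, map_smul, smul_eq_mul]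

lemma my_strong_duality (d : V → V → ℝ) (hd0 : ∀ a b, 0 ≤ d a b) (hdr : ∀ a, d a a = 0)
    (htri : ∀ a b c, d a b ≤ d a c + d c b)
    (p q : V → ℝ) (hp0 : ∀ a, 0 ≤ p a) (hp1 : ∀ a, p a ≤ 1)
    (hq0 : ∀ a, 0 ≤ q a) (hq1 : ∀ a, q a ≤ 1)
    (hps : ∑ a, p a = 1) (hqs : ∑ a, q a = 1)
    (t : ℝ) (ht : t < W1 d p q) :
    ∃ f : V → ℝ, (∀ a b, f b - f a ≤ d a b) ∧
      t < (∑ b, q b * f b) - ∑ a, p a * f a := by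
  have hVne : Nonempty V := by
    by_contra h
    rw [not_nonempty_iff] at h
    rw [Finset.univ_eq_empty, Finset.sum_empty] at hps
    exact one_ne_zero hps.symm
  set K : Set ((V → V → ℝ) × ℝ) := {w | (∀ a b, 0 ≤ w.1 a b) ∧ 0 ≤ w.2} with hKdef
  set S₀ : Set ((V → ℝ) × (V → ℝ) × ℝ) := myT d '' K with hS₀def
  have hKconv : Convex ℝ K := by
    intro w₁ hw₁ w₂ hw₂ a b ha hb _
    constructor
    · intro i j
      have : (a • w₁ + b • w₂).1 i j = a * w₁.1 i j + b * w₂.1 i j := rfl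
      rw [this]
      exact add_nonneg (mul_nonneg ha (hw₁.1 i j)) (mul_nonneg hb (hw₂.1 i j))
    · have : (a • w₁ + b • w₂).2 = a * w₁.2 + b * w₂.2 := rfl
      rw [this]
      exact add_nonneg (mul_nonneg ha hw₁.2) (mul_nonneg hb hw₂.2)
  have hS₀conv : Convex ℝ S₀ := hKconv.linear_image (myT d)
  have hnm := my_not_in_closure d hd0 p q hp1 hps t ht
  obtain ⟨y, u, hyu, huy⟩ :=
    geometric_hahn_banach_closed_point (hS₀conv.closure) isClosed_closure hnm
  -- 0 < u
  have h0S : (0 : (V → ℝ) × (V → ℝ) × ℝ) ∈ S₀ := by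
    refine ⟨0, ⟨fun a b => le_refl 0, le_refl 0⟩, ?_⟩
    exact map_zero (myT d)
  have hu0 : 0 < u := by
    have := hyu 0 (subset_closure h0S)
    simpa using this
  -- every element of the cone has y z ≤ 0
  have hyS : ∀ z ∈ S₀, y z ≤ 0 := by
    intro z hz
    by_contra h
    push_neg at h
    obtain ⟨w, hwK, rfl⟩ := hz
    set c : ℝ := (u + 1) / (y (myT d w)) with hcdef
    have hc0 : 0 ≤ c := le_of_lt (div_pos (by linarith) h)
    have hcw : c • w ∈ K := by
      constructor
      · intro i j
        have : (c • w).1 i j = c * w.1 i j := rfl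
        rw [this]; exact mul_nonneg hc0 (hwK.1 i j)
      · have : (c • w).2 = c * w.2 := rfl
        rw [this]; exact mul_nonneg hc0 hwK.2
    have hmem : myT d (c • w) ∈ S₀ := ⟨c • w, hcw, rfl⟩
    have := hyu _ (subset_closure hmem)
    rw [map_smul, map_smul, smul_eq_mul, hcdef, div_mul_cancel₀ _ (ne_of_gt h)] at this
    linarith
  -- shorthand
  set G : V → ℝ := fun a => y (Pi.single a 1, 0, 0) with hGdef
  set H : V → ℝ := fun b => y (0, Pi.single b 1, 0) with hHdef
  set lam : ℝ := y (0, 0, 1) with hlamdef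
  -- basic coordinate inequalities
  have hGH : ∀ a b, G a + H b + d a b * lam ≤ 0 := by
    intro a b
    set π₀ : V → V → ℝ := fun i j => (if i = a then (1:ℝ) else 0) * (if j = b then (1:ℝ) else 0)
      with hπ₀def
    have hπ₀K : ((π₀, 0) : (V → V → ℝ) × ℝ) ∈ K := by
      refine ⟨fun i j => ?_, le_refl 0⟩
      exact mul_nonneg (by positivity) (by positivity)
    have hT : myT d (π₀, 0) = ((Pi.single a 1 : V → ℝ), (Pi.single b 1 : V → ℝ), d a b) := by
      simp only [myT, LinearMap.coe_mk, AddHom.coe_mk]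
      refine Prod.ext ?_ (Prod.ext ?_ ?_)
      · funext i
        simp [hπ₀def, Pi.single_apply, ite_mul, mul_ite, eq_comm]
      · funext j
        simp [hπ₀def, Pi.single_apply, ite_mul, mul_ite, eq_comm]
      · simp [hπ₀def, mul_ite, ite_mul, mul_one, mul_zero]
    have hmem : myT d (π₀, 0) ∈ S₀ := ⟨(π₀, 0), hπ₀K, rfl⟩
    have hle := hyS _ hmem
    rw [hT, my_eval] at hle
    have e1 : (∑ i, (Pi.single a 1 : V → ℝ) i * y (Pi.single i 1, 0, 0)) = G a := by
      rw [Finset.sum_eq_single a]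
      · simp [hGdef]
      · intro i _ hne
        simp [Pi.single_apply, hne.symm]
      · intro h; exact absurd (mem_univ a) h
    have e2 : (∑ j, (Pi.single b 1 : V → ℝ) j * y (0, Pi.single j 1, 0)) = H b := by
      rw [Finset.sum_eq_single b]
      · simp [hHdef]
      · intro j _ hne
        simp [Pi.single_apply, hne.symm]
      · intro h; exact absurd (mem_univ b) h
    rw [e1, e2] at hle
    exact hle
  -- lam ≤ 0
  have hlam0 : lam ≤ 0 := by
    have hmem : myT d (0, 1) ∈ S₀ := ⟨(0, 1), ⟨fun a b => le_refl 0, zero_le_one⟩, rfl⟩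
    have hle := hyS _ hmem
    have hT : myT d ((0 : V → V → ℝ), (1:ℝ)) = ((0 : V → ℝ), (0 : V → ℝ), (1:ℝ)) := by
      simp only [myT, LinearMap.coe_mk, AddHom.coe_mk]
      refine Prod.ext (by funext a; simp) (Prod.ext (by funext b; simp) (by simp))
    rw [hT] at hle
    exact hle
  -- y (p, q, t) > 0 expanded
  have hpt : 0 < (∑ a, p a * G a) + (∑ b, q b * H b) + t * lam := by
    have h := my_eval y p q t
    have : 0 < y (p, q, t) := lt_trans hu0 huy
    rw [h] at this
    simpa [hGdef, hHdef, hlamdef] using this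
  -- lam < 0
  have hlamneg : lam < 0 := by
    rcases lt_or_eq_of_le hlam0 with h | h
    · exact h
    · exfalso
      have hGH0 : ∀ a b, G a + H b ≤ 0 := by
        intro a b
        have h2 := hGH a b
        rw [h, mul_zero, add_zero] at h2
        exact h2
      have key : (∑ a, p a * G a) + (∑ b, q b * H b) ≤ 0 := by
        have expand : (∑ a, p a * G a) + (∑ b, q b * H b)
            = ∑ a, ∑ b, (p a * q b) * (G a + H b) := by
          have e1 : ∀ a, ∑ b, (p a * q b) * (G a + H b)
              = p a * G a + p a * (∑ b, q b * H b) := by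
            intro a
            have : ∀ b, (p a * q b) * (G a + H b)
                = p a * G a * q b + p a * (q b * H b) := by intro b; ring
            rw [Finset.sum_congr rfl fun b _ => this b, Finset.sum_add_distrib,
              ← Finset.mul_sum, ← Finset.mul_sum, hqs, mul_one]
          rw [Finset.sum_congr rfl fun a _ => e1 a, Finset.sum_add_distrib,
            ← Finset.sum_mul, hps, one_mul]
        rw [expand]
        refine Finset.sum_nonpos fun a _ => Finset.sum_nonpos fun b _ => ?_
        exact mul_nonpos_iff.mpr (Or.inl ⟨mul_nonneg (hp0 a) (hq0 b), hGH0 a b⟩)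
      rw [h, mul_zero, add_zero] at hpt
      linarith
  -- normalize
  set lam' : ℝ := -lam with hlam'def
  have hlam' : 0 < lam' := neg_pos.mpr hlamneg
  set uhat : V → ℝ := fun a => -(G a / lam') with huhatdef
  set f₀ : V → ℝ := fun b => H b / lam' with hf₀def
  have hkey : ∀ a b, f₀ b ≤ uhat a + d a b := by
    intro a b
    have h1 : G a + H b ≤ lam' * d a b := by
      have h2 := hGH a b
      have h3 : d a b * lam = -(lam' * d a b) := by rw [hlam'def]; ring
      linarith
    have h4 : (G a + H b) / lam' ≤ d a b := by
      rw [div_le_iff₀ hlam']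
      linarith [mul_comm lam' (d a b)]
    have : f₀ b - uhat a = (G a + H b) / lam' := by
      simp only [hf₀def, huhatdef]
      ring
    have h5 : f₀ b - uhat a ≤ d a b := this.le.trans h4
    linarith
  -- Lipschitz regularization
  have hne : (Finset.univ : Finset V).Nonempty := Finset.univ_nonempty
  set f : V → ℝ := fun v => Finset.univ.inf' hne (fun c => uhat c + d c v) with hfdef
  have hf_le : ∀ a v, f v ≤ uhat a + d a v := fun a v =>
    Finset.inf'_le _ (mem_univ a)
  have hf_le_uhat : ∀ v, f v ≤ uhat v := by
    intro v
    have := hf_le v v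
    rwa [hdr v, add_zero] at this
  have hf₀_le : ∀ v, f₀ v ≤ f v := by
    intro v
    exact Finset.le_inf' hne _ fun c _ => hkey c v
  have hfLip : ∀ a b, f b - f a ≤ d a b := by
    intro a b
    obtain ⟨c, _, hceq⟩ := Finset.exists_mem_eq_inf' hne (fun c => uhat c + d c a)
    have h1 : f b ≤ uhat c + d c b := hf_le c b
    have h2 : d c b ≤ d c a + d a b := htri c b a
    have h3 : f a = uhat c + d c a := hceq
    linarith
  refine ⟨f, hfLip, ?_⟩
  -- the value bound
  have hval : t < (∑ b, q b * f₀ b) - ∑ a, p a * uhat a := by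
    have h1 : t * lam' < (∑ a, p a * G a) + (∑ b, q b * H b) := by
      have : t * lam = -(t * lam') := by rw [hlam'def]; ring
      linarith
    have h2 : t < ((∑ a, p a * G a) + (∑ b, q b * H b)) / lam' :=
      (lt_div_iff₀ hlam').mpr h1
    have h3 : ((∑ a, p a * G a) + (∑ b, q b * H b)) / lam'
        = (∑ b, q b * f₀ b) - ∑ a, p a * uhat a := by
      rw [add_div, Finset.sum_div, Finset.sum_div]
      simp only [hf₀def, huhatdef]
      rw [Finset.sum_congr rfl (fun a _ => by rw [mul_div_assoc] : ∀ a ∈ univ,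
        p a * G a / lam' = p a * (G a / lam'))]
      rw [Finset.sum_congr rfl (fun b _ => by rw [mul_div_assoc] : ∀ b ∈ univ,
        q b * H b / lam' = q b * (H b / lam'))]
      simp only [mul_neg, Finset.sum_neg_distrib]
      ring
    linarith [h3 ▸ h2]
  have hq_f : (∑ b, q b * f₀ b) ≤ ∑ b, q b * f b :=
    Finset.sum_le_sum fun b _ => mul_le_mul_of_nonneg_left (hf₀_le b) (hq0 b)
  have hp_f : (∑ a, p a * f a) ≤ ∑ a, p a * uhat a :=
    Finset.sum_le_sum fun a _ => mul_le_mul_of_nonneg_left (hf_le_uhat a) (hp0 a)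
  linarith

lemma my_weak_duality (d : V → V → ℝ) (f : V → ℝ) (hf : ∀ a b, f b - f a ≤ d a b)
    (p q : V → ℝ) (π : V → V → ℝ) (hπ0 : ∀ a b, 0 ≤ π a b)
    (h1 : ∀ a, ∑ b, π a b = p a) (h2 : ∀ b, ∑ a, π a b = q b) :
    (∑ b, q b * f b) - ∑ a, p a * f a ≤ ∑ a, ∑ b, d a b * π a b := by
  have e1 : ∑ b, q b * f b = ∑ a, ∑ b, π a b * f b := by
    have e : ∑ b, q b * f b = ∑ b, ∑ a, π a b * f b :=
      Finset.sum_congr rfl fun b _ => by rw [← h2 b, Finset.sum_mul]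
    rw [e, Finset.sum_comm]
  have e2 : ∑ a, p a * f a = ∑ a, ∑ b, π a b * f a :=
    Finset.sum_congr rfl fun a _ => by rw [← h1 a, Finset.sum_mul]
  calc (∑ b, q b * f b) - ∑ a, p a * f a
      = ∑ a, ∑ b, π a b * (f b - f a) := by
        rw [e1, e2, ← Finset.sum_sub_distrib]
        refine Finset.sum_congr rfl fun a _ => ?_
        rw [← Finset.sum_sub_distrib]
        exact Finset.sum_congr rfl fun b _ => by ring
    _ ≤ ∑ a, ∑ b, d a b * π a b := by
        refine Finset.sum_le_sum fun a _ => Finset.sum_le_sum fun b _ => ?_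
        rw [mul_comm (d a b)]
        exact mul_le_mul_of_nonneg_left (hf a b) (hπ0 a b)

end SD

/-- For `α ∈ (0,1]` and distinct `x, y`,
`(1/α)(1 - W₁(μ^α_x, μ^α_y)/d(x,y))` equals the infimum over 1-Lipschitz `f` of
`(1/α)(1 - ∇_{xy} f) + ∇_{xy}(L f)`. -/
theorem idle_curvature_inf_formula {V : Type*} [Fintype V] [DecidableEq V]
    (d : V → V → ℝ) (hd_nonneg : ∀ x y, 0 ≤ d x y)
    (hd_refl : ∀ x, d x x = 0)
    (hd_pos : ∀ x y, x ≠ y → 0 < d x y)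
    (hd_tri : ∀ x y z, d x y ≤ d x z + d z y)
    (μ : V → V → ℝ) (hμ01 : ∀ x y, 0 ≤ μ x y ∧ μ x y ≤ 1)
    (hμ : ∀ x, ∑ y, μ x y = 1) (hμdiag : ∀ x, μ x x = 0)
    (α : ℝ) (hα : α ∈ Set.Ioc (0 : ℝ) 1)
    (x y : V) (hxy : x ≠ y) :
    (1 / α) * (1 - W1 d (idleKernel μ α x) (idleKernel μ α y) / d x y) =
      sInf {v : ℝ | ∃ f : V → ℝ, (∀ a b, f b - f a ≤ d a b) ∧
        v = (1 / α) * (1 - (f y - f x) / d x y) +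
          (((f y - ∑ z, μ y z * f z) - (f x - ∑ z, μ x z * f z)) / d x y)} := by
  obtain ⟨hα0, hα1⟩ := hα
  have hdxy : 0 < d x y := hd_pos x y hxy
  -- pairing identity for the idle kernel
  have pairing : ∀ (a : V) (g : V → ℝ), ∑ z, idleKernel μ α a z * g z
      = (1 - α) * g a + α * ∑ z, μ a z * g z := by
    intro a g
    rw [← Finset.add_sum_erase _ _ (mem_univ a)]
    have h1 : idleKernel μ α a a * g a = (1 - α) * g a := by simp [idleKernel]
    have h2 : ∑ z ∈ univ.erase a, idleKernel μ α a z * g z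
        = α * ∑ z, μ a z * g z := by
      have e : ∀ z ∈ univ.erase a, idleKernel μ α a z * g z = α * (μ a z * g z) := by
        intro z hz
        have hz' : z ≠ a := (Finset.mem_erase.mp hz).1
        simp [idleKernel, hz', mul_assoc]
      rw [Finset.sum_congr rfl e, ← Finset.mul_sum,
        Finset.sum_erase_eq_sub (mem_univ a), hμdiag a, zero_mul, sub_zero]
    rw [h1, h2]
  have hsum : ∀ a, ∑ z, idleKernel μ α a z = 1 := by
    intro a
    have h := pairing a (fun _ => 1)
    simpa [hμ a] using h
  have h01 : ∀ a z, 0 ≤ idleKernel μ α a z ∧ idleKernel μ α a z ≤ 1 := by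
    intro a z
    unfold idleKernel
    split
    · constructor <;> linarith
    · obtain ⟨h1, h2⟩ := hμ01 a z
      constructor
      · exact mul_nonneg hα0.le h1
      · calc α * μ a z ≤ 1 * 1 := mul_le_mul hα1 h2 h1 zero_le_one
          _ = 1 := mul_one 1
  set p := idleKernel μ α x with hpdef
  set q := idleKernel μ α y with hqdef
  set W := W1 d p q with hWdef
  set Scost : Set ℝ := {s : ℝ | ∃ π : V → V → ℝ, (∀ a b, 0 ≤ π a b ∧ π a b ≤ 1) ∧
    (∀ a, ∑ b, π a b = p a) ∧ (∀ b, ∑ a, π a b = q b) ∧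
    s = ∑ a, ∑ b, d a b * π a b} with hScostdef
  have hWS : W = sInf Scost := rfl
  have hSne : Scost.Nonempty := by
    refine ⟨∑ a, ∑ b, d a b * (p a * q b), fun a b => p a * q b, ?_, ?_, ?_, rfl⟩
    · intro a b
      constructor
      · exact mul_nonneg (h01 x a).1 (h01 y b).1
      · calc p a * q b ≤ 1 * 1 :=
            mul_le_mul (h01 x a).2 (h01 y b).2 (h01 y b).1 zero_le_one
          _ = 1 := mul_one 1
    · intro a
      rw [← Finset.mul_sum, hsum y, mul_one]
    · intro b
      rw [← Finset.sum_mul, hsum x, one_mul]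
  have hSbdd : BddBelow Scost := by
    refine ⟨0, fun s hs => ?_⟩
    obtain ⟨π, hπ, _, _, rfl⟩ := hs
    exact Finset.sum_nonneg fun a _ => Finset.sum_nonneg fun b _ =>
      mul_nonneg (hd_nonneg a b) (hπ a b).1
  -- weak duality
  have hweak : ∀ f : V → ℝ, (∀ a b, f b - f a ≤ d a b) →
      (∑ b, q b * f b) - ∑ a, p a * f a ≤ W := by
    intro f hf
    rw [hWS]
    refine le_csInf hSne ?_
    rintro s ⟨π, hπ, h1, h2, rfl⟩
    exact my_weak_duality d f hf p q π (fun a b => (hπ a b).1) h1 h2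
  -- the value identity
  have hval : ∀ f : V → ℝ,
      (1 / α) * (1 - (f y - f x) / d x y) +
          (((f y - ∑ z, μ y z * f z) - (f x - ∑ z, μ x z * f z)) / d x y)
      = (1 / α) * (1 - ((∑ b, q b * f b) - ∑ a, p a * f a) / d x y) := by
    intro f
    rw [hqdef, hpdef, pairing y f, pairing x f]
    field_simp
    ring
  -- lower bound for the dual set
  have hlb : ∀ v ∈ {v : ℝ | ∃ f : V → ℝ, (∀ a b, f b - f a ≤ d a b) ∧
      v = (1 / α) * (1 - (f y - f x) / d x y) +
        (((f y - ∑ z, μ y z * f z) - (f x - ∑ z, μ x z * f z)) / d x y)},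
      (1 / α) * (1 - W / d x y) ≤ v := by
    rintro v ⟨f, hf, rfl⟩
    rw [hval f]
    have hD : (∑ b, q b * f b) - ∑ a, p a * f a ≤ W := hweak f hf
    have h2 : ((∑ b, q b * f b) - ∑ a, p a * f a) / d x y ≤ W / d x y := by
      rw [div_eq_mul_inv, div_eq_mul_inv]
      exact mul_le_mul_of_nonneg_right hD (inv_nonneg.mpr hdxy.le)
    have h3 : (0:ℝ) ≤ 1 / α := by positivity
    have := mul_le_mul_of_nonneg_left (by linarith : 1 - W / d x y
      ≤ 1 - ((∑ b, q b * f b) - ∑ a, p a * f a) / d x y) h3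
    linarith
  have hRne : {v : ℝ | ∃ f : V → ℝ, (∀ a b, f b - f a ≤ d a b) ∧
      v = (1 / α) * (1 - (f y - f x) / d x y) +
        (((f y - ∑ z, μ y z * f z) - (f x - ∑ z, μ x z * f z)) / d x y)}.Nonempty := by
    refine ⟨_, (fun _ => (0:ℝ)), fun a b => by simpa using hd_nonneg a b, rfl⟩
  apply le_antisymm
  · exact le_csInf hRne hlb
  · apply le_of_forall_pos_le_add
    intro ε hε
    set t : ℝ := W - ε * α * d x y with htdef
    have ht : t < W1 d p q := by
      rw [← hWdef, htdef]
      have : 0 < ε * α * d x y := by positivity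
      linarith
    obtain ⟨f, hfLip, hfval⟩ := my_strong_duality d hd_nonneg hd_refl hd_tri p q
      (fun a => (h01 x a).1) (fun a => (h01 x a).2)
      (fun a => (h01 y a).1) (fun a => (h01 y a).2)
      (hsum x) (hsum y) t ht
    have hmem : (1 / α) * (1 - (f y - f x) / d x y) +
        (((f y - ∑ z, μ y z * f z) - (f x - ∑ z, μ x z * f z)) / d x y)
        ∈ {v : ℝ | ∃ f : V → ℝ, (∀ a b, f b - f a ≤ d a b) ∧
        v = (1 / α) * (1 - (f y - f x) / d x y) +
          (((f y - ∑ z, μ y z * f z) - (f x - ∑ z, μ x z * f z)) / d x y)} :=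
      ⟨f, hfLip, rfl⟩
    have hle := csInf_le ⟨(1 / α) * (1 - W / d x y), hlb⟩ hmem
    refine hle.trans ?_
    rw [hval f]
    have hstep : 1 - ((∑ b, q b * f b) - ∑ a, p a * f a) / d x y ≤ 1 - t / d x y := by
      have : t / d x y ≤ ((∑ b, q b * f b) - ∑ a, p a * f a) / d x y := by
        rw [div_eq_mul_inv, div_eq_mul_inv]
        exact mul_le_mul_of_nonneg_right hfval.le (inv_nonneg.mpr hdxy.le)
      linarith
    have h3 : (0:ℝ) ≤ 1 / α := by positivity
    have h4 := mul_le_mul_of_nonneg_left hstep h3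
    have h5 : (1 / α) * (1 - t / d x y) = (1 / α) * (1 - W / d x y) + ε := by
      rw [htdef]
      field_simp
      ring
    linarith
end

section
/- Let V be a finite set, d an asymmetric distance function on V satisfying the triangle inequality, and μ a probability kernel on V with μ(x,x) = 0. For distinct x, y ∈ V, the function α ↦ κ^α(x,y) := 1 − W₁(μ^α_x, μ^α_y)/d(x,y) is concave on [0,1]. -/
open Finset

section Aux

variable {V : Type*} [Fintype V] [DecidableEq V]

/-- The set of coupling costs appearing in `W1`. -/
def costSet (d : V → V → ℝ) (μ ν : V → ℝ) : Set ℝ :=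
  {s : ℝ | ∃ π : V → V → ℝ, (∀ x y, 0 ≤ π x y ∧ π x y ≤ 1) ∧
    (∀ x, ∑ y, π x y = μ x) ∧ (∀ y, ∑ x, π x y = ν y) ∧
    s = ∑ x, ∑ y, d x y * π x y}

lemma W1_eq (d : V → V → ℝ) (μ ν : V → ℝ) : W1 d μ ν = sInf (costSet d μ ν) := rfl

lemma idleKernel_sum (μ : V → V → ℝ) (hμ : ∀ x, ∑ y, μ x y = 1)
    (hμdiag : ∀ x, μ x x = 0) (α : ℝ) (z : V) :
    ∑ b, idleKernel μ α z b = 1 := by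
  unfold idleKernel
  rw [← Finset.add_sum_erase _ _ (Finset.mem_univ z), if_pos rfl]
  have h1 : ∑ b ∈ Finset.univ.erase z, (if b = z then 1 - α else α * μ z b)
      = α * ∑ b ∈ Finset.univ.erase z, μ z b := by
    rw [Finset.mul_sum]
    refine Finset.sum_congr rfl fun b hb => ?_
    rw [if_neg (Finset.mem_erase.mp hb).1]
  rw [h1, Finset.sum_erase _ (hμdiag z), hμ z]
  ring

lemma idleKernel_mem_Icc (μ : V → V → ℝ) (hμ01 : ∀ x y, 0 ≤ μ x y ∧ μ x y ≤ 1)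
    {α : ℝ} (hα : α ∈ Set.Icc (0:ℝ) 1) (z b : V) :
    0 ≤ idleKernel μ α z b ∧ idleKernel μ α z b ≤ 1 := by
  obtain ⟨hα0, hα1⟩ := hα
  unfold idleKernel
  by_cases h : b = z
  · simp [h]; constructor <;> linarith
  · rw [if_neg h]
    have := hμ01 z b
    constructor
    · exact mul_nonneg hα0 this.1
    · calc α * μ z b ≤ 1 * 1 := by
            apply mul_le_mul hα1 this.2 this.1 zero_le_one
        _ = 1 := by ring

lemma costSet_nonempty (d : V → V → ℝ) (μ : V → V → ℝ)
    (hμ01 : ∀ x y, 0 ≤ μ x y ∧ μ x y ≤ 1)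
    (hμ : ∀ x, ∑ y, μ x y = 1) (hμdiag : ∀ x, μ x x = 0)
    {α : ℝ} (hα : α ∈ Set.Icc (0:ℝ) 1) (x y : V) :
    (costSet d (idleKernel μ α x) (idleKernel μ α y)).Nonempty := by
  refine ⟨_, fun a b => idleKernel μ α x a * idleKernel μ α y b, ?_, ?_, ?_, rfl⟩
  · intro a b
    have h1 := idleKernel_mem_Icc μ hμ01 hα x a
    have h2 := idleKernel_mem_Icc μ hμ01 hα y b
    exact ⟨mul_nonneg h1.1 h2.1, by
      calc idleKernel μ α x a * idleKernel μ α y b ≤ 1 * 1 :=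
            mul_le_mul h1.2 h2.2 h2.1 zero_le_one
        _ = 1 := by ring⟩
  · intro a
    rw [← Finset.mul_sum, idleKernel_sum μ hμ hμdiag α y, mul_one]
  · intro b
    rw [← Finset.sum_mul, idleKernel_sum μ hμ hμdiag α x, one_mul]

lemma costSet_bddBelow (d : V → V → ℝ) (hd_nonneg : ∀ x y, 0 ≤ d x y)
    (μ ν : V → ℝ) : BddBelow (costSet d μ ν) := by
  refine ⟨0, fun s hs => ?_⟩
  obtain ⟨π, hπ, -, -, rfl⟩ := hs
  apply Finset.sum_nonneg
  intro a _
  apply Finset.sum_nonneg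
  intro b _
  exact mul_nonneg (hd_nonneg a b) (hπ a b).1

lemma idleKernel_combo (μ : V → V → ℝ) {a b α β : ℝ} (hab : a + b = 1) (z w : V) :
    idleKernel μ (a * α + b * β) z w
      = a * idleKernel μ α z w + b * idleKernel μ β z w := by
  unfold idleKernel
  by_cases h : w = z
  · simp [h]; linarith
  · rw [if_neg h, if_neg h, if_neg h]; ring

lemma costSet_combo {d : V → V → ℝ} {μ₁ ν₁ μ₂ ν₂ : V → ℝ} {s₁ s₂ a b : ℝ}
    (ha : 0 ≤ a) (hb : 0 ≤ b) (hab : a + b = 1)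
    (h₁ : s₁ ∈ costSet d μ₁ ν₁) (h₂ : s₂ ∈ costSet d μ₂ ν₂) :
    a * s₁ + b * s₂ ∈ costSet d (fun z => a * μ₁ z + b * μ₂ z)
      (fun z => a * ν₁ z + b * ν₂ z) := by
  obtain ⟨π₁, hπ₁, hr₁, hc₁, rfl⟩ := h₁
  obtain ⟨π₂, hπ₂, hr₂, hc₂, rfl⟩ := h₂
  refine ⟨fun u v => a * π₁ u v + b * π₂ u v, ?_, ?_, ?_, ?_⟩
  · intro u v
    constructor
    · exact add_nonneg (mul_nonneg ha (hπ₁ u v).1) (mul_nonneg hb (hπ₂ u v).1)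
    · calc a * π₁ u v + b * π₂ u v ≤ a * 1 + b * 1 := by
            apply add_le_add (mul_le_mul_of_nonneg_left (hπ₁ u v).2 ha)
              (mul_le_mul_of_nonneg_left (hπ₂ u v).2 hb)
        _ = 1 := by linarith
  · intro u
    simp only [Finset.sum_add_distrib, ← Finset.mul_sum, hr₁ u, hr₂ u]
  · intro v
    simp only [Finset.sum_add_distrib, ← Finset.mul_sum, hc₁ v, hc₂ v]
  · rw [Finset.mul_sum, Finset.mul_sum, ← Finset.sum_add_distrib]
    refine Finset.sum_congr rfl fun u _ => ?_
    rw [Finset.mul_sum, Finset.mul_sum, ← Finset.sum_add_distrib]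
    refine Finset.sum_congr rfl fun v _ => ?_
    ring

end Aux

/-- the function `α ↦ κ^α(x,y) = 1 - W₁(μ^α_x, μ^α_y)/d(x,y)` is
concave on `[0,1]`. -/
theorem idle_curvature_concave {V : Type*} [Fintype V] [DecidableEq V]
    (d : V → V → ℝ) (hd_nonneg : ∀ x y, 0 ≤ d x y)
    (hd_refl : ∀ x, d x x = 0)
    (hd_pos : ∀ x y, x ≠ y → 0 < d x y)
    (hd_tri : ∀ x y z, d x y ≤ d x z + d z y)
    (μ : V → V → ℝ) (hμ01 : ∀ x y, 0 ≤ μ x y ∧ μ x y ≤ 1)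
    (hμ : ∀ x, ∑ y, μ x y = 1) (hμdiag : ∀ x, μ x x = 0)
    (x y : V) (hxy : x ≠ y) :
    ConcaveOn ℝ (Set.Icc (0 : ℝ) 1)
      (fun α : ℝ => 1 - W1 d (idleKernel μ α x) (idleKernel μ α y) / d x y) := by
  have hD : 0 < d x y := hd_pos x y hxy
  refine ⟨convex_Icc 0 1, ?_⟩
  intro α hα β hβ a b ha hb hab
  simp only [smul_eq_mul]
  set Wα := W1 d (idleKernel μ α x) (idleKernel μ α y) with hWα
  set Wβ := W1 d (idleKernel μ β x) (idleKernel μ β y) with hWβ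
  set Wc := W1 d (idleKernel μ (a * α + b * β) x) (idleKernel μ (a * α + b * β) y) with hWc
  -- convexity of W1 in α
  have key : Wc ≤ a * Wα + b * Wβ := by
    apply le_of_forall_pos_le_add
    intro ε hε
    have hne₁ := costSet_nonempty d μ hμ01 hμ hμdiag hα x y
    have hne₂ := costSet_nonempty d μ hμ01 hμ hμdiag hβ x y
    obtain ⟨s₁, hs₁, hs₁'⟩ := Real.lt_sInf_add_pos hne₁ hε
    obtain ⟨s₂, hs₂, hs₂'⟩ := Real.lt_sInf_add_pos hne₂ hε
    have hmem := costSet_combo ha hb hab hs₁ hs₂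
    have hmemc : a * s₁ + b * s₂ ∈
        costSet d (idleKernel μ (a * α + b * β) x) (idleKernel μ (a * α + b * β) y) := by
      have e1 : idleKernel μ (a * α + b * β) x
          = fun z => a * idleKernel μ α x z + b * idleKernel μ β x z := by
        funext w; exact idleKernel_combo μ hab x w
      have e2 : idleKernel μ (a * α + b * β) y
          = fun z => a * idleKernel μ α y z + b * idleKernel μ β y z := by
        funext w; exact idleKernel_combo μ hab y w
      rw [e1, e2]
      exact hmem
    have h3 : Wc ≤ a * s₁ + b * s₂ := by
      rw [hWc, W1_eq]
      exact csInf_le (costSet_bddBelow d hd_nonneg _ _) hmemc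
    have h4 : a * s₁ ≤ a * (Wα + ε) := by
      apply mul_le_mul_of_nonneg_left _ ha
      rw [hWα, W1_eq]; exact hs₁'.le
    have h5 : b * s₂ ≤ b * (Wβ + ε) := by
      apply mul_le_mul_of_nonneg_left _ hb
      rw [hWβ, W1_eq]; exact hs₂'.le
    nlinarith
  have h6 : Wc / d x y ≤ (a * Wα + b * Wβ) / d x y := by gcongr
  have heq : (a * Wα + b * Wβ) / d x y = a * (Wα / d x y) + b * (Wβ / d x y) := by ring
  linarith
end

section
/- Let V be a finite set, d an asymmetric distance function on V satisfying the triangle inequality, and μ a probability kernel on V with μ(x,x) = 0. For distinct x, y ∈ V, the function α ↦ κ^α(x,y)/α, where κ^α(x,y) := 1 − W₁(μ^α_x, μ^α_y)/d(x,y), is non-increasing on (0,1]. -/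
open Finset

/-- the function `α ↦ κ^α(x,y)/α`, where
`κ^α(x,y) = 1 - W₁(μ^α_x, μ^α_y)/d(x,y)`, is non-increasing on `(0,1]`. -/
theorem idle_curvature_div_antitone {V : Type*} [Fintype V] [DecidableEq V]
    (d : V → V → ℝ) (hd_nonneg : ∀ x y, 0 ≤ d x y)
    (hd_refl : ∀ x, d x x = 0)
    (hd_pos : ∀ x y, x ≠ y → 0 < d x y)
    (hd_tri : ∀ x y z, d x y ≤ d x z + d z y)
    (μ : V → V → ℝ) (hμ01 : ∀ x y, 0 ≤ μ x y ∧ μ x y ≤ 1)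
    (hμ : ∀ x, ∑ y, μ x y = 1) (hμdiag : ∀ x, μ x x = 0)
    (x y : V) (hxy : x ≠ y) :
    ∀ α ∈ Set.Ioc (0 : ℝ) 1, ∀ β ∈ Set.Ioc (0 : ℝ) 1, α ≤ β →
      (1 - W1 d (idleKernel μ β x) (idleKernel μ β y) / d x y) / β ≤
        (1 - W1 d (idleKernel μ α x) (idleKernel μ α y) / d x y) / α := by
  intro α hα β hβ hαβ
  obtain ⟨hα0, hα1⟩ := hα
  obtain ⟨hβ0, hβ1⟩ := hβ
  set t : ℝ := α / β with htdef
  have ht0 : 0 < t := div_pos hα0 hβ0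
  have ht1 : t ≤ 1 := (div_le_one hβ0).mpr hαβ
  have htβ : t * β = α := div_mul_cancel₀ α (ne_of_gt hβ0)
  have hDpos : 0 < d x y := hd_pos x y hxy
  -- basic facts about the idle kernel
  have hidle01 : ∀ γ : ℝ, 0 < γ → γ ≤ 1 → ∀ z v,
      0 ≤ idleKernel μ γ z v ∧ idleKernel μ γ z v ≤ 1 := by
    intro γ hγ0 hγ1 z v
    unfold idleKernel
    by_cases h : v = z
    · rw [if_pos h]; constructor <;> linarith
    · rw [if_neg h]
      refine ⟨mul_nonneg hγ0.le (hμ01 z v).1, ?_⟩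
      calc γ * μ z v ≤ 1 * 1 := by
            exact mul_le_mul hγ1 (hμ01 z v).2 (hμ01 z v).1 one_pos.le
        _ = 1 := by ring
  have hidle_sum : ∀ γ : ℝ, ∀ z, ∑ v, idleKernel μ γ z v = 1 := by
    intro γ z
    have hpt : ∀ v, idleKernel μ γ z v = (if v = z then 1 - γ else 0) + γ * μ z v := by
      intro v
      unfold idleKernel
      by_cases h : v = z
      · simp [h, hμdiag]
      · simp [h]
    rw [Finset.sum_congr rfl (fun v _ => hpt v), Finset.sum_add_distrib,
      Finset.sum_ite_eq' Finset.univ z (fun _ => 1 - γ), ← Finset.mul_sum, hμ]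
    simp
  -- the coupling sets
  set Sα : Set ℝ := {s : ℝ | ∃ π : V → V → ℝ, (∀ u v, 0 ≤ π u v ∧ π u v ≤ 1) ∧
    (∀ u, ∑ v, π u v = idleKernel μ α x u) ∧ (∀ v, ∑ u, π u v = idleKernel μ α y v) ∧
    s = ∑ u, ∑ v, d u v * π u v} with hSα
  set Sβ : Set ℝ := {s : ℝ | ∃ π : V → V → ℝ, (∀ u v, 0 ≤ π u v ∧ π u v ≤ 1) ∧
    (∀ u, ∑ v, π u v = idleKernel μ β x u) ∧ (∀ v, ∑ u, π u v = idleKernel μ β y v) ∧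
    s = ∑ u, ∑ v, d u v * π u v} with hSβ
  have hW1α : W1 d (idleKernel μ α x) (idleKernel μ α y) = sInf Sα := rfl
  have hW1β : W1 d (idleKernel μ β x) (idleKernel μ β y) = sInf Sβ := rfl
  -- Sβ is nonempty via the product coupling
  have hβne : Sβ.Nonempty := by
    refine ⟨_, ⟨fun u v => idleKernel μ β x u * idleKernel μ β y v, ?_, ?_, ?_, rfl⟩⟩
    · intro u v
      obtain ⟨h1, h2⟩ := hidle01 β hβ0 hβ1 x u
      obtain ⟨h3, h4⟩ := hidle01 β hβ0 hβ1 y v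
      exact ⟨mul_nonneg h1 h3, mul_le_one₀ h2 h3 h4⟩
    · intro u
      rw [← Finset.mul_sum, hidle_sum, mul_one]
    · intro v
      rw [← Finset.sum_mul, hidle_sum, one_mul]
  -- Sα is bounded below by 0
  have hbddα : BddBelow Sα := by
    refine ⟨0, fun s hs => ?_⟩
    obtain ⟨π, hπ01, -, -, hval⟩ := hs
    rw [hval]
    exact Finset.sum_nonneg fun u _ => Finset.sum_nonneg fun v _ =>
      mul_nonneg (hd_nonneg u v) (hπ01 u v).1
  -- mixing: from any coupling in Sβ we get one in Sα
  have hmix : ∀ s ∈ Sβ, ((1 - t) * d x y + t * s) ∈ Sα := by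
    intro s hs
    obtain ⟨π, hπ01, hrow, hcol, hval⟩ := hs
    refine ⟨fun u v => (1 - t) * (if u = x ∧ v = y then 1 else 0) + t * π u v,
      ?_, ?_, ?_, ?_⟩
    · intro u v
      dsimp only
      constructor
      · apply add_nonneg
        · apply mul_nonneg (by linarith)
          split <;> norm_num
        · exact mul_nonneg ht0.le (hπ01 u v).1
      · have h1 : (if u = x ∧ v = y then (1:ℝ) else 0) ≤ 1 := by split <;> norm_num
        have h2 := (hπ01 u v).2
        nlinarith
    · intro u
      have h1 : ∑ v, (if u = x ∧ v = y then (1:ℝ) else 0) = if u = x then 1 else 0 := by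
        by_cases h : u = x <;> simp [h, Finset.sum_ite_eq' Finset.univ y (fun _ => (1:ℝ))]
      rw [Finset.sum_add_distrib, ← Finset.mul_sum, h1, ← Finset.mul_sum, hrow u]
      unfold idleKernel
      by_cases h : u = x
      · rw [if_pos h, if_pos h, if_pos h]; nlinarith
      · rw [if_neg h, if_neg h, if_neg h, mul_zero, zero_add, ← mul_assoc, htβ]
    · intro v
      have h1 : ∑ u, (if u = x ∧ v = y then (1:ℝ) else 0) = if v = y then 1 else 0 := by
        by_cases h : v = y <;> simp [h, Finset.sum_ite_eq' Finset.univ x (fun _ => (1:ℝ))]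
      rw [Finset.sum_add_distrib, ← Finset.mul_sum, h1, ← Finset.mul_sum, hcol v]
      unfold idleKernel
      by_cases h : v = y
      · rw [if_pos h, if_pos h, if_pos h]; nlinarith
      · rw [if_neg h, if_neg h, if_neg h, mul_zero, zero_add, ← mul_assoc, htβ]
    · have hind : ∑ u, ∑ v, d u v * (if u = x ∧ v = y then (1:ℝ) else 0) = d x y := by
        have : ∀ u, ∑ v, d u v * (if u = x ∧ v = y then (1:ℝ) else 0)
            = if u = x then d u y else 0 := by
          intro u
          by_cases h : u = x
          · simp [h, mul_ite]
          · simp [h]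
        rw [Finset.sum_congr rfl (fun u _ => this u)]
        simp
      have expand : ∀ u v, d u v * ((1 - t) * (if u = x ∧ v = y then (1:ℝ) else 0) + t * π u v)
          = (1 - t) * (d u v * (if u = x ∧ v = y then (1:ℝ) else 0)) + t * (d u v * π u v) := by
        intro u v; ring
      calc (1 - t) * d x y + t * s
          = (1 - t) * (∑ u, ∑ v, d u v * (if u = x ∧ v = y then (1:ℝ) else 0))
            + t * (∑ u, ∑ v, d u v * π u v) := by rw [hind, hval]
        _ = ∑ u, ∑ v, ((1 - t) * (d u v * (if u = x ∧ v = y then (1:ℝ) else 0))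
            + t * (d u v * π u v)) := by
            rw [Finset.mul_sum, Finset.mul_sum, ← Finset.sum_add_distrib]
            refine Finset.sum_congr rfl fun u _ => ?_
            rw [Finset.mul_sum, Finset.mul_sum, ← Finset.sum_add_distrib]
        _ = ∑ u, ∑ v, d u v * ((1 - t) * (if u = x ∧ v = y then (1:ℝ) else 0) + t * π u v) := by
            refine Finset.sum_congr rfl fun u _ => Finset.sum_congr rfl fun v _ => ?_
            rw [expand]
  -- key inequality
  have hαne : Sα.Nonempty := ⟨_, hmix _ hβne.choose_spec⟩
  have key : sInf Sα ≤ (1 - t) * d x y + t * sInf Sβ := by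
    have h2 : (sInf Sα - (1 - t) * d x y) / t ≤ sInf Sβ := by
      refine le_csInf hβne fun s hs => ?_
      have h3 := csInf_le hbddα (hmix s hs)
      rw [div_le_iff₀ ht0]
      nlinarith
    rw [div_le_iff₀ ht0] at h2
    nlinarith
  rw [hW1α, hW1β]
  set a := sInf Sα
  set b := sInf Sβ
  have key2 : a * β ≤ (β - α) * d x y + b * α := by
    have hmul := mul_le_mul_of_nonneg_right key hβ0.le
    have he : ((1 - t) * d x y + t * b) * β = (β - α) * d x y + b * α := by
      rw [← htβ]; ring
    linarith
  have h3 : a * β / d x y ≤ (β - α) + b * α / d x y := by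
    rw [div_le_iff₀ hDpos, add_mul, div_mul_cancel₀ _ (ne_of_gt hDpos)]
    linarith
  rw [div_le_div_iff₀ hβ0 hα0, sub_mul, sub_mul, div_mul_eq_mul_div, div_mul_eq_mul_div]
  linarith
end

section
/- Let V be a finite set, d an asymmetric distance function on V satisfying the triangle inequality, and μ a probability kernel on V with μ(x,x) = 0. For distinct x, y ∈ V, the limit κ^I(x,y) := lim_{α → 0⁺} κ^α(x,y)/α exists (as a real number), where κ^α(x,y) := 1 − W₁(μ^α_x, μ^α_y)/d(x,y), and it satisfies κ^I(x,y) ≥ κ¹(x,y), where κ¹(x,y) := 1 − W₁(μ¹_x, μ¹_y)/d(x,y) is the value at α = 1. -/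
open Finset

namespace IdleAux

variable {V : Type*} [Fintype V] [DecidableEq V]

def cSet (d : V → V → ℝ) (μ ν : V → ℝ) : Set ℝ :=
  {s : ℝ | ∃ π : V → V → ℝ, (∀ x y, 0 ≤ π x y ∧ π x y ≤ 1) ∧
    (∀ x, ∑ y, π x y = μ x) ∧ (∀ y, ∑ x, π x y = ν y) ∧
    s = ∑ x, ∑ y, d x y * π x y}

lemma W1_eq (d : V → V → ℝ) (μ ν : V → ℝ) : W1 d μ ν = sInf (cSet d μ ν) := rfl

lemma idle_sum (μ : V → V → ℝ) (hμ : ∀ x, ∑ y, μ x y = 1) (hμdiag : ∀ x, μ x x = 0)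
    (α : ℝ) (x : V) : ∑ u, idleKernel μ α x u = 1 := by
  have h : ∀ u, idleKernel μ α x u = (if u = x then 1 - α else 0) + α * μ x u := by
    intro u
    unfold idleKernel
    by_cases h : u = x
    · simp [h, hμdiag x]
    · simp [h]
  simp only [h]
  rw [Finset.sum_add_distrib, Finset.sum_ite_eq' Finset.univ x (fun _ => (1 : ℝ) - α),
    ← Finset.mul_sum, hμ x]
  simp

lemma idle_wsum (μ : V → V → ℝ) (c : V → ℝ) (α : ℝ) (x : V) (hc : c x = 0) :
    ∑ u, c u * idleKernel μ α x u = α * ∑ u, c u * μ x u := by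
  rw [Finset.mul_sum]
  refine Finset.sum_congr rfl fun u _ => ?_
  unfold idleKernel
  by_cases h : u = x
  · simp [h, hc]
  · simp [h]; ring

lemma idle_mem_Icc (μ : V → V → ℝ) (hμ01 : ∀ x y, 0 ≤ μ x y ∧ μ x y ≤ 1)
    (α : ℝ) (hα : 0 ≤ α) (hα1 : α ≤ 1) (x u : V) :
    0 ≤ idleKernel μ α x u ∧ idleKernel μ α x u ≤ 1 := by
  unfold idleKernel
  by_cases h : u = x
  · simp [h]; constructor <;> linarith
  · simp [h]
    constructor
    · exact mul_nonneg hα (hμ01 x u).1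
    · calc α * μ x u ≤ 1 * 1 := by
            apply mul_le_mul hα1 (hμ01 x u).2 (hμ01 x u).1 zero_le_one
        _ = 1 := by ring

/-- the product coupling shows `cSet` is nonempty for `α ∈ [0,1]`. -/
lemma cSet_nonempty (d : V → V → ℝ) (μ : V → V → ℝ)
    (hμ01 : ∀ x y, 0 ≤ μ x y ∧ μ x y ≤ 1)
    (hμ : ∀ x, ∑ y, μ x y = 1) (hμdiag : ∀ x, μ x x = 0)
    (α : ℝ) (hα : 0 ≤ α) (hα1 : α ≤ 1) (x y : V) :
    (cSet d (idleKernel μ α x) (idleKernel μ α y)).Nonempty := by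
  refine ⟨_, fun u v => idleKernel μ α x u * idleKernel μ α y v, ?_, ?_, ?_, rfl⟩
  · intro u v
    obtain ⟨h1, h2⟩ := idle_mem_Icc μ hμ01 α hα hα1 x u
    obtain ⟨h3, h4⟩ := idle_mem_Icc μ hμ01 α hα hα1 y v
    exact ⟨mul_nonneg h1 h3, mul_le_one₀ h2 h3 h4⟩
  · intro u
    rw [← Finset.mul_sum, idle_sum μ hμ hμdiag α y, mul_one]
  · intro v
    rw [← Finset.sum_mul, idle_sum μ hμ hμdiag α x, one_mul]

/-- the deterministic coupling at `α = 0`. -/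
lemma delta_mem (d : V → V → ℝ) (μ : V → V → ℝ) (x y : V) :
    d x y ∈ cSet d (idleKernel μ 0 x) (idleKernel μ 0 y) := by
  refine ⟨fun u v => if u = x then (if v = y then 1 else 0) else 0, ?_, ?_, ?_, ?_⟩
  · intro u v; dsimp only; split_ifs <;> norm_num
  · intro u
    unfold idleKernel
    by_cases h : u = x <;> simp [h]
  · intro v
    unfold idleKernel
    by_cases h : v = y <;> simp [h]
  · rw [Finset.sum_eq_single x]
    · rw [Finset.sum_eq_single y] <;> simp +contextual
    · intro b _ hb; simp [hb]
    · simp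

/-- lower bound: every coupling cost is at least `d x y - α*(A+B)`. -/
lemma cost_lower (d : V → V → ℝ) (hd_refl : ∀ x, d x x = 0)
    (hd_tri : ∀ x y z, d x y ≤ d x z + d z y)
    (μ : V → V → ℝ) (α : ℝ) (x y : V) (s : ℝ)
    (hs : s ∈ cSet d (idleKernel μ α x) (idleKernel μ α y))
    (hμ : ∀ x, ∑ y, μ x y = 1) (hμdiag : ∀ x, μ x x = 0) :
    d x y - α * ((∑ u, d x u * μ x u) + (∑ v, d v y * μ y v)) ≤ s := by
  obtain ⟨π, hπ01, hrow, hcol, rfl⟩ := hs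
  have key : ∑ u, ∑ v, (d x y - d x u - d v y) * π u v
      ≤ ∑ u, ∑ v, d u v * π u v := by
    refine Finset.sum_le_sum fun u _ => Finset.sum_le_sum fun v _ => ?_
    apply mul_le_mul_of_nonneg_right _ (hπ01 u v).1
    have h1 := hd_tri x y u
    have h2 := hd_tri u y v
    linarith
  refine le_trans (le_of_eq ?_) key
  have hsplit : ∀ u, ∑ v, (d x y - d x u - d v y) * π u v
      = (d x y - d x u) * idleKernel μ α x u - ∑ v, d v y * π u v := by
    intro u
    have : ∀ v, (d x y - d x u - d v y) * π u v
        = (d x y - d x u) * π u v - d v y * π u v := fun v => by ring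
    rw [Finset.sum_congr rfl fun v _ => this v, Finset.sum_sub_distrib,
      ← Finset.mul_sum, hrow u]
  rw [Finset.sum_congr rfl fun u _ => hsplit u, Finset.sum_sub_distrib]
  have h1 : ∑ u, (d x y - d x u) * idleKernel μ α x u
      = d x y - α * ∑ u, d x u * μ x u := by
    have : ∀ u, (d x y - d x u) * idleKernel μ α x u
        = d x y * idleKernel μ α x u - d x u * idleKernel μ α x u := fun u => by ring
    rw [Finset.sum_congr rfl fun u _ => this u, Finset.sum_sub_distrib,
      ← Finset.mul_sum, idle_sum μ hμ hμdiag α x,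
      idle_wsum μ (fun u => d x u) α x (hd_refl x), mul_one]
  have h2 : ∑ u, ∑ v, d v y * π u v = α * ∑ v, d v y * μ y v := by
    rw [Finset.sum_comm]
    have : ∀ v, ∑ u, d v y * π u v = d v y * idleKernel μ α y v := by
      intro v; rw [← Finset.mul_sum, hcol v]
    rw [Finset.sum_congr rfl fun v _ => this v,
      idle_wsum μ (fun v => d v y) α y (hd_refl y)]
  rw [h1, h2]; ring

lemma cSet_bddBelow (d : V → V → ℝ) (hd_refl : ∀ x, d x x = 0)
    (hd_tri : ∀ x y z, d x y ≤ d x z + d z y)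
    (μ : V → V → ℝ) (α : ℝ) (x y : V)
    (hμ : ∀ x, ∑ y, μ x y = 1) (hμdiag : ∀ x, μ x x = 0) :
    BddBelow (cSet d (idleKernel μ α x) (idleKernel μ α y)) :=
  ⟨_, fun s hs => cost_lower d hd_refl hd_tri μ α x y s hs hμ hμdiag⟩

/-- mixing a coupling at parameter `β` with the deterministic coupling. -/
lemma mix_mem (d : V → V → ℝ) (μ : V → V → ℝ) (x y : V) (t β s : ℝ)
    (ht0 : 0 ≤ t) (ht1 : t ≤ 1)
    (hs : s ∈ cSet d (idleKernel μ β x) (idleKernel μ β y)) :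
    (1 - t) * d x y + t * s ∈ cSet d (idleKernel μ (t * β) x) (idleKernel μ (t * β) y) := by
  obtain ⟨π, hπ01, hrow, hcol, rfl⟩ := hs
  set e : V → V → ℝ := fun u v => if u = x then (if v = y then 1 else 0) else 0 with he
  have he01 : ∀ u v, 0 ≤ e u v ∧ e u v ≤ 1 := by
    intro u v; simp only [he]; split_ifs <;> norm_num
  refine ⟨fun u v => (1 - t) * e u v + t * π u v, ?_, ?_, ?_, ?_⟩
  · intro u v
    dsimp only
    have h1 := (he01 u v).1
    have h2 := (he01 u v).2
    have h3 := (hπ01 u v).1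
    have h4 := (hπ01 u v).2
    have k1 : (1 - t) * e u v ≤ (1 - t) * 1 :=
      mul_le_mul_of_nonneg_left h2 (by linarith)
    have k2 : t * π u v ≤ t * 1 := mul_le_mul_of_nonneg_left h4 ht0
    constructor
    · have : 0 ≤ (1 - t) * e u v := mul_nonneg (by linarith) h1
      have : 0 ≤ t * π u v := mul_nonneg ht0 h3
      linarith
    · linarith
  · intro u
    dsimp only
    rw [Finset.sum_add_distrib, ← Finset.mul_sum, ← Finset.mul_sum, hrow u]
    have hesum : ∑ v, e u v = if u = x then 1 else 0 := by
      simp only [he]; by_cases h : u = x <;> simp [h]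
    rw [hesum]
    unfold idleKernel
    by_cases h : u = x <;> simp [h] <;> ring
  · intro v
    dsimp only
    rw [Finset.sum_add_distrib, ← Finset.mul_sum, ← Finset.mul_sum, hcol v]
    have hesum : ∑ u, e u v = if v = y then 1 else 0 := by
      simp only [he]
      rw [Finset.sum_eq_single x]
      · simp
      · intro b _ hb; simp [hb]
      · simp
    rw [hesum]
    unfold idleKernel
    by_cases h : v = y <;> simp [h] <;> ring
  · have hd : ∑ u, ∑ v, d u v * e u v = d x y := by
      simp only [he]
      rw [Finset.sum_eq_single x]
      · rw [Finset.sum_eq_single y] <;> simp +contextual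
      · intro b _ hb; simp [hb]
      · simp
    dsimp only
    have : ∀ u, ∑ v, d u v * ((1 - t) * e u v + t * π u v)
        = (1 - t) * ∑ v, d u v * e u v + t * ∑ v, d u v * π u v := by
      intro u
      rw [Finset.mul_sum, Finset.mul_sum, ← Finset.sum_add_distrib]
      exact Finset.sum_congr rfl fun v _ => by ring
    rw [Finset.sum_congr rfl fun u _ => this u, Finset.sum_add_distrib,
      ← Finset.mul_sum, ← Finset.mul_sum, hd]

end IdleAux

/-- the limit `κ^I(x,y) = lim_{α → 0⁺} κ^α(x,y)/α` exists, where
`κ^α(x,y) = 1 - W₁(μ^α_x, μ^α_y)/d(x,y)`, and it is at least `κ¹(x,y)`, the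
value of `κ^α(x,y)/α` at `α = 1`. -/
theorem idle_curvature_limit_exists_and_ge {V : Type*} [Fintype V] [DecidableEq V]
    (d : V → V → ℝ) (hd_nonneg : ∀ x y, 0 ≤ d x y)
    (hd_refl : ∀ x, d x x = 0)
    (hd_pos : ∀ x y, x ≠ y → 0 < d x y)
    (hd_tri : ∀ x y z, d x y ≤ d x z + d z y)
    (μ : V → V → ℝ) (hμ01 : ∀ x y, 0 ≤ μ x y ∧ μ x y ≤ 1)
    (hμ : ∀ x, ∑ y, μ x y = 1) (hμdiag : ∀ x, μ x x = 0)
    (x y : V) (hxy : x ≠ y) :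
    ∃ κI : ℝ,
      Filter.Tendsto
        (fun α : ℝ => (1 - W1 d (idleKernel μ α x) (idleKernel μ α y) / d x y) / α)
        (nhdsWithin 0 (Set.Ioi 0)) (nhds κI) ∧
      1 - W1 d (idleKernel μ 1 x) (idleKernel μ 1 y) / d x y ≤ κI := by
  classical
  set D := d x y with hD
  have hDpos : 0 < D := hd_pos x y hxy
  set A := (∑ u, d x u * μ x u) + (∑ v, d v y * μ y v) with hA
  set W : ℝ → ℝ := fun α => W1 d (idleKernel μ α x) (idleKernel μ α y) with hW
  set g : ℝ → ℝ := fun α => (1 - W α / D) / α with hg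
  -- lower bound on W
  have hWlow : ∀ α : ℝ, 0 ≤ α → α ≤ 1 → D - α * A ≤ W α := by
    intro α h0 h1
    refine le_csInf (IdleAux.cSet_nonempty d μ hμ01 hμ hμdiag α h0 h1 x y) ?_
    intro s hs
    exact IdleAux.cost_lower d hd_refl hd_tri μ α x y s hs hμ hμdiag
  -- convexity-type inequality (cleared of divisions)
  have hconv : ∀ α β : ℝ, 0 < α → α ≤ β → β ≤ 1 →
      β * W α ≤ (β - α) * D + α * W β := by
    intro α β hα hαβ hβ1
    have hβ : 0 < β := lt_of_lt_of_le hα hαβ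
    set t := α / β with ht
    have ht0 : 0 ≤ t := le_of_lt (div_pos hα hβ)
    have ht1 : t ≤ 1 := (div_le_one hβ).mpr hαβ
    have htβ : t * β = α := div_mul_cancel₀ α (ne_of_gt hβ)
    have step1 : W α ≤ (1 - t) * D + t * W β := by
      have hmem : ∀ s ∈ IdleAux.cSet d (idleKernel μ β x) (idleKernel μ β y),
          W α ≤ (1 - t) * D + t * s := by
        intro s hs
        have := IdleAux.mix_mem d μ x y t β s ht0 ht1 hs
        rw [htβ] at this
        exact csInf_le (IdleAux.cSet_bddBelow d hd_refl hd_tri μ α x y hμ hμdiag) this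
      have h2 : (W α - (1 - t) * D) / t ≤ W β := by
        refine le_csInf (IdleAux.cSet_nonempty d μ hμ01 hμ hμdiag β (le_of_lt hβ) hβ1 x y) ?_
        intro s hs
        rw [div_le_iff₀ (div_pos hα hβ)]
        have := hmem s hs
        linarith [mul_comm s t]
      rw [div_le_iff₀ (div_pos hα hβ)] at h2
      linarith [mul_comm (W β) t]
    have := mul_le_mul_of_nonneg_left step1 (le_of_lt hβ)
    calc β * W α ≤ β * ((1 - t) * D + t * W β) := this
      _ = (β - t * β) * D + (t * β) * W β := by ring
      _ = (β - α) * D + α * W β := by rw [htβ]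
  -- monotonicity of g
  have hmono : ∀ α β : ℝ, 0 < α → α ≤ β → β ≤ 1 → g β ≤ g α := by
    intro α β hα hαβ hβ1
    have hβ : 0 < β := lt_of_lt_of_le hα hαβ
    have h := hconv α β hα hαβ hβ1
    show (1 - W β / D) / β ≤ (1 - W α / D) / α
    rw [div_le_div_iff₀ hβ hα]
    have hWβD : W β / D * (α * D) = α * W β := by
      field_simp
    have hWαD : W α / D * (β * D) = β * W α := by
      field_simp
    have key : (1 - W β / D) * α * D ≤ (1 - W α / D) * β * D := by
      have e1 : (1 - W β / D) * α * D = α * D - α * W β := by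
        field_simp
      have e2 : (1 - W α / D) * β * D = β * D - β * W α := by
        field_simp
      rw [e1, e2]
      linarith
    calc (1 - W β / D) * α = ((1 - W β / D) * α * D) / D := by
          field_simp
      _ ≤ ((1 - W α / D) * β * D) / D :=
          div_le_div_of_nonneg_right key hDpos.le
      _ = (1 - W α / D) * β := by field_simp
  -- upper bound on g
  have hub : ∀ α : ℝ, 0 < α → α ≤ 1 → g α ≤ A / D := by
    intro α hα hα1
    have h := hWlow α (le_of_lt hα) hα1
    show (1 - W α / D) / α ≤ A / D
    rw [div_le_div_iff₀ hα hDpos]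
    have : (1 - W α / D) * D = D - W α := by field_simp
    rw [this]
    calc D - W α ≤ α * A := by linarith
      _ = A * α := mul_comm _ _
  -- the limit value
  set T : Set ℝ := g '' Set.Ioc 0 1 with hT
  have hTne : T.Nonempty := ⟨g 1, 1, by norm_num, rfl⟩
  have hTbdd : BddAbove T := by
    refine ⟨A / D, ?_⟩
    rintro _ ⟨β, hβ, rfl⟩
    exact hub β hβ.1 hβ.2
  set κI := sSup T with hκ
  refine ⟨κI, ?_, ?_⟩
  · rw [Metric.tendsto_nhdsWithin_nhds]
    intro ε hε
    obtain ⟨s, hsT, hsgt⟩ := exists_lt_of_lt_csSup hTne (by linarith : κI - ε < κI)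
    obtain ⟨β, hβ, rfl⟩ := hsT
    refine ⟨β, hβ.1, ?_⟩
    intro α hα hdist
    have hαpos : 0 < α := hα
    rw [Real.dist_eq, sub_zero, abs_of_pos hαpos] at hdist
    have hgα_ge : g β ≤ g α := hmono α β hαpos (le_of_lt hdist) hβ.2
    have hgα_le : g α ≤ κI := le_csSup hTbdd ⟨α, ⟨hαpos, le_trans (le_of_lt hdist) hβ.2⟩, rfl⟩
    rw [Real.dist_eq, abs_lt]
    constructor <;> [linarith; linarith]
  · have h1 : g 1 ≤ κI := le_csSup hTbdd ⟨1, by norm_num, rfl⟩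
    have : g 1 = 1 - W 1 / D := by simp [hg]
    rw [this] at h1
    exact h1
end

section
/- Let V be a finite set, d an asymmetric distance function on V satisfying the triangle inequality, and μ a probability kernel on V with μ(x,x) = 0. For distinct x, y ∈ V, κ^I(x,y) := lim_{α → 0⁺} (1/α)(1 − W₁(μ^α_x, μ^α_y)/d(x,y)) equals the infimum of ∇_{xy}(Lf) over all functions f : V → ℝ that are 1-Lipschitz w.r.t. d and satisfy ∇_{xy} f = 1, where ∇_{xy} g := (g(y) − g(x))/d(x,y) and Lf(x) := f(x) − Σ_z μ(x,z) f(z). -/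
open Finset

set_option maxHeartbeats 1000000

section Helpers

variable {V : Type*} [Fintype V] [DecidableEq V]

private lemma pi_repr (u : V → ℝ) : ∑ a, u a • (Pi.single a (1:ℝ) : V → ℝ) = u := by
  funext b
  rw [Finset.sum_apply]
  have h : ∀ a, (u a • (Pi.single a (1:ℝ) : V → ℝ)) b = if b = a then u a else 0 := by
    intro a; by_cases h : b = a <;> simp [Pi.single_apply, h]
  simp only [h]
  simp

private lemma single_dot_l (w : V → ℝ) (c : V) :
    ∑ z, (Pi.single c (1:ℝ) : V → ℝ) z * w z = w c := by
  have h : ∀ z, (Pi.single c (1:ℝ) : V → ℝ) z * w z = if z = c then w z else 0 := by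
    intro z; by_cases h : z = c <;> simp [Pi.single_apply, h]
  simp only [h]
  simp

private lemma single_dot_r (w : V → ℝ) (c : V) :
    ∑ z, w z * (Pi.single c (1:ℝ) : V → ℝ) z = w c := by
  have h : ∀ z, w z * (Pi.single c (1:ℝ) : V → ℝ) z = (Pi.single c (1:ℝ) : V → ℝ) z * w z :=
    fun z => mul_comm _ _
  simp only [h]
  exact single_dot_l w c

private lemma single_nonneg (c z : V) : 0 ≤ (Pi.single c (1:ℝ) : V → ℝ) z := by
  rw [Pi.single_apply]; split <;> norm_num

private lemma single_sum (c : V) : ∑ z, (Pi.single c (1:ℝ) : V → ℝ) z = 1 := by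
  have h : ∀ z, (Pi.single c (1:ℝ) : V → ℝ) z = if z = c then 1 else 0 := by
    intro z; rw [Pi.single_apply]
  simp only [h]
  simp

private lemma mk_sum₁ (w : V → ℝ) :
    ((w, 0, 0) : (V → ℝ) × (V → ℝ) × ℝ)
      = ∑ a, w a • (((Pi.single a (1:ℝ) : V → ℝ), 0, 0) : (V → ℝ) × (V → ℝ) × ℝ) := by
  rw [Prod.ext_iff]
  refine ⟨?_, ?_⟩
  · rw [Prod.fst_sum]
    simp only [Prod.smul_fst]
    exact (pi_repr w).symm
  · rw [Prod.snd_sum]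
    simp

private lemma mk_sum₂ (w : V → ℝ) :
    ((0, w, 0) : (V → ℝ) × (V → ℝ) × ℝ)
      = ∑ a, w a • (((0:V → ℝ), (Pi.single a (1:ℝ) : V → ℝ), 0) : (V → ℝ) × (V → ℝ) × ℝ) := by
  rw [Prod.ext_iff]
  refine ⟨?_, ?_⟩
  · rw [Prod.fst_sum]
    simp
  · rw [Prod.snd_sum]
    rw [Prod.ext_iff]
    refine ⟨?_, ?_⟩
    · rw [Prod.fst_sum]
      simp only [Prod.smul_snd, Prod.smul_fst]
      exact (pi_repr w).symm
    · rw [Prod.snd_sum]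
      simp

private lemma clm_repr (ℓ : ((V → ℝ) × (V → ℝ) × ℝ) →L[ℝ] ℝ) (u v : V → ℝ) (s : ℝ) :
    ℓ (u, v, s) = ∑ a, u a * ℓ (Pi.single a 1, 0, 0) + ∑ b, v b * ℓ (0, Pi.single b 1, 0)
      + s * ℓ (0, 0, 1) := by
  have hsplit : ((u, v, s) : (V → ℝ) × (V → ℝ) × ℝ)
      = (u, 0, 0) + (0, v, 0) + (0, 0, s) := by
    simp [Prod.ext_iff]
  have h3 : ((0, 0, s) : (V → ℝ) × (V → ℝ) × ℝ)
      = s • (((0:V → ℝ), (0:V → ℝ), (1:ℝ)) : (V → ℝ) × (V → ℝ) × ℝ) := by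
    simp [Prod.ext_iff]
  rw [hsplit, map_add, map_add, mk_sum₁ u, mk_sum₂ v, h3, map_sum, map_sum, map_smul]
  simp only [map_smul, smul_eq_mul]

private lemma idle_dot (μ : V → V → ℝ) (x : V) (hdiag : μ x x = 0) (α : ℝ) (h : V → ℝ) :
    ∑ z, h z * idleKernel μ α x z = (1 - α) * h x + α * ∑ z, μ x z * h z := by
  rw [← Finset.add_sum_erase Finset.univ (fun z => h z * idleKernel μ α x z) (Finset.mem_univ x)]
  have h1 : idleKernel μ α x x = 1 - α := by simp [idleKernel]
  have h2 : ∑ z ∈ Finset.univ.erase x, h z * idleKernel μ α x z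
      = α * ∑ z, μ x z * h z := by
    have e1 : ∑ z ∈ Finset.univ.erase x, h z * idleKernel μ α x z
        = ∑ z ∈ Finset.univ.erase x, α * (μ x z * h z) := by
      refine Finset.sum_congr rfl fun z hz => ?_
      have hzx : z ≠ x := Finset.ne_of_mem_erase hz
      have : idleKernel μ α x z = α * μ x z := by simp [idleKernel, hzx]
      rw [this]; ring
    rw [e1, ← Finset.mul_sum]
    congr 1
    exact Finset.sum_erase _ (by rw [hdiag, zero_mul])
  rw [h1, h2]; ring

private lemma entry_le_one (π : V → V → ℝ) (h0 : ∀ a b, 0 ≤ π a b)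
    (h1 : ∑ a, ∑ b, π a b = 1) (a b : V) : π a b ≤ 1 := by
  calc π a b ≤ ∑ b', π a b' :=
        Finset.single_le_sum (fun i _ => h0 a i) (Finset.mem_univ b)
    _ ≤ ∑ a', ∑ b', π a' b' :=
        Finset.single_le_sum (fun i _ => Finset.sum_nonneg fun j _ => h0 i j) (Finset.mem_univ a)
    _ = 1 := h1

/-- Finite-space Kantorovich–Rubinstein duality (approximate form). -/
private lemma kantorovich [Nonempty V] (d : V → V → ℝ) (hdnn : ∀ a b, 0 ≤ d a b)
    (hd0 : ∀ a, d a a = 0) (htri : ∀ a b c, d a b ≤ d a c + d c b)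
    (μ ν : V → ℝ) (hμ0 : ∀ a, 0 ≤ μ a) (hμ1 : ∑ a, μ a = 1)
    (hν0 : ∀ a, 0 ≤ ν a) (hν1 : ∑ a, ν a = 1)
    (t : ℝ) (ht : t < W1 d μ ν) :
    ∃ h : V → ℝ, (∀ a b, h b - h a ≤ d a b) ∧ t ≤ ∑ z, h z * (ν z - μ z) := by
  classical
  set K : Set ((V → ℝ) × (V → ℝ) × ℝ) := {p | ∃ π : V → V → ℝ,
    (∀ a b, 0 ≤ π a b) ∧ (∑ a, ∑ b, π a b = 1) ∧
    (∀ a, ∑ b, π a b = p.1 a) ∧ (∀ b, ∑ a, π a b = p.2.1 b) ∧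
    (∑ a, ∑ b, d a b * π a b ≤ p.2.2)} with hKdef
  -- convexity
  have hconv : Convex ℝ K := by
    rintro p ⟨π, hπ0, hπ1, hπr, hπc, hπd⟩ q ⟨ρ, hρ0, hρ1, hρr, hρc, hρd⟩ c1 c2 hc1 hc2 hc
    refine ⟨fun a b => c1 * π a b + c2 * ρ a b,
      fun a b => add_nonneg (mul_nonneg hc1 (hπ0 a b)) (mul_nonneg hc2 (hρ0 a b)),
      ?_, ?_, ?_, ?_⟩
    · calc ∑ a, ∑ b, (c1 * π a b + c2 * ρ a b)
          = c1 * (∑ a, ∑ b, π a b) + c2 * (∑ a, ∑ b, ρ a b) := by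
            rw [Finset.mul_sum, Finset.mul_sum, ← Finset.sum_add_distrib]
            refine Finset.sum_congr rfl fun a _ => ?_
            rw [Finset.mul_sum, Finset.mul_sum, ← Finset.sum_add_distrib]
        _ = 1 := by rw [hπ1, hρ1]; linarith
    · intro a
      have e : ∑ b, (c1 * π a b + c2 * ρ a b) = c1 * p.1 a + c2 * q.1 a := by
        rw [Finset.sum_add_distrib, ← Finset.mul_sum, ← Finset.mul_sum, hπr a, hρr a]
      rw [e]
      simp [Prod.fst_add, Prod.smul_fst, Pi.add_apply, Pi.smul_apply, smul_eq_mul]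
    · intro b
      have e : ∑ a, (c1 * π a b + c2 * ρ a b) = c1 * p.2.1 b + c2 * q.2.1 b := by
        rw [Finset.sum_add_distrib, ← Finset.mul_sum, ← Finset.mul_sum, hπc b, hρc b]
      rw [e]
      simp [Prod.fst_add, Prod.snd_add, Prod.smul_fst, Prod.smul_snd, Pi.add_apply,
        Pi.smul_apply, smul_eq_mul]
    · have e : ∑ a, ∑ b, d a b * (c1 * π a b + c2 * ρ a b)
          = c1 * (∑ a, ∑ b, d a b * π a b) + c2 * (∑ a, ∑ b, d a b * ρ a b) := by
        rw [Finset.mul_sum, Finset.mul_sum, ← Finset.sum_add_distrib]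
        refine Finset.sum_congr rfl fun a _ => ?_
        rw [Finset.mul_sum, Finset.mul_sum, ← Finset.sum_add_distrib]
        refine Finset.sum_congr rfl fun b _ => ?_
        ring
      rw [e]
      have h22 : ((c1 • p + c2 • q).2.2 : ℝ) = c1 * p.2.2 + c2 * q.2.2 := by
        simp [Prod.snd_add, Prod.smul_snd, smul_eq_mul]
      rw [h22]
      exact add_le_add (mul_le_mul_of_nonneg_left hπd hc1) (mul_le_mul_of_nonneg_left hρd hc2)
  -- closedness
  have hcl : IsClosed K := by
    rw [← isSeqClosed_iff_isClosed]
    intro pn p hmem hlim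
    choose π hπ0 hπ1 hπr hπc hπd using hmem
    have hC : IsCompact (Set.pi (Set.univ : Set V) fun _ =>
        Set.pi (Set.univ : Set V) fun _ => Set.Icc (0:ℝ) 1) :=
      isCompact_univ_pi fun _ => isCompact_univ_pi fun _ => isCompact_Icc
    have hmemC : ∀ n, π n ∈ (Set.pi (Set.univ : Set V) fun _ =>
        Set.pi (Set.univ : Set V) fun _ => Set.Icc (0:ℝ) 1) := by
      intro n
      rw [Set.mem_univ_pi]
      intro a
      rw [Set.mem_univ_pi]
      intro b
      exact ⟨hπ0 n a b, entry_le_one (π n) (hπ0 n) (hπ1 n) a b⟩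
    obtain ⟨ρ, hρC, φ, hφmono, hρlim⟩ := hC.tendsto_subseq hmemC
    have hcoord : ∀ a b, Filter.Tendsto (fun k => π (φ k) a b) Filter.atTop (nhds (ρ a b)) := by
      intro a b
      have h1 := hρlim
      rw [tendsto_pi_nhds] at h1
      have h2 := h1 a
      rw [tendsto_pi_nhds] at h2
      exact h2 b
    have hplim : Filter.Tendsto (fun k => pn (φ k)) Filter.atTop (nhds p) :=
      hlim.comp hφmono.tendsto_atTop
    have h1lim : ∀ a, Filter.Tendsto (fun k => (pn (φ k)).1 a) Filter.atTop (nhds (p.1 a)) :=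
      fun a => (((continuous_apply a).comp continuous_fst).tendsto p).comp hplim
    have h21lim : ∀ b, Filter.Tendsto (fun k => (pn (φ k)).2.1 b) Filter.atTop (nhds (p.2.1 b)) :=
      fun b => (((continuous_apply b).comp (continuous_fst.comp continuous_snd)).tendsto p).comp hplim
    have h22lim : Filter.Tendsto (fun k => (pn (φ k)).2.2) Filter.atTop (nhds p.2.2) :=
      ((continuous_snd.comp continuous_snd).tendsto p).comp hplim
    refine ⟨ρ, ?_, ?_, ?_, ?_, ?_⟩
    · intro a b
      exact ge_of_tendsto' (hcoord a b) fun k => hπ0 (φ k) a b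
    · have hs : Filter.Tendsto (fun k => ∑ a, ∑ b, π (φ k) a b) Filter.atTop
          (nhds (∑ a, ∑ b, ρ a b)) :=
        tendsto_finset_sum _ fun a _ => tendsto_finset_sum _ fun b _ => hcoord a b
      have hs' : (fun k => ∑ a, ∑ b, π (φ k) a b) = fun _ => (1:ℝ) :=
        funext fun k => hπ1 (φ k)
      rw [hs'] at hs
      exact tendsto_nhds_unique hs tendsto_const_nhds
    · intro a
      have hs : Filter.Tendsto (fun k => ∑ b, π (φ k) a b) Filter.atTop
          (nhds (∑ b, ρ a b)) := tendsto_finset_sum _ fun b _ => hcoord a b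
      have hs' : (fun k => ∑ b, π (φ k) a b) = fun k => (pn (φ k)).1 a :=
        funext fun k => hπr (φ k) a
      rw [hs'] at hs
      exact tendsto_nhds_unique hs (h1lim a)
    · intro b
      have hs : Filter.Tendsto (fun k => ∑ a, π (φ k) a b) Filter.atTop
          (nhds (∑ a, ρ a b)) := tendsto_finset_sum _ fun a _ => hcoord a b
      have hs' : (fun k => ∑ a, π (φ k) a b) = fun k => (pn (φ k)).2.1 b :=
        funext fun k => hπc (φ k) b
      rw [hs'] at hs
      exact tendsto_nhds_unique hs (h21lim b)
    · have hs : Filter.Tendsto (fun k => ∑ a, ∑ b, d a b * π (φ k) a b) Filter.atTop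
          (nhds (∑ a, ∑ b, d a b * ρ a b)) :=
        tendsto_finset_sum _ fun a _ => tendsto_finset_sum _ fun b _ =>
          (hcoord a b).const_mul (d a b)
      exact le_of_tendsto_of_tendsto hs h22lim
        (Filter.Eventually.of_forall fun k => hπd (φ k))
  -- the point is not in K
  have hW1bdd : BddBelow {s : ℝ | ∃ π : V → V → ℝ, (∀ x y, 0 ≤ π x y ∧ π x y ≤ 1) ∧
      (∀ x, ∑ y, π x y = μ x) ∧ (∀ y, ∑ x, π x y = ν y) ∧
      s = ∑ x, ∑ y, d x y * π x y} := by
    refine ⟨0, ?_⟩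
    rintro s ⟨π, h01, hr, hc, rfl⟩
    exact Finset.sum_nonneg fun a _ => Finset.sum_nonneg fun b _ =>
      mul_nonneg (hdnn a b) (h01 a b).1
  have hpt : ((μ, ν, t) : (V → ℝ) × (V → ℝ) × ℝ) ∉ K := by
    rintro ⟨π, hπ0, hπ1, hπr, hπc, hπd⟩
    have hle : W1 d μ ν ≤ ∑ a, ∑ b, d a b * π a b := by
      rw [W1]
      exact csInf_le hW1bdd
        ⟨π, fun a b => ⟨hπ0 a b, entry_le_one π hπ0 hπ1 a b⟩, hπr, hπc, rfl⟩
    simp only at hπd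
    linarith
  -- separation
  obtain ⟨ℓ, u0, hsep, hptv⟩ := geometric_hahn_banach_closed_point hconv hcl hpt
  set pf : V → ℝ := fun a => ℓ (Pi.single a 1, 0, 0) with hpf
  set qf : V → ℝ := fun b => ℓ (0, Pi.single b 1, 0) with hqf
  set r : ℝ := ℓ (0, 0, 1) with hrdef
  have hrepr : ∀ (u v : V → ℝ) (s : ℝ),
      ℓ (u, v, s) = ∑ a, u a * pf a + ∑ b, v b * qf b + s * r := fun u v s => clm_repr ℓ u v s
  -- Dirac couplings belong to K
  have hdirac : ∀ (a b : V) (s : ℝ), 0 ≤ s →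
      ((Pi.single a 1, Pi.single b 1, d a b + s) : (V → ℝ) × (V → ℝ) × ℝ) ∈ K := by
    intro a b s hs
    refine ⟨fun a' b' => (Pi.single a (1:ℝ) : V → ℝ) a' * (Pi.single b (1:ℝ) : V → ℝ) b',
      fun a' b' => mul_nonneg (single_nonneg a a') (single_nonneg b b'), ?_, ?_, ?_, ?_⟩
    · have e : ∀ a', ∑ b', (Pi.single a (1:ℝ) : V → ℝ) a' * (Pi.single b (1:ℝ) : V → ℝ) b'
          = (Pi.single a (1:ℝ) : V → ℝ) a' := by
        intro a'
        rw [← Finset.mul_sum, single_sum b, mul_one]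
      rw [Finset.sum_congr rfl fun a' _ => e a']
      exact single_sum a
    · intro a'
      rw [← Finset.mul_sum, single_sum b, mul_one]
    · intro b'
      rw [← Finset.sum_mul, single_sum a, one_mul]
    · have e : ∀ a', ∑ b', d a' b' * ((Pi.single a (1:ℝ) : V → ℝ) a'
          * (Pi.single b (1:ℝ) : V → ℝ) b')
          = d a' b * (Pi.single a (1:ℝ) : V → ℝ) a' := by
        intro a'
        have e2 : ∀ b', d a' b' * ((Pi.single a (1:ℝ) : V → ℝ) a'
            * (Pi.single b (1:ℝ) : V → ℝ) b')
            = (d a' b' * (Pi.single a (1:ℝ) : V → ℝ) a')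
              * (Pi.single b (1:ℝ) : V → ℝ) b' := fun b' => by ring
        rw [Finset.sum_congr rfl fun b' _ => e2 b']
        exact single_dot_r (fun b' => d a' b' * (Pi.single a (1:ℝ) : V → ℝ) a') b
      rw [Finset.sum_congr rfl fun a' _ => e a']
      rw [single_dot_r (fun z => d z b) a]
      show d a b ≤ d a b + s
      linarith
  -- the product coupling belongs to K
  have hprodK : ((μ, ν, ∑ a, ∑ b, d a b * (μ a * ν b)) : (V → ℝ) × (V → ℝ) × ℝ) ∈ K := by
    refine ⟨fun a b => μ a * ν b, fun a b => mul_nonneg (hμ0 a) (hν0 b), ?_, ?_, ?_, le_refl _⟩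
    · calc ∑ a, ∑ b, μ a * ν b = ∑ a, μ a * ∑ b, ν b := by
            refine Finset.sum_congr rfl fun a _ => ?_
            rw [Finset.mul_sum]
        _ = 1 := by rw [hν1]; simpa using hμ1
    · intro a; rw [← Finset.mul_sum, hν1, mul_one]
    · intro b; rw [← Finset.sum_mul, hμ1, one_mul]
  have hdir_ineq : ∀ (a b : V) (s : ℝ), 0 ≤ s → pf a + qf b + (d a b + s) * r < u0 := by
    intro a b s hs
    have h1 := hsep _ (hdirac a b s hs)
    rw [hrepr, single_dot_l pf a, single_dot_l qf b] at h1
    exact h1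
  have hpt_ineq : u0 < ∑ a, μ a * pf a + ∑ b, ν b * qf b + t * r := by
    have h1 := hptv
    rw [hrepr] at h1
    exact h1
  -- the last coordinate of the functional is negative
  have hr0 : r ≤ 0 := by
    by_contra hpos
    push_neg at hpos
    have a0 : V := Classical.arbitrary V
    set s0 : ℝ := max 0 ((u0 - pf a0 - qf a0 - d a0 a0 * r) / r) with hs0def
    have hs0 : 0 ≤ s0 := le_max_left _ _
    have h1 := hdir_ineq a0 a0 s0 hs0
    have h2 : (u0 - pf a0 - qf a0 - d a0 a0 * r) / r ≤ s0 := le_max_right _ _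
    have h3 : u0 - pf a0 - qf a0 - d a0 a0 * r ≤ s0 * r := by
      rw [div_le_iff₀ hpos] at h2
      linarith
    nlinarith
  have hrneg : r < 0 := by
    rcases hr0.lt_or_eq with h | h
    · exact h
    · exfalso
      have h1 := hsep _ hprodK
      rw [hrepr] at h1
      rw [h, mul_zero, add_zero] at h1
      rw [h, mul_zero, add_zero] at hpt_ineq
      linarith
  set R : ℝ := -r with hRdef
  have hRpos : 0 < R := by rw [hRdef]; linarith
  set φp : V → ℝ := fun a => pf a / R - u0 / R with hφp
  set ψp : V → ℝ := fun b => qf b / R with hψp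
  have hfeas : ∀ a b, φp a + ψp b ≤ d a b := by
    intro a b
    have h1 := hdir_ineq a b 0 le_rfl
    have h2 : pf a + qf b - u0 ≤ d a b * R := by rw [hRdef]; nlinarith
    have e : φp a + ψp b = (pf a - u0 + qf b) / R := by
      rw [hφp, hψp]; ring
    rw [e, div_le_iff₀ hRpos]
    linarith
  have hsum1 : ∑ a, μ a * φp a = (∑ a, μ a * pf a) / R - u0 / R := by
    calc ∑ a, μ a * φp a = ∑ a, ((μ a * pf a) / R - μ a * (u0 / R)) := by
          refine Finset.sum_congr rfl fun a _ => ?_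
          rw [hφp]; ring
      _ = (∑ a, μ a * pf a) / R - (∑ a, μ a) * (u0 / R) := by
          rw [Finset.sum_sub_distrib, ← Finset.sum_div, ← Finset.sum_mul]
      _ = (∑ a, μ a * pf a) / R - u0 / R := by rw [hμ1, one_mul]
  have hsum2 : ∑ b, ν b * ψp b = (∑ b, ν b * qf b) / R := by
    calc ∑ b, ν b * ψp b = ∑ b, (ν b * qf b) / R := by
          refine Finset.sum_congr rfl fun b _ => ?_
          rw [hψp]; ring
      _ = (∑ b, ν b * qf b) / R := by rw [← Finset.sum_div]
  have hval : t < ∑ a, μ a * φp a + ∑ b, ν b * ψp b := by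
    have h1 : t * R < ∑ a, μ a * pf a + ∑ b, ν b * qf b - u0 := by rw [hRdef]; nlinarith
    rw [hsum1, hsum2]
    have e : (∑ a, μ a * pf a) / R - u0 / R + (∑ b, ν b * qf b) / R
        = (∑ a, μ a * pf a + ∑ b, ν b * qf b - u0) / R := by ring
    rw [e, lt_div_iff₀ hRpos]
    linarith
  -- build the Lipschitz potential
  set h : V → ℝ := fun b => Finset.univ.inf' Finset.univ_nonempty (fun a => d a b - φp a)
    with hhdef
  have hinf_le : ∀ a b, h b ≤ d a b - φp a := fun a b =>
    Finset.inf'_le _ (Finset.mem_univ a)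
  have hinf_ex : ∀ b, ∃ a, h b = d a b - φp a := by
    intro b
    obtain ⟨a, _, ha⟩ := Finset.exists_mem_eq_inf' (s := (Finset.univ : Finset V))
      Finset.univ_nonempty (fun a => d a b - φp a)
    exact ⟨a, ha⟩
  have hLip : ∀ a b, h b - h a ≤ d a b := by
    intro a b
    obtain ⟨c, hc⟩ := hinf_ex a
    have h1 : h b ≤ d c b - φp c := hinf_le c b
    have h2 : d c b ≤ d c a + d a b := htri c b a
    rw [hc]
    linarith
  have hha : ∀ a, h a ≤ -φp a := by
    intro a
    have h1 := hinf_le a a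
    rw [hd0 a] at h1
    linarith
  have hhb : ∀ b, ψp b ≤ h b := by
    intro b
    obtain ⟨a, ha⟩ := hinf_ex b
    rw [ha]
    linarith [hfeas a b]
  refine ⟨h, hLip, ?_⟩
  have e0 : ∑ z, h z * (ν z - μ z) = ∑ z, h z * ν z - ∑ z, h z * μ z := by
    rw [← Finset.sum_sub_distrib]
    exact Finset.sum_congr rfl fun z _ => by ring
  have h1 : ∑ z, ψp z * ν z ≤ ∑ z, h z * ν z :=
    Finset.sum_le_sum fun z _ => mul_le_mul_of_nonneg_right (hhb z) (hν0 z)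
  have h2 : ∑ z, h z * μ z ≤ ∑ z, (-φp z) * μ z :=
    Finset.sum_le_sum fun z _ => mul_le_mul_of_nonneg_right (hha z) (hμ0 z)
  have h3 : ∑ z, (-φp z) * μ z = -(∑ z, μ z * φp z) := by
    rw [← Finset.sum_neg_distrib]
    exact Finset.sum_congr rfl fun z _ => by ring
  have h4 : ∑ z, ψp z * ν z = ∑ z, ν z * ψp z :=
    Finset.sum_congr rfl fun z _ => by ring
  rw [e0]
  linarith

end Helpers

/-- `κ^I(x,y) = lim_{α → 0⁺} (1/α)(1 - W₁(μ^α_x, μ^α_y)/d(x,y))`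
equals the infimum of `∇_{xy}(L f)` over all 1-Lipschitz `f` with `∇_{xy} f = 1`,
where `L f z = f z - ∑ w, μ z w * f w` and `∇_{xy} g = (g y - g x)/d(x,y)`. -/
theorem idle_curvature_limit_eq_inf {V : Type*} [Fintype V] [DecidableEq V]
    (d : V → V → ℝ) (hd_nonneg : ∀ x y, 0 ≤ d x y)
    (hd_refl : ∀ x, d x x = 0)
    (hd_pos : ∀ x y, x ≠ y → 0 < d x y)
    (hd_tri : ∀ x y z, d x y ≤ d x z + d z y)
    (μ : V → V → ℝ) (hμ01 : ∀ x y, 0 ≤ μ x y ∧ μ x y ≤ 1)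
    (hμ : ∀ x, ∑ y, μ x y = 1) (hμdiag : ∀ x, μ x x = 0)
    (x y : V) (hxy : x ≠ y) :
    Filter.Tendsto
      (fun α : ℝ => (1 / α) * (1 - W1 d (idleKernel μ α x) (idleKernel μ α y) / d x y))
      (nhdsWithin 0 (Set.Ioi 0))
      (nhds (sInf {v : ℝ | ∃ f : V → ℝ, (∀ a b, f b - f a ≤ d a b) ∧
        (f y - f x) / d x y = 1 ∧
        v = ((f y - ∑ z, μ y z * f z) - (f x - ∑ z, μ x z * f z)) / d x y})) := by
    classical
  haveI : Nonempty V := ⟨x⟩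
  set S : Set ℝ := {v : ℝ | ∃ f : V → ℝ, (∀ a b, f b - f a ≤ d a b) ∧
      (f y - f x) / d x y = 1 ∧
      v = ((f y - ∑ z, μ y z * f z) - (f x - ∑ z, μ x z * f z)) / d x y} with hS
  have hD : 0 < d x y := hd_pos x y hxy
  have hSne : S.Nonempty := by
    refine ⟨((d x y - ∑ z, μ y z * d x z) - (d x x - ∑ z, μ x z * d x z)) / d x y, ?_⟩
    rw [hS]
    refine ⟨fun z => d x z, fun a b => by show d x b - d x a ≤ d a b; linarith [hd_tri x b a],
      ?_, rfl⟩
    show (d x y - d x x) / d x y = 1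
    rw [hd_refl x, sub_zero, div_self hD.ne']
  set C : ℝ := ∑ a, ∑ b, d a b with hC
  have hCd : ∀ a b, d a b ≤ C := by
    intro a b
    calc d a b ≤ ∑ b', d a b' :=
          Finset.single_le_sum (fun i _ => hd_nonneg a i) (Finset.mem_univ b)
      _ ≤ C := Finset.single_le_sum
          (fun i _ => Finset.sum_nonneg fun j _ => hd_nonneg i j) (Finset.mem_univ a)
  have hSbdd : BddBelow S := by
    refine ⟨-(2*C)/(d x y), ?_⟩
    rintro v ⟨f, hf, hrat, rfl⟩
    rw [div_eq_iff hD.ne', one_mul] at hrat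
    have hB : ∑ z, μ y z * f z ≤ f y + C := by
      calc ∑ z, μ y z * f z ≤ ∑ z, μ y z * (f y + C) :=
            Finset.sum_le_sum fun z _ =>
              mul_le_mul_of_nonneg_left (by linarith [hf y z, hCd y z]) (hμ01 y z).1
        _ = f y + C := by rw [← Finset.sum_mul, hμ y, one_mul]
    have hA : f x - C ≤ ∑ z, μ x z * f z := by
      calc f x - C = (∑ z, μ x z) * (f x - C) := by rw [hμ x, one_mul]
        _ = ∑ z, μ x z * (f x - C) := by rw [Finset.sum_mul]
        _ ≤ ∑ z, μ x z * f z := Finset.sum_le_sum fun z _ =>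
            mul_le_mul_of_nonneg_left (by linarith [hf z x, hCd z x]) (hμ01 x z).1
    rw [div_le_div_iff₀ hD hD]
    have hnum : -(2*C) ≤ (f y - ∑ z, μ y z * f z) - (f x - ∑ z, μ x z * f z) := by linarith
    exact mul_le_mul_of_nonneg_right hnum hD.le
  -- probability facts for the idle kernels
  have hidle0 : ∀ β : ℝ, 0 < β → β ≤ 1 → ∀ w, ∀ z, 0 ≤ idleKernel μ β w z := by
    intro β hβ0 hβ1 w z
    simp only [idleKernel]
    split
    · linarith
    · exact mul_nonneg hβ0.le (hμ01 w _).1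
  have hidleLe : ∀ β : ℝ, 0 < β → β ≤ 1 → ∀ w, ∀ z, idleKernel μ β w z ≤ 1 := by
    intro β hβ0 hβ1 w z
    simp only [idleKernel]
    split
    · linarith
    · nlinarith [(hμ01 w z).1, (hμ01 w z).2]
  have hidle1 : ∀ β : ℝ, ∀ w, ∑ z, idleKernel μ β w z = 1 := by
    intro β w
    have e := idle_dot μ w (hμdiag w) β (fun _ => (1:ℝ))
    simp only [one_mul, mul_one] at e
    rw [e, hμ w]
    ring
  -- upper bound: weak duality
  have hupper : ∀ α : ℝ, 0 < α → α ≤ 1 →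
      (1 / α) * (1 - W1 d (idleKernel μ α x) (idleKernel μ α y) / d x y) ≤ sInf S := by
    intro α hα0 hα1
    have hαne : α ≠ 0 := ne_of_gt hα0
    apply le_csInf hSne
    rintro v ⟨f, hf, hrat, rfl⟩
    rw [div_eq_iff hD.ne', one_mul] at hrat
    have hW1ge : d x y - α * ((f y - ∑ z, μ y z * f z) - (f x - ∑ z, μ x z * f z))
        ≤ W1 d (idleKernel μ α x) (idleKernel μ α y) := by
      rw [W1]
      apply le_csInf
      · refine ⟨∑ a, ∑ b, d a b * (idleKernel μ α x a * idleKernel μ α y b),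
          fun a b => idleKernel μ α x a * idleKernel μ α y b, ?_, ?_, ?_, rfl⟩
        · intro a b
          constructor
          · exact mul_nonneg (hidle0 α hα0 hα1 x a) (hidle0 α hα0 hα1 y b)
          · show idleKernel μ α x a * idleKernel μ α y b ≤ 1
            nlinarith [hidle0 α hα0 hα1 x a, hidle0 α hα0 hα1 y b,
              hidleLe α hα0 hα1 x a, hidleLe α hα0 hα1 y b]
        · intro a; rw [← Finset.mul_sum, hidle1 α y, mul_one]
        · intro b; rw [← Finset.sum_mul, hidle1 α x, one_mul]
      · rintro s ⟨π, hπ01, hπr, hπc, rfl⟩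
        have hstep1 : ∑ a, ∑ b, (f b - f a) * π a b ≤ ∑ a, ∑ b, d a b * π a b :=
          Finset.sum_le_sum fun a _ => Finset.sum_le_sum fun b _ =>
            mul_le_mul_of_nonneg_right (hf a b) (hπ01 a b).1
        have e1 : ∑ a, ∑ b, (f b - f a) * π a b
            = ∑ a, ∑ b, f b * π a b - ∑ a, ∑ b, f a * π a b := by
          rw [← Finset.sum_sub_distrib]
          refine Finset.sum_congr rfl fun a _ => ?_
          rw [← Finset.sum_sub_distrib]
          exact Finset.sum_congr rfl fun b _ => by ring
        have e2 : ∑ a, ∑ b, f b * π a b = ∑ b, f b * idleKernel μ α y b := by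
          rw [Finset.sum_comm]
          refine Finset.sum_congr rfl fun b _ => ?_
          rw [← Finset.mul_sum, hπc b]
        have e3 : ∑ a, ∑ b, f a * π a b = ∑ a, f a * idleKernel μ α x a :=
          Finset.sum_congr rfl fun a _ => by rw [← Finset.mul_sum, hπr a]
        have e4 : ∑ b, f b * idleKernel μ α y b
            = (1-α) * f y + α * ∑ z, μ y z * f z := idle_dot μ y (hμdiag y) α f
        have e5 : ∑ a, f a * idleKernel μ α x a
            = (1-α) * f x + α * ∑ z, μ x z * f z := idle_dot μ x (hμdiag x) α f
        rw [e1, e2, e3, e4, e5] at hstep1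
        have e6 : d x y - α * ((f y - ∑ z, μ y z * f z) - (f x - ∑ z, μ x z * f z))
            = (1-α) * f y + α * ∑ z, μ y z * f z
              - ((1-α) * f x + α * ∑ z, μ x z * f z) := by
          rw [← hrat]; ring
        linarith [hstep1]
    have hdiv : (d x y - α * ((f y - ∑ z, μ y z * f z) - (f x - ∑ z, μ x z * f z)))
          * (d x y)⁻¹
        ≤ W1 d (idleKernel μ α x) (idleKernel μ α y) * (d x y)⁻¹ :=
      mul_le_mul_of_nonneg_right hW1ge (inv_nonneg.mpr hD.le)
    rw [← div_eq_mul_inv, ← div_eq_mul_inv] at hdiv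
    have e8 : (d x y - α * ((f y - ∑ z, μ y z * f z) - (f x - ∑ z, μ x z * f z))) / d x y
        = 1 - α * (((f y - ∑ z, μ y z * f z) - (f x - ∑ z, μ x z * f z)) / d x y) := by
      field_simp
    rw [e8] at hdiv
    have h7 : 1 - W1 d (idleKernel μ α x) (idleKernel μ α y) / d x y
        ≤ α * (((f y - ∑ z, μ y z * f z) - (f x - ∑ z, μ x z * f z)) / d x y) := by
      linarith
    have h9 : (1/α) * (α * (((f y - ∑ z, μ y z * f z) - (f x - ∑ z, μ x z * f z)) / d x y))
        = ((f y - ∑ z, μ y z * f z) - (f x - ∑ z, μ x z * f z)) / d x y := by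
      field_simp
    calc (1 / α) * (1 - W1 d (idleKernel μ α x) (idleKernel μ α y) / d x y)
        ≤ (1/α) * (α * (((f y - ∑ z, μ y z * f z) - (f x - ∑ z, μ x z * f z)) / d x y)) :=
          mul_le_mul_of_nonneg_left h7 (one_div_nonneg.mpr hα0.le)
      _ = ((f y - ∑ z, μ y z * f z) - (f x - ∑ z, μ x z * f z)) / d x y := h9
  -- lower bound: strong duality
  have hlower : ∀ α : ℝ, 0 < α → α ≤ 1/2 →
      sInf S - α ≤ (1 / α) * (1 - W1 d (idleKernel μ α x) (idleKernel μ α y) / d x y) := by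
    intro α hα0 hα2
    have hα1 : α ≤ 1 := by linarith
    have hαne : α ≠ 0 := ne_of_gt hα0
    have hW1lt : W1 d (idleKernel μ α x) (idleKernel μ α y) - α^2 * d x y
        < W1 d (idleKernel μ α x) (idleKernel μ α y) := by
      have hq : 0 < α^2 * d x y := mul_pos (pow_pos hα0 2) hD
      linarith
    obtain ⟨h, hLip, hdual⟩ := kantorovich d hd_nonneg hd_refl hd_tri
      (idleKernel μ α x) (idleKernel μ α y)
      (hidle0 α hα0 hα1 x) (hidle1 α x) (hidle0 α hα0 hα1 y) (hidle1 α y) _ hW1lt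
    have e1 : ∑ z, h z * idleKernel μ α y z
        = (1-α) * h y + α * ∑ z, μ y z * h z := idle_dot μ y (hμdiag y) α h
    have e2 : ∑ z, h z * idleKernel μ α x z
        = (1-α) * h x + α * ∑ z, μ x z * h z := idle_dot μ x (hμdiag x) α h
    have e0 : ∑ z, h z * (idleKernel μ α y z - idleKernel μ α x z)
        = ∑ z, h z * idleKernel μ α y z - ∑ z, h z * idleKernel μ α x z := by
      rw [← Finset.sum_sub_distrib]
      exact Finset.sum_congr rfl fun z _ => by ring
    rw [e0, e1, e2] at hdual
    have hTD : h y - h x ≤ d x y := hLip x y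
    set g : V → ℝ := fun z => max (h z) (h x + d x y - d z y) with hg
    have hgb : ∀ z, g z = max (h z) (h x + d x y - d z y) := fun z => by rw [hg]
    have hgz : ∀ z, h z ≤ g z := fun z => (hgb z) ▸ le_max_left _ _
    have hgz2 : ∀ z, h x + d x y - d z y ≤ g z := fun z => (hgb z) ▸ le_max_right _ _
    have hgLip : ∀ a b, g b - g a ≤ d a b := by
      intro a b
      have h1 := hgz a
      have h2 := hgz2 a
      have h3 : d a y ≤ d a b + d b y := hd_tri a y b
      have h4 := hLip a b
      have h5 : g b ≤ d a b + g a := by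
        rw [hgb b]
        apply max_le <;> linarith
      linarith
    have hgx : g x = h x := by
      rw [hgb x]
      have e : h x + d x y - d x y = h x := by ring
      rw [e, max_self]
    have hgy : g y = h x + d x y := by
      rw [hgb y, hd_refl y]
      have e : h x + d x y - 0 = h x + d x y := by ring
      rw [e]
      exact max_eq_right (by linarith [hLip x y])
    have hgh' : ∀ z, g z ≤ h z + (d x y - (h y - h x)) := by
      intro z
      rw [hgb z]
      apply max_le
      · linarith [hTD]
      · linarith [hLip z y]
    have hAg : ∑ z, μ x z * g z ≤ (∑ z, μ x z * h z) + (d x y - (h y - h x)) := by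
      calc ∑ z, μ x z * g z ≤ ∑ z, μ x z * (h z + (d x y - (h y - h x))) :=
            Finset.sum_le_sum fun z _ =>
              mul_le_mul_of_nonneg_left (hgh' z) (hμ01 x z).1
        _ = (∑ z, μ x z * h z) + (d x y - (h y - h x)) := by
            have e : ∀ z, μ x z * (h z + (d x y - (h y - h x)))
                = μ x z * h z + μ x z * (d x y - (h y - h x)) := fun z => by ring
            rw [Finset.sum_congr rfl fun z _ => e z, Finset.sum_add_distrib,
              ← Finset.sum_mul, hμ x, one_mul]
    have hBg : ∑ z, μ y z * h z ≤ ∑ z, μ y z * g z :=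
      Finset.sum_le_sum fun z _ => mul_le_mul_of_nonneg_left (hgz z) (hμ01 y z).1
    have hgS : ((g y - ∑ z, μ y z * g z) - (g x - ∑ z, μ x z * g z)) / d x y ∈ S := by
      rw [hS]
      refine ⟨g, hgLip, ?_, rfl⟩
      rw [hgy, hgx]
      have e : h x + d x y - h x = d x y := by ring
      rw [e, div_self hD.ne']
    have hκ : sInf S ≤ ((g y - ∑ z, μ y z * g z) - (g x - ∑ z, μ x z * g z)) / d x y :=
      csInf_le hSbdd hgS
    have hκ' : sInf S * d x y ≤ d x y - (∑ z, μ y z * g z - ∑ z, μ x z * g z) := by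
      have e : (g y - ∑ z, μ y z * g z) - (g x - ∑ z, μ x z * g z)
          = d x y - (∑ z, μ y z * g z - ∑ z, μ x z * g z) := by rw [hgy, hgx]; ring
      rw [e] at hκ
      exact (le_div_iff₀ hD).mp hκ
    have hBA : (∑ z, μ y z * h z) - (∑ z, μ x z * h z)
        ≤ d x y - sInf S * d x y + (d x y - (h y - h x)) := by
      linarith [hAg, hBg, hκ']
    have hW1le : W1 d (idleKernel μ α x) (idleKernel μ α y)
        ≤ d x y * (1 - α * sInf S + α * α) := by
      have h5 : W1 d (idleKernel μ α x) (idleKernel μ α y)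
          ≤ α^2 * d x y + (1-α) * (h y - h x)
            + α * ((∑ z, μ y z * h z) - (∑ z, μ x z * h z)) := by linarith [hdual]
      have h6 : α * ((∑ z, μ y z * h z) - (∑ z, μ x z * h z))
          ≤ α * (d x y - sInf S * d x y + (d x y - (h y - h x))) :=
        mul_le_mul_of_nonneg_left hBA hα0.le
      nlinarith [h5, h6, mul_nonneg (by linarith : (0:ℝ) ≤ 1 - 2*α)
        (by linarith [hTD] : (0:ℝ) ≤ d x y - (h y - h x))]
    have h7 : α * sInf S - α * α
        ≤ 1 - W1 d (idleKernel μ α x) (idleKernel μ α y) / d x y := by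
      have hq : W1 d (idleKernel μ α x) (idleKernel μ α y) / d x y
          ≤ 1 - α * sInf S + α * α := by
        rw [div_le_iff₀ hD]
        nlinarith [hW1le]
      linarith
    have heq : (1/α) * (α * sInf S - α * α) = sInf S - α := by
      field_simp
    calc sInf S - α = (1/α) * (α * sInf S - α * α) := heq.symm
      _ ≤ (1 / α) * (1 - W1 d (idleKernel μ α x) (idleKernel μ α y) / d x y) :=
        mul_le_mul_of_nonneg_left h7 (one_div_nonneg.mpr hα0.le)
  -- squeeze
  have hmem : Set.Ioo (0:ℝ) (1/2) ∈ nhdsWithin 0 (Set.Ioi 0) :=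
    Ioo_mem_nhdsGT_of_mem (by constructor <;> norm_num)
  have htend1 : Filter.Tendsto (fun α : ℝ => sInf S - α) (nhdsWithin 0 (Set.Ioi 0))
      (nhds (sInf S)) := by
    have h1 : Filter.Tendsto (fun α : ℝ => sInf S - α) (nhds 0) (nhds (sInf S - 0)) :=
      tendsto_const_nhds.sub Filter.tendsto_id
    rw [sub_zero] at h1
    exact h1.mono_left nhdsWithin_le_nhds
  refine tendsto_of_tendsto_of_tendsto_of_le_of_le' htend1 tendsto_const_nhds ?_ ?_
  · filter_upwards [hmem] with α hα
    exact hlower α hα.1 hα.2.le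
  · filter_upwards [hmem] with α hα
    exact hupper α hα.1 (by linarith [hα.2])
end

section
/- (Laplacian comparison) Let V be a finite set, d an asymmetric distance function on V satisfying the triangle inequality, and μ a probability kernel on V with μ(x,x) = 0. Fix x ∈ V and let ρ_x(y) := d(x,y). Let K ∈ ℝ and suppose κ^I(x,y) ≥ K for every y ∈ V∖{x}, where κ^I(x,y) := lim_{α → 0⁺} (1/α)(1 − W₁(μ^α_x, μ^α_y)/d(x,y)). Let Λ ∈ (−∞, 0) and suppose the asymptotic mean curvature H_x := Lρ_x(x) = −Σ_y μ(x,y) d(x,y) satisfies H_x ≥ Λ. Then for every y ∈ V: Lρ_x(y) ≥ K ρ_x(y) + Λ. -/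
open Finset

lemma idle_eq {V : Type*} [DecidableEq V] (μ : V → V → ℝ) (hμdiag : ∀ x, μ x x = 0)
    (α : ℝ) (x z : V) :
    idleKernel μ α x z = (if z = x then 1 - α else 0) + α * μ x z := by
  unfold idleKernel
  by_cases h : z = x <;> simp [h, hμdiag]

lemma idle_sum {V : Type*} [Fintype V] [DecidableEq V] (μ : V → V → ℝ)
    (hμ : ∀ x, ∑ y, μ x y = 1) (hμdiag : ∀ x, μ x x = 0) (α : ℝ) (x : V) :
    ∑ z, idleKernel μ α x z = 1 := by
  simp [idle_eq μ hμdiag, Finset.sum_add_distrib, Finset.sum_ite_eq', ← Finset.mul_sum, hμ]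

lemma idle_weighted {V : Type*} [Fintype V] [DecidableEq V] (μ : V → V → ℝ)
    (hμdiag : ∀ x, μ x x = 0) (α : ℝ) (x : V) (f : V → ℝ) :
    ∑ z, f z * idleKernel μ α x z = (1 - α) * f x + α * ∑ z, f z * μ x z := by
  have h : ∀ z, f z * idleKernel μ α x z
      = (if z = x then (1 - α) * f z else 0) + α * (f z * μ x z) := by
    intro z
    rw [idle_eq μ hμdiag]
    by_cases h : z = x <;> simp [h] <;> ring
  rw [Finset.sum_congr rfl fun z _ => h z, Finset.sum_add_distrib,
    Finset.sum_ite_eq', ← Finset.mul_sum]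
  simp

lemma idle_mem {V : Type*} [DecidableEq V] (μ : V → V → ℝ)
    (hμ01 : ∀ x y, 0 ≤ μ x y ∧ μ x y ≤ 1) {α : ℝ} (hα : α ∈ Set.Ioo (0:ℝ) 1) (x z : V) :
    0 ≤ idleKernel μ α x z ∧ idleKernel μ α x z ≤ 1 := by
  obtain ⟨h0, h1⟩ := hα
  unfold idleKernel
  by_cases h : z = x <;> simp only [h, if_true, if_false]
  · constructor <;> linarith
  · obtain ⟨m0, m1⟩ := hμ01 x z
    constructor
    · positivity
    · nlinarith

/-- Laplacian comparison. If the idle curvature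
`κ^I(x,y) = lim_{α→0⁺} (1/α)(1 - W₁(μ^α_x,μ^α_y)/d(x,y))` is at least `K` for
every `y ≠ x`, and the asymptotic mean curvature
`H_x = -∑ z, μ x z * d x z` is at least `Λ` with `Λ < 0`, then
`L ρ_x y ≥ K * ρ_x y + Λ` for every `y`, where
`L ρ_x y = d x y - ∑ z, μ y z * d x z`. -/
theorem laplacian_comparison {V : Type*} [Fintype V] [DecidableEq V]
    (d : V → V → ℝ) (hd_nonneg : ∀ x y, 0 ≤ d x y)
    (hd_refl : ∀ x, d x x = 0)
    (hd_pos : ∀ x y, x ≠ y → 0 < d x y)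
    (hd_tri : ∀ x y z, d x y ≤ d x z + d z y)
    (μ : V → V → ℝ) (hμ01 : ∀ x y, 0 ≤ μ x y ∧ μ x y ≤ 1)
    (hμ : ∀ x, ∑ y, μ x y = 1) (hμdiag : ∀ x, μ x x = 0)
    (x : V) (K : ℝ)
    (hK : ∀ y : V, y ≠ x → ∃ κI : ℝ,
      Filter.Tendsto
        (fun α : ℝ =>
          (1 / α) * (1 - W1 d (idleKernel μ α x) (idleKernel μ α y) / d x y))
        (nhdsWithin 0 (Set.Ioi 0)) (nhds κI) ∧ K ≤ κI)
    (Λ : ℝ) (hΛ : Λ < 0)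
    (hH : Λ ≤ -∑ z, μ x z * d x z) :
    ∀ y : V, K * d x y + Λ ≤ d x y - ∑ z, μ y z * d x z := by
  intro y
  have hSx : (∑ z, μ x z * d x z) = ∑ z, d x z * μ x z := by
    exact Finset.sum_congr rfl fun z _ => mul_comm _ _
  have hSy : (∑ z, μ y z * d x z) = ∑ z, d x z * μ y z := by
    exact Finset.sum_congr rfl fun z _ => mul_comm _ _
  by_cases hy : y = x
  · subst hy
    have hdd : d y y = 0 := hd_refl y
    rw [hdd]
    linarith [hH]
  · obtain ⟨κI, hlim, hKκ⟩ := hK y hy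
    have hdxy : 0 < d x y := hd_pos x y (Ne.symm hy)
    set Sx : ℝ := ∑ z, d x z * μ x z with hSxdef
    set Sy : ℝ := ∑ z, d x z * μ y z with hSydef
    set C : ℝ := 1 - (Sy - Sx) / d x y with hCdef
    -- eventual bound
    have hmem : Set.Ioo (0:ℝ) 1 ∈ nhdsWithin (0:ℝ) (Set.Ioi 0) :=
      Ioo_mem_nhdsGT_of_mem (by constructor <;> norm_num)
    have hbound : ∀ᶠ α in nhdsWithin (0:ℝ) (Set.Ioi 0),
        (1 / α) * (1 - W1 d (idleKernel μ α x) (idleKernel μ α y) / d x y) ≤ C := by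
      filter_upwards [hmem] with α hα
      obtain ⟨hα0, hα1⟩ := hα
      -- lower bound on W1
      have hW1 : (1 - α) * d x y + α * Sy - α * Sx
          ≤ W1 d (idleKernel μ α x) (idleKernel μ α y) := by
        apply le_csInf
        · refine ⟨∑ a, ∑ b, d a b * (idleKernel μ α x a * idleKernel μ α y b),
            fun a b => idleKernel μ α x a * idleKernel μ α y b, ?_, ?_, ?_, rfl⟩
          · intro a b
            obtain ⟨p0, p1⟩ := idle_mem μ hμ01 ⟨hα0, hα1⟩ x a
            obtain ⟨q0, q1⟩ := idle_mem μ hμ01 ⟨hα0, hα1⟩ y b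
            exact ⟨mul_nonneg p0 q0, mul_le_one₀ p1 q0 q1⟩
          · intro a
            rw [← Finset.mul_sum, idle_sum μ hμ hμdiag, mul_one]
          · intro b
            rw [← Finset.sum_mul, idle_sum μ hμ hμdiag, one_mul]
        · rintro s ⟨π, hπ01, hrow, hcol, rfl⟩
          have key : ∑ a, ∑ b, (d x b - d x a) * π a b ≤ ∑ a, ∑ b, d a b * π a b := by
            apply Finset.sum_le_sum
            intro a _
            apply Finset.sum_le_sum
            intro b _
            exact mul_le_mul_of_nonneg_right (by linarith [hd_tri x b a]) (hπ01 a b).1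
          have hval : ∑ a, ∑ b, (d x b - d x a) * π a b
              = (1 - α) * d x y + α * Sy - α * Sx := by
            have e1 : ∑ a, ∑ b, (d x b - d x a) * π a b
                = (∑ a, ∑ b, d x b * π a b) - ∑ a, ∑ b, d x a * π a b := by
              rw [← Finset.sum_sub_distrib]
              apply Finset.sum_congr rfl
              intro a _
              rw [← Finset.sum_sub_distrib]
              apply Finset.sum_congr rfl
              intro b _
              ring
            have e2 : ∑ a, ∑ b, d x b * π a b = ∑ b, d x b * idleKernel μ α y b := by
              rw [Finset.sum_comm]
              apply Finset.sum_congr rfl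
              intro b _
              rw [← Finset.mul_sum, hcol b]
            have e3 : ∑ a, ∑ b, d x a * π a b = ∑ a, d x a * idleKernel μ α x a := by
              apply Finset.sum_congr rfl
              intro a _
              rw [← Finset.mul_sum, hrow a]
            rw [e1, e2, e3, idle_weighted μ hμdiag α y (d x), idle_weighted μ hμdiag α x (d x),
              hd_refl x]
            ring
          linarith [key, hval]
      have h1 : 1 - W1 d (idleKernel μ α x) (idleKernel μ α y) / d x y ≤ α * C := by
        have hdiv : ((1 - α) * d x y + α * Sy - α * Sx) / d x y
            ≤ W1 d (idleKernel μ α x) (idleKernel μ α y) / d x y := by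
          gcongr
        have heq : 1 - ((1 - α) * d x y + α * Sy - α * Sx) / d x y = α * C := by
          rw [hCdef]
          field_simp
          ring
        linarith [hdiv, heq.ge, heq.le]
      calc (1 / α) * (1 - W1 d (idleKernel μ α x) (idleKernel μ α y) / d x y)
          ≤ (1 / α) * (α * C) := by
            apply mul_le_mul_of_nonneg_left h1
            positivity
        _ = C := by field_simp
    have hκC : κI ≤ C := le_of_tendsto hlim hbound
    have hKC : K ≤ C := le_trans hKκ hκC
    have hmul : K * d x y ≤ C * d x y :=
      mul_le_mul_of_nonneg_right hKC (le_of_lt hdxy)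
    have hCd : C * d x y = d x y - Sy + Sx := by
      rw [hCdef]
      field_simp
      ring
    rw [hSx] at hH
    rw [hSy]
    rw [hCd] at hmul
    linarith [hmul, hH]
end

section
/- Let V be a finite set, μ a probability kernel on V, and m : V → ℝ>0 with m(x)μ(x,y) = m(y)μ(y,x) for all x,y. Fix x ∈ V, let ρ_x(y) := d(x,y) for an asymmetric distance d with triangle inequality, and let D > 0 with d(x,y) ≤ D for all y ∈ V. Then for every nonempty Ω ⊆ V: Σ_{y ∈ Ω} Lρ_x(y) m(y) ≤ D · m(∂Ω), where Lf(y) := f(y) − Σ_z μ(y,z) f(z) and m(∂Ω) := Σ_{y ∈ Ω} Σ_{z ∈ V∖Ω} m(y)μ(y,z). -/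
open Finset

/-- With `m` reversible for the kernel `μ`, `ρ_x = d x ·` for an
asymmetric distance `d` with triangle inequality, and `d x y ≤ D` for all `y`,
one has `∑_{y ∈ Ω} L ρ_x(y) m(y) ≤ D · m(∂Ω)` for every nonempty `Ω ⊆ V`. -/
theorem laplacian_sum_le_boundary {V : Type*} [Fintype V] [DecidableEq V]
    (d : V → V → ℝ) (hd_nonneg : ∀ x y, 0 ≤ d x y)
    (hd_refl : ∀ x, d x x = 0)
    (hd_pos : ∀ x y, x ≠ y → 0 < d x y)
    (hd_tri : ∀ x y z, d x y ≤ d x z + d z y)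
    (μ : V → V → ℝ) (hμ01 : ∀ x y, 0 ≤ μ x y ∧ μ x y ≤ 1)
    (hμ : ∀ x, ∑ y, μ x y = 1)
    (m : V → ℝ) (hm : ∀ x, 0 < m x)
    (hsym : ∀ x y, m x * μ x y = m y * μ y x)
    (x : V) (D : ℝ) (hD : 0 < D) (hbound : ∀ y, d x y ≤ D)
    (Ω : Finset V) (hΩ : Ω.Nonempty) :
    ∑ y ∈ Ω, (d x y - ∑ z, μ y z * d x z) * m y ≤
      D * ∑ y ∈ Ω, ∑ z ∈ Ωᶜ, m y * μ y z := by
  have hterm : ∀ y ∈ Ω, (d x y - ∑ z, μ y z * d x z) * m y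
      = ∑ z, m y * μ y z * (d x y - d x z) := by
    intro y _
    have h1 : ∑ z, m y * μ y z * (d x y - d x z)
        = (∑ z, m y * μ y z * d x y) - ∑ z, m y * μ y z * d x z := by
      rw [← Finset.sum_sub_distrib]; congr 1; ext z; ring
    rw [h1]
    have h2 : ∑ z, m y * μ y z * d x y = m y * d x y := by
      rw [← Finset.sum_mul]
      have : ∑ z, m y * μ y z = m y := by
        rw [← Finset.mul_sum, hμ, mul_one]
      rw [this]
    have h3 : ∑ z, m y * μ y z * d x z = m y * ∑ z, μ y z * d x z := by
      rw [Finset.mul_sum]; congr 1; ext z; ring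
    rw [h2, h3]; ring
  rw [Finset.sum_congr rfl hterm]
  have hsplit : ∀ y : V, ∑ z, m y * μ y z * (d x y - d x z)
      = ∑ z ∈ Ω, m y * μ y z * (d x y - d x z)
        + ∑ z ∈ Ωᶜ, m y * μ y z * (d x y - d x z) :=
    fun y => (Finset.sum_add_sum_compl Ω _).symm
  rw [Finset.sum_congr rfl (fun y _ => hsplit y), Finset.sum_add_distrib]
  have hzero : ∑ y ∈ Ω, ∑ z ∈ Ω, m y * μ y z * (d x y - d x z) = 0 := by
    have h1 : ∑ y ∈ Ω, ∑ z ∈ Ω, m y * μ y z * d x z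
        = ∑ y ∈ Ω, ∑ z ∈ Ω, m y * μ y z * d x y := by
      rw [Finset.sum_comm]
      refine Finset.sum_congr rfl fun a _ => Finset.sum_congr rfl fun b _ => ?_
      rw [hsym]
    simp only [mul_sub, Finset.sum_sub_distrib, h1, sub_self]
  rw [hzero, zero_add, Finset.mul_sum]
  refine Finset.sum_le_sum fun y _ => ?_
  rw [Finset.mul_sum]
  refine Finset.sum_le_sum fun z _ => ?_
  have hnn : 0 ≤ m y * μ y z := mul_nonneg (hm y).le (hμ01 y z).1
  have hle : d x y - d x z ≤ D :=
    le_trans (by linarith [hd_nonneg x z]) (hbound y)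
  calc m y * μ y z * (d x y - d x z) ≤ m y * μ y z * D :=
        mul_le_mul_of_nonneg_left hle hnn
    _ = D * (m y * μ y z) := by ring
end

section
/- (Dirichlet isoperimetric lower bound) Let V be a finite set, d an asymmetric distance function on V satisfying the triangle inequality, μ a probability kernel on V with μ(x,x) = 0, and m : V → ℝ>0 with m(x)μ(x,y) = m(y)μ(y,x) for all x,y. Fix x ∈ V. Assume: (i) for some K ∈ ℝ, κ^I(x,y) := lim_{α→0⁺}(1/α)(1 − W₁(μ^α_x,μ^α_y)/d(x,y)) ≥ K for all y ≠ x; (ii) for some Λ ∈ (−∞,0), H_x := −Σ_y μ(x,y)d(x,y) ≥ Λ; (iii) for some D > 0, sup_{y ∈ V} d(x,y) ≤ D. Then for every R > 0 with K·R + Λ > 0 such that E_R(x) := {y ∈ V : d(x,y) ≥ R} is nonempty, and for every nonempty Ω ⊆ E_R(x): m(∂Ω)/m(Ω) ≥ (K·R + Λ)/D; equivalently the Dirichlet isoperimetric constant of E_R(x) is at least (K·R + Λ)/D. -/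
open Finset

/-- Easy direction of Kantorovich duality: a Lipschitz-type test function gives a
lower bound on `W1`. -/
lemma kantorovich_lb {V : Type*} [Fintype V] (d : V → V → ℝ) (f : V → ℝ)
    (hf : ∀ w z, f z - f w ≤ d w z)
    (μ ν : V → ℝ) (hμ : ∀ w, 0 ≤ μ w ∧ μ w ≤ 1) (hν : ∀ w, 0 ≤ ν w ∧ ν w ≤ 1)
    (hμ1 : ∑ w, μ w = 1) (hν1 : ∑ w, ν w = 1) :
    (∑ z, f z * ν z) - (∑ w, f w * μ w) ≤ W1 d μ ν := by
  apply le_csInf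
  · refine ⟨∑ w, ∑ z, d w z * (μ w * ν z), fun w z => μ w * ν z, ?_, ?_, ?_, rfl⟩
    · intro w z
      constructor
      · exact mul_nonneg (hμ w).1 (hν z).1
      · exact mul_le_one₀ (hμ w).2 (hν z).1 (hν z).2
    · intro w
      rw [← Finset.mul_sum, hν1, mul_one]
    · intro z
      rw [← Finset.sum_mul, hμ1, one_mul]
  · rintro s ⟨π, hπ01, hrow, hcol, rfl⟩
    have key : ∑ w, ∑ z, (f z - f w) * π w z ≤ ∑ w, ∑ z, d w z * π w z := by
      refine Finset.sum_le_sum fun w _ => Finset.sum_le_sum fun z _ => ?_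
      exact mul_le_mul_of_nonneg_right (hf w z) (hπ01 w z).1
    calc (∑ z, f z * ν z) - (∑ w, f w * μ w)
        = ∑ w, ∑ z, (f z - f w) * π w z := by
          have h1 : ∑ z, f z * ν z = ∑ w, ∑ z, f z * π w z := by
            rw [Finset.sum_comm]
            refine Finset.sum_congr rfl fun z _ => ?_
            rw [← Finset.mul_sum, hcol z, mul_comm]
          have h2 : ∑ w, f w * μ w = ∑ w, ∑ z, f w * π w z := by
            refine Finset.sum_congr rfl fun w _ => ?_
            rw [← Finset.mul_sum, hrow w]
          rw [h1, h2, ← Finset.sum_sub_distrib]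
          refine Finset.sum_congr rfl fun w _ => ?_
          rw [← Finset.sum_sub_distrib]
          refine Finset.sum_congr rfl fun z _ => ?_
          ring
      _ ≤ ∑ w, ∑ z, d w z * π w z := key

/-- Dirichlet isoperimetric lower bound. Under a lower bound `K`
on the idle curvature at `x`, a lower bound `Λ < 0` on the asymptotic mean
curvature `H_x = -∑ z, μ x z * d x z`, and an upper bound `D` on distances
from `x`, every nonempty `Ω ⊆ E_R(x) = {y : d x y ≥ R}` with `K·R + Λ > 0`
satisfies `m(∂Ω)/m(Ω) ≥ (K·R + Λ)/D`. -/
theorem dirichlet_isoperimetric_lower_bound {V : Type*} [Fintype V] [DecidableEq V]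
    (d : V → V → ℝ) (hd_nonneg : ∀ x y, 0 ≤ d x y)
    (hd_refl : ∀ x, d x x = 0)
    (hd_pos : ∀ x y, x ≠ y → 0 < d x y)
    (hd_tri : ∀ x y z, d x y ≤ d x z + d z y)
    (μ : V → V → ℝ) (hμ01 : ∀ x y, 0 ≤ μ x y ∧ μ x y ≤ 1)
    (hμ : ∀ x, ∑ y, μ x y = 1) (hμdiag : ∀ x, μ x x = 0)
    (m : V → ℝ) (hm : ∀ x, 0 < m x)
    (hsym : ∀ x y, m x * μ x y = m y * μ y x)
    (x : V) (K : ℝ)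
    (hK : ∀ y : V, y ≠ x → ∃ κI : ℝ,
      Filter.Tendsto
        (fun α : ℝ =>
          (1 / α) * (1 - W1 d (idleKernel μ α x) (idleKernel μ α y) / d x y))
        (nhdsWithin 0 (Set.Ioi 0)) (nhds κI) ∧ K ≤ κI)
    (Λ : ℝ) (hΛ : Λ < 0)
    (hH : Λ ≤ -∑ z, μ x z * d x z)
    (D : ℝ) (hD : 0 < D) (hbound : ∀ y, d x y ≤ D)
    (R : ℝ) (hR : 0 < R) (hKR : 0 < K * R + Λ)
    (Ω : Finset V) (hΩ : Ω.Nonempty) (hΩE : ∀ y ∈ Ω, R ≤ d x y) :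
    (K * R + Λ) / D ≤
      (∑ y ∈ Ω, ∑ z ∈ Ωᶜ, m y * μ y z) / (∑ y ∈ Ω, m y) := by
  have hKpos : 0 < K := by nlinarith
  set Ax : ℝ := ∑ z, μ x z * d x z with hAx
  -- properties of idle kernels
  have hidle01 : ∀ α ∈ Set.Ioc (0:ℝ) 1, ∀ w z : V,
      0 ≤ idleKernel μ α w z ∧ idleKernel μ α w z ≤ 1 := by
    rintro α ⟨hα0, hα1⟩ w z
    unfold idleKernel
    split
    · constructor <;> linarith
    · constructor
      · exact mul_nonneg hα0.le (hμ01 w z).1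
      · calc α * μ w z ≤ 1 * 1 := by
              apply mul_le_mul hα1 (hμ01 w z).2 (hμ01 w z).1 zero_le_one
          _ = 1 := by ring
  have hidle_eq : ∀ (α : ℝ) (w z : V),
      idleKernel μ α w z = α * μ w z + (if z = w then (1:ℝ) - α else 0) := by
    intro α w z
    unfold idleKernel
    split
    · rename_i h; subst h; rw [hμdiag]; ring
    · ring
  have hidle_sum : ∀ (α : ℝ) (w : V), ∑ z, idleKernel μ α w z = 1 := by
    intro α w
    simp only [hidle_eq]
    rw [Finset.sum_add_distrib, ← Finset.mul_sum, hμ w,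
      Finset.sum_ite_eq' Finset.univ w (fun _ => (1:ℝ) - α)]
    simp
  -- integral of f = d x · against idle kernels
  have hint_x : ∀ α : ℝ, ∑ w, d x w * idleKernel μ α x w = α * Ax := by
    intro α
    simp only [hidle_eq]
    rw [hAx, Finset.mul_sum]
    refine Finset.sum_congr rfl fun w _ => ?_
    by_cases h : w = x
    · subst h; rw [hd_refl, hμdiag]; simp
    · simp [h]; ring
  have hint_y : ∀ (α : ℝ) (y : V), ∑ z, d x z * idleKernel μ α y z
      = (1 - α) * d x y + α * ∑ z, μ y z * d x z := by
    intro α y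
    simp only [hidle_eq]
    have : ∀ z, d x z * (α * μ y z + (if z = y then (1:ℝ) - α else 0))
        = α * (μ y z * d x z) + (if z = y then ((1:ℝ) - α) * d x y else 0) := by
      intro z
      by_cases h : z = y
      · subst h; simp; ring
      · simp [h]; ring
    rw [Finset.sum_congr rfl fun z _ => this z, Finset.sum_add_distrib, ← Finset.mul_sum,
      Finset.sum_ite_eq' Finset.univ y (fun _ => ((1:ℝ) - α) * d x y)]
    simp [add_comm]
  -- key pointwise estimate on Ω
  have hkey : ∀ y ∈ Ω, (∑ z, μ y z * d x z) - d x y ≤ -(K * R + Λ) := by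
    intro y hy
    have hdxy : 0 < d x y := lt_of_lt_of_le hR (hΩE y hy)
    have hyx : y ≠ x := by
      intro h; subst h; rw [hd_refl] at hdxy; exact lt_irrefl 0 hdxy
    obtain ⟨κI, hlim, hKκ⟩ := hK y hyx
    set Ay : ℝ := ∑ z, μ y z * d x z with hAy
    have hC : κI ≤ (d x y - Ay + Ax) / d x y := by
      refine le_of_tendsto hlim ?_
      filter_upwards [Ioc_mem_nhdsGT_of_mem (Set.left_mem_Ico.2 zero_lt_one)] with α hα
      have hα0 : 0 < α := hα.1
      have hW : (1 - α) * d x y + α * Ay - α * Ax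
          ≤ W1 d (idleKernel μ α x) (idleKernel μ α y) := by
        have := kantorovich_lb d (fun z => d x z)
          (fun w z => by linarith [hd_tri x z w])
          (idleKernel μ α x) (idleKernel μ α y)
          (hidle01 α hα x) (hidle01 α hα y)
          (hidle_sum α x) (hidle_sum α y)
        rw [hint_x α, hint_y α y] at this
        linarith
      have hdne : d x y ≠ 0 := ne_of_gt hdxy
      have hαne : α ≠ 0 := ne_of_gt hα0
      have hle : 1 - W1 d (idleKernel μ α x) (idleKernel μ α y) / d x y
          ≤ 1 - ((1 - α) * d x y + α * Ay - α * Ax) / d x y := by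
        gcongr
      calc 1 / α * (1 - W1 d (idleKernel μ α x) (idleKernel μ α y) / d x y)
          ≤ 1 / α * (1 - ((1 - α) * d x y + α * Ay - α * Ax) / d x y) :=
            mul_le_mul_of_nonneg_left hle (by positivity)
        _ = (d x y - Ay + Ax) / d x y := by field_simp; ring
    -- from K ≤ κI ≤ C deduce the estimate
    have hKC : K * d x y ≤ d x y - Ay + Ax := by
      have := hKκ.trans hC
      rwa [le_div_iff₀ hdxy] at this
    have hAxΛ : Ax ≤ -Λ := by linarith
    have hKd : K * R ≤ K * d x y := mul_le_mul_of_nonneg_left (hΩE y hy) hKpos.le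
    linarith
  -- global summation
  set M : ℝ := ∑ y ∈ Ω, m y with hM
  set B : ℝ := ∑ y ∈ Ω, ∑ z ∈ Ωᶜ, m y * μ y z with hB
  have hMpos : 0 < M := Finset.sum_pos (fun y _ => hm y) hΩ
  -- antisymmetry kills the interior part
  set S : ℝ := ∑ y ∈ Ω, ∑ z ∈ Ω, m y * μ y z * (d x z - d x y) with hS
  have hzero : S = 0 := by
    have hflip : S = -S := by
      calc S = ∑ z ∈ Ω, ∑ y ∈ Ω, m y * μ y z * (d x z - d x y) := Finset.sum_comm
        _ = ∑ y ∈ Ω, ∑ z ∈ Ω, m y * μ y z * (d x y - d x z) := by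
            refine Finset.sum_congr rfl fun y _ => Finset.sum_congr rfl fun z _ => ?_
            rw [hsym z y]
        _ = ∑ y ∈ Ω, ∑ z ∈ Ω, -(m y * μ y z * (d x z - d x y)) := by
            refine Finset.sum_congr rfl fun y _ => Finset.sum_congr rfl fun z _ => ?_
            ring
        _ = -S := by rw [hS]; simp
    linarith
  -- rewrite the weighted Laplacian sum
  have hlap : ∀ y : V, ∑ z, m y * μ y z * (d x z - d x y)
      = m y * ((∑ z, μ y z * d x z) - d x y) := by
    intro y
    calc ∑ z, m y * μ y z * (d x z - d x y)
        = ∑ z, (m y * (μ y z * d x z) - (m y * d x y) * μ y z) :=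
          Finset.sum_congr rfl fun z _ => by ring
      _ = m y * (∑ z, μ y z * d x z) - (m y * d x y) * ∑ z, μ y z := by
          rw [Finset.sum_sub_distrib, ← Finset.mul_sum, ← Finset.mul_sum]
      _ = m y * ((∑ z, μ y z * d x z) - d x y) := by rw [hμ y]; ring
  have hsplit : ∑ y ∈ Ω, ∑ z, m y * μ y z * (d x z - d x y)
      = S + ∑ y ∈ Ω, ∑ z ∈ Ωᶜ, m y * μ y z * (d x z - d x y) := by
    rw [hS, ← Finset.sum_add_distrib]
    exact Finset.sum_congr rfl fun y _ => (Finset.sum_add_sum_compl Ω _).symm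
  -- lower bound on boundary part
  have hbd : -D * B ≤ ∑ y ∈ Ω, ∑ z ∈ Ωᶜ, m y * μ y z * (d x z - d x y) := by
    have : -D * B = ∑ y ∈ Ω, ∑ z ∈ Ωᶜ, m y * μ y z * (-D) := by
      rw [hB, Finset.mul_sum]
      refine Finset.sum_congr rfl fun y _ => ?_
      rw [Finset.mul_sum]
      exact Finset.sum_congr rfl fun z _ => by ring
    rw [this]
    refine Finset.sum_le_sum fun y hy => Finset.sum_le_sum fun z _ => ?_
    have hnn : 0 ≤ m y * μ y z := mul_nonneg (hm y).le (hμ01 y z).1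
    have h1 : -D ≤ d x z - d x y := by
      have := hbound y
      have := hd_nonneg x z
      linarith
    exact mul_le_mul_of_nonneg_left h1 hnn
  -- upper bound via the key estimate
  have hub : ∑ y ∈ Ω, ∑ z, m y * μ y z * (d x z - d x y) ≤ -(K * R + Λ) * M := by
    calc ∑ y ∈ Ω, ∑ z, m y * μ y z * (d x z - d x y)
        = ∑ y ∈ Ω, m y * ((∑ z, μ y z * d x z) - d x y) :=
          Finset.sum_congr rfl fun y _ => hlap y
      _ ≤ ∑ y ∈ Ω, m y * (-(K * R + Λ)) :=
          Finset.sum_le_sum fun y hy =>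
            mul_le_mul_of_nonneg_left (hkey y hy) (hm y).le
      _ = -(K * R + Λ) * M := by rw [hM, Finset.mul_sum]; exact Finset.sum_congr rfl fun y _ => by ring
  have hmain : (K * R + Λ) * M ≤ D * B := by
    rw [hsplit, hzero, zero_add] at hub
    linarith
  rw [div_le_div_iff₀ hD hMpos]
  nlinarith
end

section
/- (Universal curvature lower bound) Let V be a finite set, d an asymmetric distance function on V satisfying the triangle inequality, and μ a probability kernel on V with μ(x,x) = 0. For distinct x, y ∈ V define κ(x,y) := 1 − W₁(μ_x, μ_y)/d(x,y) where μ_x := μ(x,·). Let D(x,y) := max{d(x,y), d(y,x)} and H(y,x) := Σ_z μ(y,z) d(y,z) + Σ_z μ(x,z) d(z,x). Then κ(x,y) ≥ −(2·D(x,y)/d(x,y))·(1 − μ(x,y) − μ(y,x))₊ + (1/d(x,y))·(d(x,y) + D(x,y) − H(y,x)) − ((D(x,y) − d(y,x))/d(x,y))·(μ(x,y) + μ(y,x)), where (t)₊ := max{t, 0}. -/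
open Finset

lemma sum_if_eq {V : Type*} [Fintype V] [DecidableEq V] (x : V) (u : ℝ) (g : V → ℝ) :
    ∑ b, (if b = x then u else g b) = (∑ b, g b) + u - g x := by
  have h : ∀ b, (if b = x then u else g b) = g b + (if b = x then u - g b else 0) := by
    intro b; split_ifs with h <;> simp [h]
  rw [Finset.sum_congr rfl fun b _ => h b, Finset.sum_add_distrib,
    Finset.sum_ite_eq' Finset.univ x (fun b => u - g b)]
  simp; ring

lemma W1_le {V : Type*} [Fintype V] (d : V → V → ℝ) (hd : ∀ a b, 0 ≤ d a b)
    (μ ν : V → ℝ) (π : V → V → ℝ)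
    (h01 : ∀ a b, 0 ≤ π a b ∧ π a b ≤ 1)
    (hrow : ∀ a, ∑ b, π a b = μ a) (hcol : ∀ b, ∑ a, π a b = ν b) :
    W1 d μ ν ≤ ∑ a, ∑ b, d a b * π a b := by
  apply csInf_le
  · refine ⟨0, ?_⟩
    rintro s ⟨π', h01', _, _, rfl⟩
    apply Finset.sum_nonneg; intro a _
    apply Finset.sum_nonneg; intro b _
    exact mul_nonneg (hd a b) (h01' a b).1
  · exact ⟨π, h01, hrow, hcol, rfl⟩

set_option maxHeartbeats 2000000 in
/-- universal lower bound for the curvature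
`κ(x,y) = 1 - W₁(μ_x, μ_y)/d(x,y)` in terms of
`D(x,y) = max {d(x,y), d(y,x)}` and
`H(y,x) = ∑ z, μ y z * d y z + ∑ z, μ x z * d z x`. -/
theorem curvature_universal_lower_bound {V : Type*} [Fintype V]
    (d : V → V → ℝ) (hd_nonneg : ∀ x y, 0 ≤ d x y)
    (hd_refl : ∀ x, d x x = 0)
    (hd_pos : ∀ x y, x ≠ y → 0 < d x y)
    (hd_tri : ∀ x y z, d x y ≤ d x z + d z y)
    (μ : V → V → ℝ) (hμ01 : ∀ x y, 0 ≤ μ x y ∧ μ x y ≤ 1)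
    (hμ : ∀ x, ∑ y, μ x y = 1) (hμdiag : ∀ x, μ x x = 0)
    (x y : V) (hxy : x ≠ y) :
    -(2 * max (d x y) (d y x) / d x y) * max (1 - μ x y - μ y x) 0 +
        (1 / d x y) * (d x y + max (d x y) (d y x) -
          (∑ z, μ y z * d y z + ∑ z, μ x z * d z x)) -
        ((max (d x y) (d y x) - d y x) / d x y) * (μ x y + μ y x) ≤
      1 - W1 d (μ x) (μ y) / d x y := by
  classical
  have hd0 : 0 < d x y := hd_pos x y hxy
  have hμx1 : ∑ z, μ x z = 1 := hμ x
  have hμy1 : ∑ z, μ y z = 1 := hμ y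
  have hm0 : 0 ≤ μ x y := (hμ01 x y).1
  have hm1 : μ x y ≤ 1 := (hμ01 x y).2
  have hm'0 : 0 ≤ μ y x := (hμ01 y x).1
  have hm'1 : μ y x ≤ 1 := (hμ01 y x).2
  have hDxy : d x y ≤ max (d x y) (d y x) := le_max_left _ _
  have hDyx : d y x ≤ max (d x y) (d y x) := le_max_right _ _
  have key : W1 d (μ x) (μ y) ≤
      2 * max (d x y) (d y x) * max (1 - μ x y - μ y x) 0 - max (d x y) (d y x)
        + ((∑ z, μ y z * d y z) + (∑ z, μ x z * d z x))
        + (max (d x y) (d y x) - d y x) * (μ x y + μ y x) := by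
    rcases le_or_gt 1 (μ x y + μ y x) with hs | hs
    · -- case s ≥ 1
      set π : V → V → ℝ := fun a b =>
        if a = y then (if b = x then μ x y + μ y x - 1 else μ y b)
        else (if b = x then μ x a else 0) with hπ
      have h01 : ∀ a b, 0 ≤ π a b ∧ π a b ≤ 1 := by
        intro a b
        simp only [hπ]
        split_ifs <;> constructor <;>
          first
            | linarith
            | exact (hμ01 _ _).1
            | exact (hμ01 _ _).2
            | norm_num
      have hrow : ∀ a, ∑ b, π a b = μ x a := by
        intro a
        by_cases ha : a = y
        · have hpt : ∀ b, π a b = if b = x then μ x y + μ y x - 1 else μ y b := by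
            intro b; simp [hπ, ha]
          rw [Finset.sum_congr rfl fun b _ => hpt b,
            sum_if_eq x (μ x y + μ y x - 1) (μ y), hμy1, ha]
          ring
        · simp only [hπ, if_neg ha]
          simp
      have hcol : ∀ b, ∑ a, π a b = μ y b := by
        intro b
        by_cases hb : b = x
        · have hpt : ∀ a, π a b = if a = y then μ x y + μ y x - 1 else μ x a := by
            intro a; simp [hπ, hb]
          rw [Finset.sum_congr rfl fun a _ => hpt a, sum_if_eq y (μ x y + μ y x - 1) (μ x),
            hμx1, hb]
          ring
        · have hpt : ∀ a, π a b = if a = y then μ y b else 0 := by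
            intro a; simp [hπ, hb]
          rw [Finset.sum_congr rfl fun a _ => hpt a]
          simp
      have hW := W1_le d hd_nonneg (μ x) (μ y) π h01 hrow hcol
      have hfy : ∑ b, d y b * π y b =
          (∑ z, μ y z * d y z) + d y x * (μ x y + μ y x - 1) - μ y x * d y x := by
        have hpt : ∀ b, d y b * π y b =
            if b = x then d y x * (μ x y + μ y x - 1) else μ y b * d y b := by
          intro b
          by_cases hb : b = x <;> simp [hπ, hb] <;> ring
        rw [Finset.sum_congr rfl fun b _ => hpt b,
          sum_if_eq x (d y x * (μ x y + μ y x - 1)) (fun b => μ y b * d y b)]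
        try ring
      have hcost : ∑ a, ∑ b, d a b * π a b =
          d y x * (μ x y + μ y x - 1) + ((∑ z, μ y z * d y z) - μ y x * d y x)
            + ((∑ z, μ x z * d z x) - μ x y * d y x) := by
        have hpt : ∀ a, (if a = y then (0:ℝ) else ∑ b, d a b * π a b) =
            if a = y then 0 else μ x a * d a x := by
          intro a
          by_cases ha : a = y
          · simp [ha]
          · simp only [if_neg ha]
            have hpt2 : ∀ b, d a b * π a b = if b = x then μ x a * d a x else 0 := by
              intro b
              by_cases hb : b = x <;> simp [hπ, ha, hb] <;> ring
            rw [Finset.sum_congr rfl fun b _ => hpt2 b]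
            simp
        have houter := sum_if_eq y (0:ℝ) (fun a => ∑ b, d a b * π a b)
        rw [Finset.sum_congr rfl fun a _ => hpt a,
          sum_if_eq y (0:ℝ) (fun a => μ x a * d a x)] at houter
        have : ∑ a, ∑ b, d a b * π a b =
            ((∑ a, μ x a * d a x) + 0 - μ x y * d y x) + ∑ b, d y b * π y b := by
          linarith [houter]
        rw [this, hfy]
        ring
      rw [hcost] at hW
      have hmax0 : max (1 - μ x y - μ y x) 0 = 0 := max_eq_right (by linarith)
      rw [hmax0]
      nlinarith [mul_nonneg (show (0:ℝ) ≤ μ x y + μ y x - 1 by linarith)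
        (show (0:ℝ) ≤ max (d x y) (d y x) - d y x by linarith)]
    · -- case s < 1
      have hβ : 0 < 1 - μ x y := by linarith
      have hα : 0 < 1 - μ y x := by linarith
      have hbnd_y : ∀ b, b ≠ x → μ y b + μ y x ≤ 1 := by
        intro b hb
        have hsub := Finset.sum_le_sum_of_subset_of_nonneg
          (Finset.subset_univ ({b, x} : Finset V)) (fun i _ _ => (hμ01 y i).1)
        rw [Finset.sum_pair hb] at hsub
        linarith [hμy1]
      have hbnd_x : ∀ a, a ≠ y → μ x a + μ x y ≤ 1 := by
        intro a ha
        have hsub := Finset.sum_le_sum_of_subset_of_nonneg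
          (Finset.subset_univ ({a, y} : Finset V)) (fun i _ _ => (hμ01 x i).1)
        rw [Finset.sum_pair ha] at hsub
        linarith [hμx1]
      set π : V → V → ℝ := fun a b =>
        if a = y then (if b = x then 0 else μ x y * μ y b / (1 - μ y x))
        else if b = x then μ y x * μ x a / (1 - μ x y)
        else (1 - μ x y - μ y x) * (μ x a * μ y b) / ((1 - μ x y) * (1 - μ y x)) with hπ
      have h01 : ∀ a b, 0 ≤ π a b ∧ π a b ≤ 1 := by
        intro a b
        by_cases ha : a = y <;> by_cases hb : b = x
        · simp [hπ, ha, hb]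
        · constructor
          · simp only [hπ, if_pos ha, if_neg hb]
            exact div_nonneg (mul_nonneg hm0 (hμ01 y b).1) hα.le
          · simp only [hπ, if_pos ha, if_neg hb]
            rw [div_le_one hα]
            nlinarith [hbnd_y b hb, mul_nonneg (show (0:ℝ) ≤ 1 - μ x y by linarith)
              (hμ01 y b).1]
        · constructor
          · simp only [hπ, if_neg ha, if_pos hb]
            exact div_nonneg (mul_nonneg hm'0 (hμ01 x a).1) hβ.le
          · simp only [hπ, if_neg ha, if_pos hb]
            rw [div_le_one hβ]
            nlinarith [hbnd_x a ha, mul_nonneg (show (0:ℝ) ≤ 1 - μ y x by linarith)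
              (hμ01 x a).1]
        · constructor
          · simp only [hπ, if_neg ha, if_neg hb]
            exact div_nonneg (mul_nonneg (by linarith)
              (mul_nonneg (hμ01 x a).1 (hμ01 y b).1)) (mul_nonneg hβ.le hα.le)
          · simp only [hπ, if_neg ha, if_neg hb]
            rw [div_le_one (mul_pos hβ hα)]
            have hA : μ x a ≤ 1 - μ x y := by linarith [hbnd_x a ha]
            have hB : μ y b ≤ 1 - μ y x := by linarith [hbnd_y b hb]
            have hprod : μ x a * μ y b ≤ (1 - μ x y) * (1 - μ y x) :=
              mul_le_mul hA hB (hμ01 y b).1 (by linarith)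
            nlinarith [mul_nonneg (hμ01 x a).1 (hμ01 y b).1,
              mul_nonneg (show (0:ℝ) ≤ μ x y + μ y x by linarith)
                (mul_nonneg (hμ01 x a).1 (hμ01 y b).1)]
      have hrow : ∀ a, ∑ b, π a b = μ x a := by
        intro a
        by_cases ha : a = y
        · have hpt : ∀ b, π a b = if b = x then 0 else
              (μ x y / (1 - μ y x)) * μ y b := by
            intro b
            by_cases hb : b = x <;> simp [hπ, ha, hb] <;> ring
          rw [Finset.sum_congr rfl fun b _ => hpt b,
            sum_if_eq x 0 (fun b => (μ x y / (1 - μ y x)) * μ y b),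
            ← Finset.mul_sum, hμy1, ha]
          field_simp
          ring
        · have hpt : ∀ b, π a b = if b = x then μ y x * μ x a / (1 - μ x y) else
              ((1 - μ x y - μ y x) * μ x a / ((1 - μ x y) * (1 - μ y x))) * μ y b := by
            intro b
            by_cases hb : b = x <;> simp [hπ, ha, hb] <;> ring
          rw [Finset.sum_congr rfl fun b _ => hpt b,
            sum_if_eq x (μ y x * μ x a / (1 - μ x y))
              (fun b => ((1 - μ x y - μ y x) * μ x a / ((1 - μ x y) * (1 - μ y x))) * μ y b),
            ← Finset.mul_sum, hμy1]
          field_simp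
          ring
      have hcol : ∀ b, ∑ a, π a b = μ y b := by
        intro b
        by_cases hb : b = x
        · have hpt : ∀ a, π a b = if a = y then 0 else
              (μ y x / (1 - μ x y)) * μ x a := by
            intro a
            by_cases ha : a = y <;> simp [hπ, ha, hb] <;> ring
          rw [Finset.sum_congr rfl fun a _ => hpt a,
            sum_if_eq y 0 (fun a => (μ y x / (1 - μ x y)) * μ x a),
            ← Finset.mul_sum, hμx1, hb]
          field_simp
          ring
        · have hpt : ∀ a, π a b = if a = y then μ x y * μ y b / (1 - μ y x) else
              ((1 - μ x y - μ y x) * μ y b / ((1 - μ x y) * (1 - μ y x))) * μ x a := by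
            intro a
            by_cases ha : a = y <;> simp [hπ, ha, hb] <;> ring
          rw [Finset.sum_congr rfl fun a _ => hpt a,
            sum_if_eq y (μ x y * μ y b / (1 - μ y x))
              (fun a => ((1 - μ x y - μ y x) * μ y b / ((1 - μ x y) * (1 - μ y x))) * μ x a),
            ← Finset.mul_sum, hμx1]
          field_simp
          ring
      set c : V → V → ℝ := fun a b =>
        if a = y then d y b else if b = x then d a x else d a x + d x y + d y b with hc
      have hcmp : ∀ a b, d a b ≤ c a b := by
        intro a b
        by_cases ha : a = y <;> by_cases hb : b = x <;>
          simp only [hc, ha, hb, if_pos, if_neg, if_true, if_false] <;>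
          first
            | (subst ha; exact le_refl _)
            | (try subst ha) <;> (try subst hb) <;>
                first
                  | exact le_refl _
                  | linarith [hd_tri a b x, hd_tri x b y]
      have hle : ∑ a, ∑ b, d a b * π a b ≤ ∑ a, ∑ b, c a b * π a b :=
        Finset.sum_le_sum fun a _ => Finset.sum_le_sum fun b _ =>
          mul_le_mul_of_nonneg_right (hcmp a b) (h01 a b).1
      have hFy : ∑ b, c y b * π y b =
          (μ x y / (1 - μ y x)) * (∑ z, μ y z * d y z)
            - (μ x y / (1 - μ y x)) * (μ y x * d y x) := by
        have hpt : ∀ b, c y b * π y b = if b = x then 0 else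
            (μ x y / (1 - μ y x)) * (μ y b * d y b) := by
          intro b
          by_cases hb : b = x <;> simp [hπ, hc, hb] <;> ring
        rw [Finset.sum_congr rfl fun b _ => hpt b,
          sum_if_eq x 0 (fun b => (μ x y / (1 - μ y x)) * (μ y b * d y b)),
          ← Finset.mul_sum]
        ring
      have hFa : ∀ a, a ≠ y → ∑ b, c a b * π a b =
          μ x a * d a x + μ x a *
            ((1 - μ x y - μ y x) * (d x y + ∑ z, μ y z * d y z) / ((1 - μ x y) * (1 - μ y x))
              - (1 - μ x y - μ y x) * (μ y x * (d x y + d y x)) / ((1 - μ x y) * (1 - μ y x))) := by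
        intro a ha
        have hpt : ∀ b, c a b * π a b = if b = x then
            d a x * (μ y x * μ x a / (1 - μ x y)) else
            ((d a x + d x y) * ((1 - μ x y - μ y x) * μ x a / ((1 - μ x y) * (1 - μ y x)))) * μ y b
              + ((1 - μ x y - μ y x) * μ x a / ((1 - μ x y) * (1 - μ y x))) * (μ y b * d y b) := by
          intro b
          by_cases hb : b = x <;> simp [hπ, hc, ha, hb] <;> ring
        rw [Finset.sum_congr rfl fun b _ => hpt b,
          sum_if_eq x (d a x * (μ y x * μ x a / (1 - μ x y)))
            (fun b => ((d a x + d x y) * ((1 - μ x y - μ y x) * μ x a / ((1 - μ x y) * (1 - μ y x)))) * μ y b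
              + ((1 - μ x y - μ y x) * μ x a / ((1 - μ x y) * (1 - μ y x))) * (μ y b * d y b)),
          Finset.sum_add_distrib, ← Finset.mul_sum, ← Finset.mul_sum, hμy1]
        field_simp
        ring
      have hE : ∑ a, ∑ b, c a b * π a b =
          (1 - μ x y - μ y x) * d x y + ((∑ z, μ y z * d y z) - μ y x * d y x)
            + ((∑ z, μ x z * d z x) - μ x y * d y x) := by
        have hpt : ∀ a, (if a = y then (0:ℝ) else ∑ b, c a b * π a b) =
            if a = y then 0 else μ x a * d a x + μ x a *
              ((1 - μ x y - μ y x) * (d x y + ∑ z, μ y z * d y z) / ((1 - μ x y) * (1 - μ y x))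
                - (1 - μ x y - μ y x) * (μ y x * (d x y + d y x)) / ((1 - μ x y) * (1 - μ y x))) := by
          intro a
          by_cases ha : a = y
          · simp [ha]
          · simp only [if_neg ha]
            exact hFa a ha
        have houter := sum_if_eq y (0:ℝ) (fun a => ∑ b, c a b * π a b)
        rw [Finset.sum_congr rfl fun a _ => hpt a,
          sum_if_eq y (0:ℝ) (fun a => μ x a * d a x + μ x a *
            ((1 - μ x y - μ y x) * (d x y + ∑ z, μ y z * d y z) / ((1 - μ x y) * (1 - μ y x))
              - (1 - μ x y - μ y x) * (μ y x * (d x y + d y x)) / ((1 - μ x y) * (1 - μ y x)))),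
          Finset.sum_add_distrib, ← Finset.sum_mul, hμx1] at houter
        have hmain : ∑ a, ∑ b, c a b * π a b =
            ((∑ a, μ x a * d a x) + 1 *
              ((1 - μ x y - μ y x) * (d x y + ∑ z, μ y z * d y z) / ((1 - μ x y) * (1 - μ y x))
                - (1 - μ x y - μ y x) * (μ y x * (d x y + d y x)) / ((1 - μ x y) * (1 - μ y x)))
              + 0 - (μ x y * d y x + μ x y *
              ((1 - μ x y - μ y x) * (d x y + ∑ z, μ y z * d y z) / ((1 - μ x y) * (1 - μ y x))
                - (1 - μ x y - μ y x) * (μ y x * (d x y + d y x)) / ((1 - μ x y) * (1 - μ y x)))))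
              + ∑ b, c y b * π y b := by
          linarith [houter]
        rw [hmain, hFy]
        field_simp
        ring
      have hW := (W1_le d hd_nonneg (μ x) (μ y) π h01 hrow hcol).trans (hle.trans_eq hE)
      have hmax : max (1 - μ x y - μ y x) 0 = 1 - μ x y - μ y x := max_eq_left (by linarith)
      rw [hmax]
      nlinarith [mul_nonneg (show (0:ℝ) ≤ 1 - μ x y - μ y x by linarith)
        (show (0:ℝ) ≤ max (d x y) (d y x) - d x y by linarith)]
  have heq : (1 - W1 d (μ x) (μ y) / d x y) -
      (-(2 * max (d x y) (d y x) / d x y) * max (1 - μ x y - μ y x) 0 +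
        (1 / d x y) * (d x y + max (d x y) (d y x) -
          (∑ z, μ y z * d y z + ∑ z, μ x z * d z x)) -
        ((max (d x y) (d y x) - d y x) / d x y) * (μ x y + μ y x)) =
      (2 * max (d x y) (d y x) * max (1 - μ x y - μ y x) 0 - max (d x y) (d y x)
        + ((∑ z, μ y z * d y z) + (∑ z, μ x z * d z x))
        + (max (d x y) (d y x) - d y x) * (μ x y + μ y x) - W1 d (μ x) (μ y)) / d x y := by
    field_simp
    ring
  have h2 : 0 ≤ (2 * max (d x y) (d y x) * max (1 - μ x y - μ y x) 0 - max (d x y) (d y x)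
        + ((∑ z, μ y z * d y z) + (∑ z, μ x z * d z x))
        + (max (d x y) (d y x) - d y x) * (μ x y + μ y x) - W1 d (μ x) (μ y)) / d x y :=
    div_nonneg (by linarith) hd0.le
  linarith
end
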